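/- arXiv:1905.00186 — 6 statements merged into one kernel-verified Lean document; each statement's English description precedes it below -/
import Mathlib

section
/- If S : ℤ → ℤ is a path encoding (S_0 = 0, |S_n − S_{n−1}| = 1 for all n) whose past maximum M_0 = sup_{m ≤ 0} S_m is finite, and TS is defined by (TS)_n = 2M_n − S_n − 2M_0 where M_n = sup_{m ≤ n} S_m, then TS is again a path encoding: (TS)_0 = 0 and |(TS)_n − (TS)_{n−1}| = 1 for all n ∈ ℤ. -/
open Set

/-- Pitman's transform of a path encoding is again a path encoding. -/
theorem stmt_0 (S : ℤ → ℤ) (h0 : S 0 = 0)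
    (hinc : ∀ n : ℤ, |S n - S (n - 1)| = 1)
    (hbdd : BddAbove (S '' {m : ℤ | m ≤ 0}))
    (M : ℤ → ℤ) (hM : ∀ n : ℤ, M n = sSup (S '' {m : ℤ | m ≤ n}))
    (TS : ℤ → ℤ) (hTS : ∀ n : ℤ, TS n = 2 * M n - S n - 2 * M 0) :
    TS 0 = 0 ∧ ∀ n : ℤ, |TS n - TS (n - 1)| = 1 := by
  -- Boundedness of all the truncated images
  have hbdd_n : ∀ n : ℤ, BddAbove (S '' {m : ℤ | m ≤ n}) := by
    intro n
    have hsub : S '' {m : ℤ | m ≤ n} ⊆ S '' {m : ℤ | m ≤ 0} ∪ S '' (Set.Icc 1 n) := by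
      rintro x ⟨m, hm, rfl⟩
      rcases le_or_gt m 0 with h | h
      · exact Or.inl ⟨m, h, rfl⟩
      · exact Or.inr ⟨m, ⟨h, hm⟩, rfl⟩
    exact (hbdd.union (((Set.finite_Icc 1 n).image S).bddAbove)).mono hsub
  have hne : ∀ n : ℤ, (S '' {m : ℤ | m ≤ n}).Nonempty := fun n =>
    ⟨S n, n, le_refl n, rfl⟩
  -- The recursion for M
  have hstep : ∀ n : ℤ, M n = max (M (n - 1)) (S n) := by
    intro n
    have hset : {m : ℤ | m ≤ n} = {m : ℤ | m ≤ n - 1} ∪ {n} := by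
      ext m; simp only [Set.mem_setOf_eq, Set.union_singleton, Set.mem_insert_iff]
      omega
    rw [hM n, hM (n - 1), hset, Set.image_union, Set.image_singleton,
      csSup_union (hbdd_n (n - 1)) (hne (n - 1)) (bddAbove_singleton)
        (Set.singleton_nonempty _), csSup_singleton]
  have hSM : ∀ n : ℤ, S n ≤ M n := fun n => by
    rw [hM n]; exact le_csSup (hbdd_n n) ⟨n, le_refl n, rfl⟩
  constructor
  · have := hstep 0
    have h1 := hSM (-1)
    have h2 : M 0 = max (M (-1)) (S 0) := by simpa using hstep 0
    rw [hTS 0]; omega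
  · intro n
    have hmax := hstep n
    have hM1 := hSM (n - 1)
    have hd : S n - S (n - 1) = 1 ∨ S n - S (n - 1) = -1 :=
      abs_eq (by norm_num : (0:ℤ) ≤ 1) |>.mp (hinc n)
    have h1 : TS n - TS (n - 1) = 1 ∨ TS n - TS (n - 1) = -1 := by
      have ha := hTS n
      have hb := hTS (n - 1)
      rcases le_total (S n) (M (n - 1)) with h | h
      · rw [max_eq_left h] at hmax; omega
      · rw [max_eq_right h] at hmax; omega
    rcases h1 with h | h <;> rw [h] <;> norm_num
end

section
/- Let η be the two-sided stationary Markov chain on {0,1} with transition probabilities p_0 ∈ (0,1), p_1 ∈ [0,1), p_0 + p_1 < 1, S its path encoding and W = M − S the carrier. Then P(W_0 = 0) = (1−p_0−p_1)/((1−p_0)(1+p_0−p_1)) and for m ≥ 1, P(W_0 = m) = [p_0(1−p_0+p_1)(1−p_0−p_1)/((1−p_0)²(1+p_0−p_1))] · (p_1/(1−p_0))^{m−1}. -/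
namespace Stmt5Aux

def bb (x : ℤ) : Bool := x == 1
def bval (b : Bool) : ℤ := if b then 1 else 0
def step (b : Bool) : ℤ := if b then 1 else -1

noncomputable def trans (q0 q1 : ℝ) (j b : Bool) : ℝ :=
  if j then (if b then q1 else 1 - q1) else (if b then q0 else 1 - q0)

noncomputable def pii (q0 q1 : ℝ) (a : Bool) : ℝ :=
  if a then q0 / (1 - q1 + q0) else (1 - q1) / (1 - q1 + q0)

noncomputable def wt (q0 q1 : ℝ) : Bool → List Bool → ℝ
  | _, [] => 1
  | j, b :: l => trans q0 q1 j b * wt q0 q1 b l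

noncomputable def w (q0 q1 : ℝ) : List Bool → ℝ
  | [] => 1
  | a :: l => pii q0 q1 a * wt q0 q1 a l

noncomputable def v (q0 q1 : ℝ) : List Bool → ℝ
  | [] => 1
  | a :: l => (match l with | [] => pii q0 q1 a | b :: _ => trans q0 q1 b a) * v q0 q1 l

def mx : List Bool → ℤ
  | [] => 0
  | b :: l => max 0 (step b + mx l)

def lsum {M : Type*} [AddCommMonoid M] : ℕ → (List Bool → M) → M
  | 0, F => F []
  | n+1, F => lsum n (fun l => F (false :: l)) + lsum n (fun l => F (true :: l))

noncomputable def u (q0 q1 : ℝ) : ℤ → Bool → ℕ → ℝ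
  | m, _, 0 => if m ≤ 0 then 1 else 0
  | m, j, k+1 => if m ≤ 0 then 1 else
      trans q0 q1 j false * u q0 q1 (m+1) false k + trans q0 q1 j true * u q0 q1 (m-1) true k

section Pure
variable {q0 q1 : ℝ} (h0 : 0 < q0) (h1 : q0 < 1) (h2 : 0 ≤ q1) (h3 : q0 + q1 < 1)

set_option linter.unusedSectionVars false

include h0 h1 h2 h3

lemma q1lt : q1 < 1 := by linarith
lemma Dpos : 0 < 1 - q1 + q0 := by linarith

lemma trans_nonneg (j b : Bool) : 0 ≤ trans q0 q1 j b := by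
  cases j <;> cases b <;> simp [trans] <;> linarith

lemma trans_le_one (j b : Bool) : trans q0 q1 j b ≤ 1 := by
  cases j <;> cases b <;> simp [trans] <;> linarith

lemma trans_sum (j : Bool) : trans q0 q1 j false + trans q0 q1 j true = 1 := by
  cases j <;> simp [trans]

lemma pii_nonneg (a : Bool) : 0 ≤ pii q0 q1 a := by
  have hD := Dpos h0 h1 h2 h3
  cases a <;> simp only [pii, if_true, if_false, Bool.false_eq_true] <;>
    apply div_nonneg <;> linarith

lemma pii_sum : pii q0 q1 false + pii q0 q1 true = 1 := by
  have hD : (1:ℝ) - q1 + q0 ≠ 0 := by nlinarith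
  simp [pii]; field_simp

lemma detbal (a b : Bool) : trans q0 q1 b a * pii q0 q1 b = pii q0 q1 a * trans q0 q1 a b := by
  have hD : (1:ℝ) - q1 + q0 ≠ 0 := by nlinarith
  cases a <;> cases b <;> simp [trans, pii] <;> field_simp <;> ring

lemma wt_nonneg (j : Bool) (l : List Bool) : 0 ≤ wt q0 q1 j l := by
  induction l generalizing j with
  | nil => simp [wt]
  | cons b l ih => exact mul_nonneg (trans_nonneg h0 h1 h2 h3 j b) (ih b)

lemma v_cons_cons (a b : Bool) (l : List Bool) :
    v q0 q1 (a :: b :: l) = trans q0 q1 b a * v q0 q1 (b :: l) := rfl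

lemma v_singleton (a : Bool) : v q0 q1 [a] = pii q0 q1 a := by simp [v]

lemma v_eq_w (l : List Bool) : v q0 q1 l = w q0 q1 l := by
  induction l with
  | nil => rfl
  | cons a l ih =>
    cases l with
    | nil => simp [v, w, wt]
    | cons b l' =>
      rw [v_cons_cons h0 h1 h2 h3, ih]
      show trans q0 q1 b a * (pii q0 q1 b * wt q0 q1 b l') = _
      rw [show trans q0 q1 b a * (pii q0 q1 b * wt q0 q1 b l')
            = (trans q0 q1 b a * pii q0 q1 b) * wt q0 q1 b l' by ring,
        detbal h0 h1 h2 h3 a b]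
      show _ = pii q0 q1 a * wt q0 q1 a (b :: l')
      rw [wt]; ring

lemma v_nonneg (l : List Bool) : 0 ≤ v q0 q1 l := by
  rw [v_eq_w h0 h1 h2 h3]
  cases l with
  | nil => norm_num [w]
  | cons a l => exact mul_nonneg (pii_nonneg h0 h1 h2 h3 a) (wt_nonneg h0 h1 h2 h3 a l)

end Pure

section Analysis
variable {q0 q1 : ℝ} (h0 : 0 < q0) (h1 : q0 < 1) (h2 : 0 ≤ q1) (h3 : q0 + q1 < 1)

noncomputable def gr (q0 q1 : ℝ) : ℝ := q1 / (1 - q0)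
noncomputable def f0v (q0 q1 : ℝ) : ℝ := q0 * q1 / ((1 - q0) * (1 - q1))

noncomputable def UU (q0 q1 : ℝ) (m : ℤ) (j : Bool) : ℝ :=
  if m ≤ 0 then 1 else
    (trans q0 q1 j false * f0v q0 q1 + trans q0 q1 j true) * gr q0 q1 ^ (m - 1).toNat

set_option linter.unusedSectionVars false

include h0 h1 h2 h3

lemma gr_nonneg : 0 ≤ gr q0 q1 := div_nonneg h2 (by linarith)

lemma gr_lt_one : gr q0 q1 < 1 := by
  rw [gr, div_lt_one (by linarith : (0:ℝ) < 1 - q0)]; linarith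

lemma f0v_nonneg : 0 ≤ f0v q0 q1 := by
  apply div_nonneg (by nlinarith) (by nlinarith)

lemma idA : ((1 - q0) * f0v q0 q1 + q0) * gr q0 q1 = f0v q0 q1 := by
  rw [f0v, gr]
  have e0 : (1:ℝ) - q0 ≠ 0 := by linarith
  have e1 : (1:ℝ) - q1 ≠ 0 := by linarith
  field_simp
  ring

lemma idB : (1 - q1) * f0v q0 q1 + q1 = gr q0 q1 := by
  rw [f0v, gr]
  have e0 : (1:ℝ) - q0 ≠ 0 := by linarith
  have e1 : (1:ℝ) - q1 ≠ 0 := by linarith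
  field_simp
  ring

lemma idC : gr q0 q1 * q0 + q1 = gr q0 q1 := by
  rw [gr]
  have e0 : (1:ℝ) - q0 ≠ 0 := by linarith
  field_simp
  ring

lemma grmul : gr q0 q1 * (1 - q0) = q1 := by
  rw [gr, div_mul_cancel₀]
  linarith

lemma u_nonneg : ∀ (k : ℕ) (m : ℤ) (j : Bool), 0 ≤ u q0 q1 m j k := by
  intro k
  induction k with
  | zero => intro m j; rw [u]; split <;> norm_num
  | succ k ih =>
    intro m j; rw [u]; split
    · norm_num
    · have t0 := trans_nonneg h0 h1 h2 h3 j false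
      have t1 := trans_nonneg h0 h1 h2 h3 j true
      have i0 := ih (m+1) false; have i1 := ih (m-1) true
      positivity

lemma u_le_one : ∀ (k : ℕ) (m : ℤ) (j : Bool), u q0 q1 m j k ≤ 1 := by
  intro k
  induction k with
  | zero => intro m j; rw [u]; split <;> norm_num
  | succ k ih =>
    intro m j; rw [u]; split
    · norm_num
    · have t0 := trans_nonneg h0 h1 h2 h3 j false
      have t1 := trans_nonneg h0 h1 h2 h3 j true
      have e := trans_sum h0 h1 h2 h3 j
      have b0 := ih (m+1) false; have b1 := ih (m-1) true
      have n0 := u_nonneg h0 h1 h2 h3 k (m+1) false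
      have n1 := u_nonneg h0 h1 h2 h3 k (m-1) true
      nlinarith

lemma u_succ_le : ∀ (k : ℕ) (m : ℤ) (j : Bool), u q0 q1 m j k ≤ u q0 q1 m j (k+1) := by
  intro k
  induction k with
  | zero =>
    intro m j
    rw [u, u]; split
    · norm_num
    · have t0 := trans_nonneg h0 h1 h2 h3 j false
      have t1 := trans_nonneg h0 h1 h2 h3 j true
      have i0 := u_nonneg h0 h1 h2 h3 0 (m+1) false
      have i1 := u_nonneg h0 h1 h2 h3 0 (m-1) true
      positivity
  | succ k ih =>
    intro m j
    rw [u, show k+1+1 = (k+1)+1 from rfl, u]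
    split
    · norm_num
    · have t0 := trans_nonneg h0 h1 h2 h3 j false
      have t1 := trans_nonneg h0 h1 h2 h3 j true
      have i0 := ih (m+1) false; have i1 := ih (m-1) true
      nlinarith

lemma u_mono (m : ℤ) (j : Bool) : Monotone (u q0 q1 m j) :=
  monotone_nat_of_le_succ (fun k => u_succ_le h0 h1 h2 h3 k m j)

lemma u_of_nonpos (m : ℤ) (hm : m ≤ 0) (j : Bool) (k : ℕ) : u q0 q1 m j k = 1 := by
  cases k <;> rw [u] <;> rw [if_pos hm]

lemma UU_nonneg (m : ℤ) (j : Bool) : 0 ≤ UU q0 q1 m j := by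
  rw [UU]; split
  · norm_num
  · have t0 := trans_nonneg h0 h1 h2 h3 j false
    have t1 := trans_nonneg h0 h1 h2 h3 j true
    have f := f0v_nonneg h0 h1 h2 h3
    have g := gr_nonneg h0 h1 h2 h3
    positivity

lemma UU_false_succ (m : ℤ) (hm : 1 ≤ m) :
    UU q0 q1 (m+1) false = f0v q0 q1 * gr q0 q1 ^ (m-1).toNat := by
  rw [UU, if_neg (by omega)]
  have ht : (m + 1 - 1).toNat = (m-1).toNat + 1 := by omega
  rw [ht, pow_succ]
  have hA := idA h0 h1 h2 h3
  simp only [trans, if_false, if_true, Bool.false_eq_true]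
  linear_combination gr q0 q1 ^ (m-1).toNat * hA

lemma UU_true_pred (m : ℤ) (hm : 1 ≤ m) :
    UU q0 q1 (m-1) true = gr q0 q1 ^ (m-1).toNat := by
  rcases eq_or_lt_of_le hm with he | hlt
  · rw [← he]; norm_num [UU]
  · rw [UU, if_neg (by omega)]
    have ht : (m - 1).toNat = (m - 1 - 1).toNat + 1 := by omega
    rw [ht, pow_succ]
    have hB := idB h0 h1 h2 h3
    simp only [trans, if_false, if_true, Bool.false_eq_true]
    linear_combination gr q0 q1 ^ (m-1-1).toNat * hB

lemma UU_id (m : ℤ) (hm : 1 ≤ m) (j : Bool) :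
    trans q0 q1 j false * UU q0 q1 (m+1) false + trans q0 q1 j true * UU q0 q1 (m-1) true
      = UU q0 q1 m j := by
  rw [UU_false_succ h0 h1 h2 h3 m hm, UU_true_pred h0 h1 h2 h3 m hm, UU, if_neg (by omega)]
  ring

lemma u_le_UU : ∀ (k : ℕ) (m : ℤ) (j : Bool), u q0 q1 m j k ≤ UU q0 q1 m j := by
  intro k
  induction k with
  | zero =>
    intro m j; rw [u]; split
    · rw [UU, if_pos (by assumption)]
    · exact UU_nonneg h0 h1 h2 h3 m j
  | succ k ih =>
    intro m j; rw [u]; split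
    · rw [UU, if_pos (by assumption)]
    · rename_i hm
      have hm1 : 1 ≤ m := by omega
      have t0 := trans_nonneg h0 h1 h2 h3 j false
      have t1 := trans_nonneg h0 h1 h2 h3 j true
      calc trans q0 q1 j false * u q0 q1 (m+1) false k + trans q0 q1 j true * u q0 q1 (m-1) true k
          ≤ trans q0 q1 j false * UU q0 q1 (m+1) false + trans q0 q1 j true * UU q0 q1 (m-1) true := by
            gcongr <;> [exact ih (m+1) false; exact ih (m-1) true]
        _ = UU q0 q1 m j := UU_id h0 h1 h2 h3 m hm1 j

end Analysis
noncomputable def L (q0 q1 : ℝ) (m : ℤ) (j : Bool) : ℝ := ⨆ k, u q0 q1 m j k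

section LFacts
variable {q0 q1 : ℝ} (h0 : 0 < q0) (h1 : q0 < 1) (h2 : 0 ≤ q1) (h3 : q0 + q1 < 1)

set_option linter.unusedSectionVars false

include h0 h1 h2 h3

lemma u_bdd (m : ℤ) (j : Bool) : BddAbove (Set.range (u q0 q1 m j)) := by
  refine ⟨1, ?_⟩
  rintro x ⟨k, rfl⟩
  exact u_le_one h0 h1 h2 h3 k m j

lemma L_tendsto (m : ℤ) (j : Bool) :
    Filter.Tendsto (u q0 q1 m j) Filter.atTop (nhds (L q0 q1 m j)) :=
  tendsto_atTop_ciSup (u_mono h0 h1 h2 h3 m j) (u_bdd h0 h1 h2 h3 m j)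

lemma u_le_L (m : ℤ) (j : Bool) (k : ℕ) : u q0 q1 m j k ≤ L q0 q1 m j :=
  le_ciSup (u_bdd h0 h1 h2 h3 m j) k

lemma L_nonneg (m : ℤ) (j : Bool) : 0 ≤ L q0 q1 m j :=
  le_trans (u_nonneg h0 h1 h2 h3 0 m j) (u_le_L h0 h1 h2 h3 m j 0)

lemma L_le_UU (m : ℤ) (j : Bool) : L q0 q1 m j ≤ UU q0 q1 m j :=
  ciSup_le (fun k => u_le_UU h0 h1 h2 h3 k m j)

lemma L_of_nonpos (m : ℤ) (hm : m ≤ 0) (j : Bool) : L q0 q1 m j = 1 := by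
  have : u q0 q1 m j = fun _ => 1 := funext (fun k => u_of_nonpos h0 h1 h2 h3 m hm j k)
  rw [L, this, ciSup_const]

lemma L_fixed (m : ℤ) (hm : 1 ≤ m) (j : Bool) :
    L q0 q1 m j = trans q0 q1 j false * L q0 q1 (m+1) false
      + trans q0 q1 j true * L q0 q1 (m-1) true := by
  have hshift : Filter.Tendsto (fun k => u q0 q1 m j (k+1)) Filter.atTop
      (nhds (L q0 q1 m j)) :=
    (L_tendsto h0 h1 h2 h3 m j).comp (Filter.tendsto_add_atTop_nat 1)
  have hcomb : Filter.Tendsto (fun k => trans q0 q1 j false * u q0 q1 (m+1) false k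
      + trans q0 q1 j true * u q0 q1 (m-1) true k) Filter.atTop
      (nhds (trans q0 q1 j false * L q0 q1 (m+1) false
        + trans q0 q1 j true * L q0 q1 (m-1) true)) :=
    ((L_tendsto h0 h1 h2 h3 (m+1) false).const_mul _).add
      ((L_tendsto h0 h1 h2 h3 (m-1) true).const_mul _)
  refine tendsto_nhds_unique ?_ hcomb
  refine hshift.congr (fun k => ?_)
  rw [u, if_neg (by omega)]

lemma L_true_le (m : ℕ) : L q0 q1 (m : ℤ) true ≤ gr q0 q1 ^ m := by
  rcases Nat.eq_zero_or_pos m with hm | hm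
  · subst hm
    simp only [Nat.cast_zero, pow_zero]
    rw [L_of_nonpos h0 h1 h2 h3 0 le_rfl true]
  · refine le_trans (L_le_UU h0 h1 h2 h3 (m:ℤ) true) ?_
    have h1m : (1:ℤ) ≤ (m:ℤ) := by exact_mod_cast hm
    have : ((m:ℤ) - 1).toNat = m - 1 := by omega
    rw [UU, if_neg (by omega), this]
    have hB := idB h0 h1 h2 h3
    have hms : m - 1 + 1 = m := by omega
    apply le_of_eq
    calc (trans q0 q1 true false * f0v q0 q1 + trans q0 q1 true true) * gr q0 q1 ^ (m-1)
        = ((1 - q1) * f0v q0 q1 + q1) * gr q0 q1 ^ (m-1) := by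
          simp only [trans, if_true, if_false, Bool.false_eq_true]
      _ = gr q0 q1 * gr q0 q1 ^ (m-1) := by rw [hB]
      _ = gr q0 q1 ^ m := by rw [← pow_succ', hms]

lemma L_id : ∀ m : ℕ, L q0 q1 ((m:ℤ)+1) false = q0 / (1-q1) * gr q0 q1 ^ m
    ∧ L q0 q1 (m:ℤ) true = gr q0 q1 ^ m := by
  have hq0 : (1:ℝ) - q0 ≠ 0 := by linarith
  have hq1 : (1:ℝ) - q1 ≠ 0 := by linarith
  have hden : (1:ℝ) - q1 - q0 ≠ 0 := by linarith
  set x1 := L q0 q1 1 false with hx1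
  set Bv := (1 - x1)/(1 - q1 - q0) with hBv
  set Av := x1 - Bv * q0 with hAv
  have key : ∀ m : ℕ, L q0 q1 ((m:ℤ)+1) false = Av + Bv * gr q0 q1 ^ m * q0
      ∧ L q0 q1 (m:ℤ) true = Av + Bv * gr q0 q1 ^ m * (1-q1) := by
    intro m
    induction m with
    | zero =>
      constructor
      · simp only [Nat.cast_zero, zero_add, pow_zero]
        rw [hAv]; ring
      · simp only [Nat.cast_zero, pow_zero]
        rw [L_of_nonpos h0 h1 h2 h3 0 le_rfl true, hAv, hBv]
        field_simp
        ring
    | succ m ih =>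
      obtain ⟨ihf, iht⟩ := ih
      have hm1 : (1:ℤ) ≤ (m:ℤ)+1 := by omega
      have E0 := L_fixed h0 h1 h2 h3 ((m:ℤ)+1) hm1 false
      have E1 := L_fixed h0 h1 h2 h3 ((m:ℤ)+1) hm1 true
      simp only [trans, if_true, if_false, Bool.false_eq_true] at E0 E1
      rw [show (m:ℤ)+1-1 = (m:ℤ) by ring] at E0 E1
      rw [ihf, iht] at E0
      rw [iht] at E1
      have hgm := grmul h0 h1 h2 h3
      have hf2 : L q0 q1 ((m:ℤ)+1+1) false = Av + Bv * gr q0 q1 ^ (m+1) * q0 := by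
        have aux : (1-q0) * L q0 q1 ((m:ℤ)+1+1) false
            = (1-q0) * (Av + Bv * gr q0 q1 ^ (m+1) * q0) := by
          rw [pow_succ]
          linear_combination -E0 - Bv * gr q0 q1 ^ m * q0 * hgm
        exact mul_left_cancel₀ hq0 aux
      have hC := idC h0 h1 h2 h3
      constructor
      · push_cast
        exact hf2
      · push_cast
        rw [E1, hf2, pow_succ]
        linear_combination Bv * gr q0 q1 ^ m * (1-q1) * hC
  have hub : ∀ m : ℕ, |Av| ≤ (1 + |Bv| * (1-q1)) * gr q0 q1 ^ m := by
    intro m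
    have h2' := (key m).2
    have hle := L_true_le h0 h1 h2 h3 m
    have hnn := L_nonneg h0 h1 h2 h3 (m:ℤ) true
    have hgp : (0:ℝ) ≤ gr q0 q1 ^ m := pow_nonneg (gr_nonneg h0 h1 h2 h3) m
    have habs : |Av| ≤ |L q0 q1 (m:ℤ) true| + |Bv * gr q0 q1 ^ m * (1-q1)| := by
      have : Av = L q0 q1 (m:ℤ) true - Bv * gr q0 q1 ^ m * (1-q1) := by
        rw [h2']; ring
      rw [this]
      exact abs_sub _ _
    rw [abs_of_nonneg hnn] at habs
    have : |Bv * gr q0 q1 ^ m * (1-q1)| = |Bv| * gr q0 q1 ^ m * (1-q1) := by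
      rw [abs_mul, abs_mul, abs_of_nonneg hgp, abs_of_nonneg (by linarith : (0:ℝ) ≤ 1 - q1)]
    rw [this] at habs
    nlinarith
  have hAv0 : Av = 0 := by
    have hlim : Filter.Tendsto (fun m : ℕ => (1 + |Bv| * (1-q1)) * gr q0 q1 ^ m)
        Filter.atTop (nhds 0) := by
      rw [show (0:ℝ) = (1 + |Bv| * (1-q1)) * 0 by ring]
      exact (tendsto_pow_atTop_nhds_zero_of_lt_one (gr_nonneg h0 h1 h2 h3)
        (gr_lt_one h0 h1 h2 h3)).const_mul _
    have := ge_of_tendsto hlim (Filter.Eventually.of_forall hub)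
    have := abs_nonneg Av
    have : |Av| = 0 := le_antisymm (by linarith) (by linarith)
    exact abs_eq_zero.mp this
  have hBv1 : Bv * (1-q1) = 1 := by
    have h20 := (key 0).2
    simp only [Nat.cast_zero, pow_zero, hAv0, zero_add, mul_one, one_mul] at h20
    rw [L_of_nonpos h0 h1 h2 h3 0 le_rfl true] at h20
    exact h20.symm
  intro m
  constructor
  · rw [(key m).1, hAv0]
    have : Bv = 1 / (1 - q1) := by
      field_simp at hBv1 ⊢
      linarith
    rw [this]; ring
  · rw [(key m).2, hAv0, zero_add, mul_comm (Bv * gr q0 q1 ^ m) (1-q1),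
      ← mul_assoc]
    rw [mul_comm (1-q1) Bv, hBv1, one_mul]

end LFacts
lemma lsum_congr {M : Type*} [AddCommMonoid M] {F G : List Bool → M} :
    ∀ n : ℕ, (∀ l, F l = G l) → lsum n F = lsum n G := by
  intro n
  induction n generalizing F G with
  | zero => intro h; exact h []
  | succ n ih => intro h; rw [lsum, lsum, ih (fun l => h _), ih (fun l => h _)]

lemma lsum_const_mul (c : ℝ) : ∀ (n : ℕ) (F : List Bool → ℝ),
    lsum n (fun l => c * F l) = c * lsum n F := by
  intro n
  induction n with
  | zero => intro F; rfl
  | succ n ih => intro F; rw [lsum, lsum, ih, ih]; ring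

section WordSums
variable {q0 q1 : ℝ} (h0 : 0 < q0) (h1 : q0 < 1) (h2 : 0 ≤ q1) (h3 : q0 + q1 < 1)

set_option linter.unusedSectionVars false

lemma mx_nonneg : ∀ l : List Bool, 0 ≤ mx l := by
  intro l; cases l with
  | nil => rw [mx]
  | cons b l => rw [mx]; exact le_max_left _ _

lemma le_mx_cons (m : ℤ) (b : Bool) (l : List Bool) :
    m ≤ mx (b :: l) ↔ (m ≤ 0 ∨ m - step b ≤ mx l) := by
  rw [mx, le_max_iff]
  constructor
  · rintro (h | h)
    · exact Or.inl h
    · exact Or.inr (by omega)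
  · rintro (h | h)
    · exact Or.inl h
    · exact Or.inr (by omega)

include h0 h1 h2 h3

lemma lsum_wt_one : ∀ (n : ℕ) (j : Bool), lsum n (fun l => wt q0 q1 j l) = 1 := by
  intro n
  induction n with
  | zero => intro j; rfl
  | succ n ih =>
    intro j
    rw [lsum]
    have e1 : lsum n (fun l => wt q0 q1 j (false :: l))
        = trans q0 q1 j false * lsum n (fun l => wt q0 q1 false l) := by
      rw [← lsum_const_mul]
      exact lsum_congr n (fun l => rfl)
    have e2 : lsum n (fun l => wt q0 q1 j (true :: l))
        = trans q0 q1 j true * lsum n (fun l => wt q0 q1 true l) := by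
      rw [← lsum_const_mul]
      exact lsum_congr n (fun l => rfl)
    rw [e1, e2, ih false, ih true, mul_one, mul_one]
    exact trans_sum h0 h1 h2 h3 j

lemma lsum_hit_wt : ∀ (k : ℕ) (m : ℤ) (j : Bool),
    lsum k (fun l => if m ≤ mx l then wt q0 q1 j l else 0) = u q0 q1 m j k := by
  intro k
  induction k with
  | zero =>
    intro m j
    show (if m ≤ mx [] then wt q0 q1 j [] else 0) = _
    rw [u, mx, wt]
  | succ k ih =>
    intro m j
    rw [lsum, u]
    by_cases hm : m ≤ 0
    · rw [if_pos hm]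
      have e : ∀ (b : Bool) , lsum k (fun l => if m ≤ mx (b :: l) then wt q0 q1 j (b :: l) else 0)
          = trans q0 q1 j b * lsum k (fun l => wt q0 q1 b l) := by
        intro b
        rw [← lsum_const_mul]
        refine lsum_congr k (fun l => ?_)
        have : m ≤ mx (b :: l) := le_trans hm (mx_nonneg (b :: l))
        rw [if_pos this, wt]
      rw [e false, e true, lsum_wt_one h0 h1 h2 h3, lsum_wt_one h0 h1 h2 h3,
        mul_one, mul_one]
      exact trans_sum h0 h1 h2 h3 j
    · rw [if_neg hm]
      have e : ∀ (b : Bool), lsum k (fun l => if m ≤ mx (b :: l) then wt q0 q1 j (b :: l) else 0)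
          = trans q0 q1 j b * u q0 q1 (m - step b) b k := by
        intro b
        rw [← ih (m - step b) b, ← lsum_const_mul]
        refine lsum_congr k (fun l => ?_)
        rw [show wt q0 q1 j (b :: l) = trans q0 q1 j b * wt q0 q1 b l from rfl]
        by_cases hc : m - step b ≤ mx l
        · rw [if_pos hc, if_pos ((le_mx_cons m b l).2 (Or.inr hc))]
        · rw [if_neg hc, if_neg, mul_zero]
          intro hcon
          rcases (le_mx_cons m b l).1 hcon with h | h
          · exact hm h
          · exact hc h
      rw [e false, e true]
      have : m - step false = m + 1 := by rw [step]; norm_num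
      rw [this]
      have : m - step true = m - 1 := by rw [step]; norm_num
      rw [this]

lemma lsum_hit_w (n : ℕ) (m : ℤ) (hm : 1 ≤ m) :
    lsum (n+1) (fun l => if m ≤ mx l then w q0 q1 l else 0)
      = pii q0 q1 false * u q0 q1 (m+1) false n + pii q0 q1 true * u q0 q1 (m-1) true n := by
  rw [lsum]
  have e : ∀ (b : Bool), lsum n (fun l => if m ≤ mx (b :: l) then w q0 q1 (b :: l) else 0)
      = pii q0 q1 b * u q0 q1 (m - step b) b n := by
    intro b
    rw [← lsum_hit_wt h0 h1 h2 h3 n (m - step b) b, ← lsum_const_mul]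
    refine lsum_congr n (fun l => ?_)
    rw [show w q0 q1 (b :: l) = pii q0 q1 b * wt q0 q1 b l from rfl]
    by_cases hc : m - step b ≤ mx l
    · rw [if_pos hc, if_pos ((le_mx_cons m b l).2 (Or.inr hc))]
    · rw [if_neg hc, if_neg, mul_zero]
      intro hcon
      rcases (le_mx_cons m b l).1 hcon with h | h
      · omega
      · exact hc h
  rw [e false, e true]
  have e1 : m - step false = m + 1 := by rw [step]; norm_num
  have e2 : m - step true = m - 1 := by rw [step]; norm_num
  rw [e1, e2]

end WordSums

lemma lsum_nonneg : ∀ (n : ℕ) (F : List Bool → ℝ), (∀ l, 0 ≤ F l) → 0 ≤ lsum n F := by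
  intro n
  induction n with
  | zero => intro F hF; exact hF _
  | succ n ih =>
    intro F hF
    exact add_nonneg (ih _ (fun l => hF _)) (ih _ (fun l => hF _))

lemma lsum_ofReal : ∀ (n : ℕ) (F : List Bool → ℝ), (∀ l, 0 ≤ F l) →
    lsum n (fun l => ENNReal.ofReal (F l)) = ENNReal.ofReal (lsum n F) := by
  intro n
  induction n with
  | zero => intro F hF; rfl
  | succ n ih =>
    intro F hF
    show lsum n (fun l => ENNReal.ofReal (F (false :: l)))
        + lsum n (fun l => ENNReal.ofReal (F (true :: l))) = _
    rw [ih _ (fun l => hF _), ih _ (fun l => hF _),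
      ← ENNReal.ofReal_add (lsum_nonneg n _ (fun l => hF _)) (lsum_nonneg n _ (fun l => hF _))]
    rfl
open MeasureTheory ProbabilityTheory

def trk {Ω : Type*} (η : ℤ → Ω → ℤ) : ℤ → ℕ → Ω → List Bool
  | _, 0, _ => []
  | t, n+1, ω => bb (η t ω) :: trk η (t-1) n ω

def Cb {Ω : Type*} (η : ℤ → Ω → ℤ) (t : ℤ) (l : List Bool) : Set Ω :=
  {ω | trk η t l.length ω = l}

section Meas
set_option linter.unusedSectionVars false

variable {Ω : Type*} [MeasurableSpace Ω] (P : Measure Ω) [IsProbabilityMeasure P]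
  (η : ℤ → Ω → ℤ) (hmeas : ∀ n, Measurable (η n))
  (hval : ∀ n ω, η n ω = 0 ∨ η n ω = 1)

lemma bb_eq_iff (x : ℤ) (hx : x = 0 ∨ x = 1) (a : Bool) : bb x = a ↔ x = bval a := by
  cases a
  · rcases hx with h | h <;> subst h <;> simp [bb, bval]
  · rcases hx with h | h <;> subst h <;> simp [bb, bval]

lemma Cb_nil (t : ℤ) : Cb η t ([] : List Bool) = Set.univ := by
  ext ω; simp [Cb, trk]

include hval in
lemma Cb_cons (t : ℤ) (a : Bool) (l : List Bool) :
    Cb η t (a :: l) = {ω | η t ω = bval a} ∩ Cb η (t-1) l := by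
  ext ω
  simp only [Cb, List.length_cons, trk, Set.mem_setOf_eq, Set.mem_inter_iff,
    List.cons.injEq]
  rw [bb_eq_iff (η t ω) (hval t ω) a]

include hmeas hval in
lemma Cb_measurable_in (n : ℤ) : ∀ (l : List Bool) (t : ℤ), t < n →
    MeasurableSet[⨆ m : {m : ℤ // m < n},
      MeasurableSpace.comap (η m) (inferInstance : MeasurableSpace ℤ)] (Cb η t l) := by
  intro l
  induction l with
  | nil =>
    intro t ht
    rw [Cb_nil]
    exact MeasurableSet.univ
  | cons a l ih =>
    intro t ht
    rw [Cb_cons η hval t a l]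
    apply MeasurableSet.inter
    · have hle : MeasurableSpace.comap (η t) (inferInstance : MeasurableSpace ℤ)
          ≤ ⨆ m : {m : ℤ // m < n},
            MeasurableSpace.comap (η m) (inferInstance : MeasurableSpace ℤ) :=
        le_iSup (fun m : {m : ℤ // m < n} =>
          MeasurableSpace.comap (η m) (inferInstance : MeasurableSpace ℤ)) ⟨t, ht⟩
      apply hle
      exact ⟨{bval a}, MeasurableSet.singleton _, rfl⟩
    · exact ih (t-1) (by omega)

include hmeas hval in
lemma Cb_measurable (l : List Bool) (t : ℤ) : MeasurableSet (Cb η t l) := by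
  have h := Cb_measurable_in η hmeas hval (t+1) l t (by omega)
  have hle : (⨆ m : {m : ℤ // m < t+1},
      MeasurableSpace.comap (η m) (inferInstance : MeasurableSpace ℤ))
      ≤ (inferInstance : MeasurableSpace Ω) := by
    apply iSup_le
    intro m
    exact (hmeas m).comap_le
  exact hle _ h

end Meas
section Cyl
set_option linter.unusedSectionVars false

variable {Ω : Type*} [MeasurableSpace Ω] (P : Measure Ω) [IsProbabilityMeasure P]
  (p : ℤ → ℝ) (hp0 : p 0 ∈ Set.Ioo (0 : ℝ) 1) (hp1 : p 1 ∈ Set.Ico (0 : ℝ) 1)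
  (hsum : p 0 + p 1 < 1)
  (η : ℤ → Ω → ℤ) (hmeas : ∀ n, Measurable (η n))
  (hval : ∀ n ω, η n ω = 0 ∨ η n ω = 1)
  (hstat : ∀ n : ℤ, P {ω | η n ω = 1} = ENNReal.ofReal (p 0 / (1 - p 1 + p 0)))
  (htrans : ∀ (n : ℤ) (j : ℤ) (A : Set Ω), j = 0 ∨ j = 1 →
      MeasurableSet[⨆ m : {m : ℤ // m < n},
        MeasurableSpace.comap (η m) (inferInstance : MeasurableSpace ℤ)] A →
      P (A ∩ {ω | η n ω = j}) ≠ 0 →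
      (ProbabilityTheory.cond P (A ∩ {ω | η n ω = j})) {ω | η (n + 1) ω = 1}
        = ENNReal.ofReal (p j))

include hp0 hp1 hsum hval hmeas hstat htrans in
lemma cyl : ∀ (l : List Bool) (t : ℤ), P (Cb η t l) = ENNReal.ofReal (v (p 0) (p 1) l) := by
  obtain ⟨h0, h1⟩ := hp0
  obtain ⟨h2, h4⟩ := hp1
  have hD : (0:ℝ) < 1 - p 1 + p 0 := by linarith
  intro l
  induction l with
  | nil =>
    intro t
    rw [Cb_nil]
    simp [v]
  | cons a l ih =>
    cases l with
    | nil =>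
      intro t
      have hone : Cb η t (a :: []) = {ω | η t ω = bval a} := by
        rw [Cb_cons η hval, Cb_nil, Set.inter_univ]
      rcases Bool.dichotomy a with ha | ha <;> subst ha
      · -- a = false
        have hcompl : {ω | η t ω = bval false} = {ω | η t ω = 1}ᶜ := by
          ext ω
          simp only [Set.mem_setOf_eq, Set.mem_compl_iff, bval]
          rcases hval t ω with h | h <;> simp [h]
        have hm1 : MeasurableSet {ω | η t ω = 1} := hmeas t (MeasurableSet.singleton 1)
        rw [hone, hcompl, measure_compl hm1 (measure_ne_top P _),
          measure_univ, hstat t]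
        have hvv : v (p 0) (p 1) (false :: []) = (1 - p 1) / (1 - p 1 + p 0) := by
          rw [show v (p 0) (p 1) (false :: []) = pii (p 0) (p 1) false by simp [v], pii]
          norm_num
        rw [hvv, show (1 - p 1) / (1 - p 1 + p 0) = 1 - p 0 / (1 - p 1 + p 0) by
          field_simp; ring,
          ENNReal.ofReal_sub _ (by positivity), ENNReal.ofReal_one]
      · -- a = true
        rw [hone, show bval true = 1 from rfl, hstat t,
          show v (p 0) (p 1) (true :: []) = pii (p 0) (p 1) true by simp [v], pii]
        norm_num
    | cons b l' =>
      intro t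
      have hpb01 : 0 ≤ p (bval b) ∧ p (bval b) ≤ 1 := by
        cases b <;> constructor <;> simp [bval] <;> linarith
      have hvnn : 0 ≤ v (p 0) (p 1) (b :: l') :=
        v_nonneg h0 h1 h2 hsum (b :: l')
      have hset : Cb η t (a :: b :: l') = {ω | η t ω = bval a} ∩ Cb η (t-1) (b :: l') := by
        rw [Cb_cons η hval]
      have hIH : P (Cb η (t-1) (b :: l')) = ENNReal.ofReal (v (p 0) (p 1) (b :: l')) := ih (t-1)
      have hvgoal : v (p 0) (p 1) (a :: b :: l')
          = trans (p 0) (p 1) b a * v (p 0) (p 1) (b :: l') :=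
        v_cons_cons h0 h1 h2 hsum a b l'
      by_cases hz : P (Cb η (t-1) (b :: l')) = 0
      · have hv0 : v (p 0) (p 1) (b :: l') = 0 := by
          rw [hIH] at hz
          have := ENNReal.ofReal_eq_zero.mp hz
          linarith
        have hsub : P (Cb η t (a :: b :: l')) = 0 := by
          have : Cb η t (a :: b :: l') ⊆ Cb η (t-1) (b :: l') := by
            rw [hset]; exact Set.inter_subset_right
          exact le_antisymm (le_trans (measure_mono this) (le_of_eq hz)) zero_le
        rw [hsub, hvgoal, hv0, mul_zero, ENNReal.ofReal_zero]
      · -- positive case: apply htrans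
        have hsplit : Cb η (t-1) (b :: l') = Cb η (t-2) l' ∩ {ω | η (t-1) ω = bval b} := by
          rw [Cb_cons η hval, Set.inter_comm, show t - 1 - 1 = t - 2 by ring]
        have hτ := htrans (t-1) (bval b) (Cb η (t-2) l')
          (by cases b <;> simp [bval])
          (Cb_measurable_in η hmeas hval (t-1) l' (t-2) (by omega))
          (by rw [← hsplit]; exact hz)
        rw [← hsplit, show t - 1 + 1 = t by ring] at hτ
        have hsmeas : MeasurableSet (Cb η (t-1) (b :: l')) :=
          Cb_measurable η hmeas hval (b :: l') (t-1)
        rw [ProbabilityTheory.cond_apply hsmeas] at hτ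
        have hmul : P (Cb η (t-1) (b :: l') ∩ {ω | η t ω = 1})
            = ENNReal.ofReal (p (bval b)) * P (Cb η (t-1) (b :: l')) := by
          calc P (Cb η (t-1) (b :: l') ∩ {ω | η t ω = 1})
              = (P (Cb η (t-1) (b :: l')) * (P (Cb η (t-1) (b :: l')))⁻¹)
                * P (Cb η (t-1) (b :: l') ∩ {ω | η t ω = 1}) := by
                rw [ENNReal.mul_inv_cancel hz (measure_ne_top P _), one_mul]
            _ = P (Cb η (t-1) (b :: l'))
                * ((P (Cb η (t-1) (b :: l')))⁻¹ * P (Cb η (t-1) (b :: l') ∩ {ω | η t ω = 1})) := by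
                ring
            _ = P (Cb η (t-1) (b :: l')) * ENNReal.ofReal (p (bval b)) := by rw [hτ]
            _ = ENNReal.ofReal (p (bval b)) * P (Cb η (t-1) (b :: l')) := by ring
        have htrue : P (Cb η (t-1) (b :: l') ∩ {ω | η t ω = 1})
            = ENNReal.ofReal (p (bval b) * v (p 0) (p 1) (b :: l')) := by
          rw [hmul, hIH, ← ENNReal.ofReal_mul hpb01.1]
        rcases Bool.dichotomy a with ha | ha <;> subst ha
        · -- a = false
          have hd : Cb η t (false :: b :: l')
              = Cb η (t-1) (b :: l') \ {ω | η t ω = 1} := by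
            rw [hset]
            ext ω
            simp only [Set.mem_inter_iff, Set.mem_setOf_eq, Set.mem_diff, bval]
            rcases hval t ω with h | h <;> simp [h]
          have hm1 : MeasurableSet {ω | η t ω = 1} := hmeas t (MeasurableSet.singleton 1)
          have hadd := measure_inter_add_diff (μ := P) (Cb η (t-1) (b :: l')) hm1
          rw [htrue, hIH] at hadd
          have hdecomp : ENNReal.ofReal (v (p 0) (p 1) (b :: l'))
              = ENNReal.ofReal (p (bval b) * v (p 0) (p 1) (b :: l'))
                + ENNReal.ofReal ((1 - p (bval b)) * v (p 0) (p 1) (b :: l')) := by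
            rw [← ENNReal.ofReal_add (by nlinarith [hpb01.1]) (by nlinarith [hpb01.2])]
            ring_nf
          rw [hdecomp] at hadd
          have : P (Cb η (t-1) (b :: l') \ {ω | η t ω = 1})
              = ENNReal.ofReal ((1 - p (bval b)) * v (p 0) (p 1) (b :: l')) :=
            (ENNReal.add_right_inj ENNReal.ofReal_ne_top).mp hadd
          rw [hd, this, hvgoal]
          congr 1
          have : trans (p 0) (p 1) b false = 1 - p (bval b) := by
            cases b <;> simp [trans, bval]
          rw [this]
        · -- a = true
          have hd : Cb η t (true :: b :: l')
              = Cb η (t-1) (b :: l') ∩ {ω | η t ω = 1} := by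
            rw [hset, Set.inter_comm]
            rfl
          rw [hd, htrue, hvgoal]
          congr 1
          have : trans (p 0) (p 1) b true = p (bval b) := by
            cases b <;> simp [trans, bval]
          rw [this]
end Cyl
section Decomp
set_option linter.unusedSectionVars false

variable {Ω : Type*} [MeasurableSpace Ω] (P : Measure Ω) [IsProbabilityMeasure P]
  (η : ℤ → Ω → ℤ) (hmeas : ∀ n, Measurable (η n))
  (hval : ∀ n ω, η n ω = 0 ∨ η n ω = 1)

open scoped Classical in
include hmeas hval in
lemma decomp : ∀ (n : ℕ) (t : ℤ) (Q : List Bool → Prop) (B : Set Ω), MeasurableSet B →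
    P (B ∩ {ω | Q (trk η t n ω)})
      = lsum n (fun l => if Q l then P (B ∩ Cb η t l) else 0) := by
  intro n
  induction n with
  | zero =>
    intro t Q B hB
    show P (B ∩ {ω | Q ([] : List Bool)}) = if Q ([] : List Bool) then P (B ∩ Cb η t ([] : List Bool)) else 0
    by_cases hQ : Q ([] : List Bool)
    · rw [if_pos hQ, Cb_nil]
      congr 1
      ext ω; simp [hQ]
    · rw [if_neg hQ]
      have : B ∩ {ω | Q ([] : List Bool)} = ∅ := by
        ext ω; simp [hQ]
      rw [this, measure_empty]
  | succ n ih =>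
    intro t Q B hB
    have hm1 : MeasurableSet {ω | η t ω = 1} := hmeas t (MeasurableSet.singleton 1)
    set X := B ∩ {ω | Q (trk η t (n+1) ω)} with hX
    have hadd := (measure_inter_add_diff (μ := P) X hm1).symm
    have hXM : X ∩ {ω | η t ω = 1}
        = (B ∩ {ω | η t ω = 1}) ∩ {ω | Q (true :: trk η (t-1) n ω)} := by
      ext ω
      simp only [hX, Set.mem_inter_iff, Set.mem_setOf_eq]
      constructor
      · rintro ⟨⟨hb, hq⟩, h1⟩
        refine ⟨⟨hb, h1⟩, ?_⟩
        have : trk η t (n+1) ω = true :: trk η (t-1) n ω := by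
          show bb (η t ω) :: _ = _
          rw [h1]; rfl
        rwa [this] at hq
      · rintro ⟨⟨hb, h1⟩, hq⟩
        refine ⟨⟨hb, ?_⟩, h1⟩
        have : trk η t (n+1) ω = true :: trk η (t-1) n ω := by
          show bb (η t ω) :: _ = _
          rw [h1]; rfl
        rwa [this]
    have hXMc : X \ {ω | η t ω = 1}
        = (B \ {ω | η t ω = 1}) ∩ {ω | Q (false :: trk η (t-1) n ω)} := by
      ext ω
      simp only [hX, Set.mem_inter_iff, Set.mem_diff, Set.mem_setOf_eq]
      constructor
      · rintro ⟨⟨hb, hq⟩, h1⟩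
        refine ⟨⟨hb, h1⟩, ?_⟩
        have h0 : η t ω = 0 := by rcases hval t ω with h | h; exact h; exact absurd h h1
        have : trk η t (n+1) ω = false :: trk η (t-1) n ω := by
          show bb (η t ω) :: _ = _
          rw [h0]; rfl
        rwa [this] at hq
      · rintro ⟨⟨hb, h1⟩, hq⟩
        refine ⟨⟨hb, ?_⟩, h1⟩
        have h0 : η t ω = 0 := by rcases hval t ω with h | h; exact h; exact absurd h h1
        have : trk η t (n+1) ω = false :: trk η (t-1) n ω := by
          show bb (η t ω) :: _ = _
          rw [h0]; rfl
        rwa [this]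
    have htruebit := ih (t-1) (fun l => Q (true :: l)) (B ∩ {ω | η t ω = 1}) (hB.inter hm1)
    have hfalsebit := ih (t-1) (fun l => Q (false :: l)) (B \ {ω | η t ω = 1}) (hB.diff hm1)
    rw [hadd, hXM, hXMc, htruebit, hfalsebit]
    rw [show lsum (n+1) (fun l => if Q l then P (B ∩ Cb η t l) else 0)
      = lsum n (fun l => if Q (false :: l) then P (B ∩ Cb η t (false :: l)) else 0)
        + lsum n (fun l => if Q (true :: l) then P (B ∩ Cb η t (true :: l)) else 0) from rfl]
    rw [add_comm]
    congr 1
    · refine lsum_congr n (fun l => ?_)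
      by_cases hQ : Q (false :: l)
      · rw [if_pos hQ, if_pos hQ]
        congr 1
        rw [Cb_cons η hval]
        ext ω
        simp only [Set.mem_diff, Set.mem_inter_iff, Set.mem_setOf_eq, bval]
        constructor
        · rintro ⟨⟨hb, h1⟩, hc⟩
          have h0 : η t ω = 0 := by rcases hval t ω with h | h; exact h; exact absurd h h1
          exact ⟨hb, h0, hc⟩
        · rintro ⟨hb, h0, hc⟩
          refine ⟨⟨hb, ?_⟩, hc⟩
          rw [h0]; norm_num
      · rw [if_neg hQ, if_neg hQ]
    · refine lsum_congr n (fun l => ?_)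
      by_cases hQ : Q (true :: l)
      · rw [if_pos hQ, if_pos hQ]
        congr 1
        rw [Cb_cons η hval]
        ext ω
        simp only [Set.mem_inter_iff, Set.mem_setOf_eq, bval]
        tauto
      · rw [if_neg hQ, if_neg hQ]

include hmeas hval in
lemma meas_mxevent : ∀ (n : ℕ) (t m : ℤ), MeasurableSet {ω | m ≤ mx (trk η t n ω)} := by
  intro n
  induction n with
  | zero =>
    intro t m
    by_cases hm : m ≤ 0
    · have : {ω : Ω | m ≤ mx (trk η t 0 ω)} = Set.univ := by
        ext ω; simpa [trk, mx] using hm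
      rw [this]; exact MeasurableSet.univ
    · have : {ω : Ω | m ≤ mx (trk η t 0 ω)} = ∅ := by
        ext ω; simpa [trk, mx] using hm
      rw [this]; exact MeasurableSet.empty
  | succ n ih =>
    intro t m
    have hm1 : MeasurableSet {ω | η t ω = 1} := hmeas t (MeasurableSet.singleton 1)
    have hconst : MeasurableSet {ω : Ω | m ≤ 0} := by
      by_cases hm : m ≤ 0
      · have : {ω : Ω | m ≤ 0} = Set.univ := by ext ω; simpa using hm
        rw [this]; exact MeasurableSet.univ
      · have : {ω : Ω | m ≤ 0} = ∅ := by ext ω; simpa using hm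
        rw [this]; exact MeasurableSet.empty
    have hkey : {ω | m ≤ mx (trk η t (n+1) ω)}
        = ({ω | η t ω = 1} ∩ ({ω : Ω | m ≤ 0} ∪ {ω | m - 1 ≤ mx (trk η (t-1) n ω)}))
          ∪ ({ω | η t ω = 1}ᶜ ∩ ({ω : Ω | m ≤ 0} ∪ {ω | m + 1 ≤ mx (trk η (t-1) n ω)})) := by
      ext ω
      simp only [Set.mem_union, Set.mem_inter_iff, Set.mem_setOf_eq, Set.mem_compl_iff]
      have hex : trk η t (n+1) ω = bb (η t ω) :: trk η (t-1) n ω := rfl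
      rw [hex, le_mx_cons]
      rcases hval t ω with h | h
      · rw [h]
        have : step (bb 0) = -1 := rfl
        rw [this]
        constructor
        · rintro (hc | hc)
          · exact Or.inr ⟨by norm_num, Or.inl hc⟩
          · exact Or.inr ⟨by norm_num, Or.inr (by omega)⟩
        · rintro (⟨h1, _⟩ | ⟨_, hc | hc⟩)
          · exact absurd h1 (by norm_num)
          · exact Or.inl hc
          · exact Or.inr (by omega)
      · rw [h]
        have : step (bb 1) = 1 := rfl
        rw [this]
        constructor
        · rintro (hc | hc)
          · exact Or.inl ⟨rfl, Or.inl hc⟩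
          · exact Or.inl ⟨rfl, Or.inr (by omega)⟩
        · rintro (⟨_, hc | hc⟩ | ⟨h1, _⟩)
          · exact Or.inl hc
          · exact Or.inr (by omega)
          · exact absurd rfl h1
    rw [hkey]
    exact ((hm1.inter (hconst.union (ih (t-1) (m-1)))).union
      (hm1.compl.inter (hconst.union (ih (t-1) (m+1)))))

end Decomp
section PEval
set_option linter.unusedSectionVars false

variable {Ω : Type*} [MeasurableSpace Ω] (P : Measure Ω) [IsProbabilityMeasure P]
  (p : ℤ → ℝ) (hp0 : p 0 ∈ Set.Ioo (0 : ℝ) 1) (hp1 : p 1 ∈ Set.Ico (0 : ℝ) 1)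
  (hsum : p 0 + p 1 < 1)
  (η : ℤ → Ω → ℤ) (hmeas : ∀ n, Measurable (η n))
  (hval : ∀ n ω, η n ω = 0 ∨ η n ω = 1)
  (hstat : ∀ n : ℤ, P {ω | η n ω = 1} = ENNReal.ofReal (p 0 / (1 - p 1 + p 0)))
  (htrans : ∀ (n : ℤ) (j : ℤ) (A : Set Ω), j = 0 ∨ j = 1 →
      MeasurableSet[⨆ m : {m : ℤ // m < n},
        MeasurableSpace.comap (η m) (inferInstance : MeasurableSpace ℤ)] A →
      P (A ∩ {ω | η n ω = j}) ≠ 0 →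
      (ProbabilityTheory.cond P (A ∩ {ω | η n ω = j})) {ω | η (n + 1) ω = 1}
        = ENNReal.ofReal (p j))

lemma mx_trk_mono (ω : Ω) : ∀ (n : ℕ) (t : ℤ),
    mx (trk η t n ω) ≤ mx (trk η t (n+1) ω) := by
  intro n
  induction n with
  | zero =>
    intro t
    show (0:ℤ) ≤ mx (trk η t 1 ω)
    exact mx_nonneg _
  | succ n ih =>
    intro t
    show mx (bb (η t ω) :: trk η (t-1) n ω) ≤ mx (bb (η t ω) :: trk η (t-1) (n+1) ω)
    rw [mx, mx]
    have := ih (t-1)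
    omega

include hp0 hp1 hsum hmeas hval hstat htrans in
lemma PEval : ∀ mm : ℕ,
    P (⋃ n : ℕ, {ω | ((mm:ℤ)+1) ≤ mx (trk η 0 n ω)})
      = ENNReal.ofReal (p 0 * (1 + gr (p 0) (p 1)) / (1 - p 1 + p 0) * gr (p 0) (p 1) ^ mm) := by
  obtain ⟨h0, h1⟩ := hp0
  obtain ⟨h2, h4⟩ := hp1
  have hD : (0:ℝ) < 1 - p 1 + p 0 := by linarith
  intro mm
  set q0 := p 0
  set q1 := p 1
  set m : ℤ := (mm:ℤ)+1 with hm
  have hm1 : (1:ℤ) ≤ m := by omega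
  -- value of P on each horizon event
  have hPA : ∀ n : ℕ, P {ω | m ≤ mx (trk η 0 (n+1) ω)}
      = ENNReal.ofReal (pii q0 q1 false * u q0 q1 (m+1) false n
        + pii q0 q1 true * u q0 q1 (m-1) true n) := by
    intro n
    have hd := decomp P η hmeas hval (n+1) 0 (fun l => m ≤ mx l) Set.univ MeasurableSet.univ
    simp only [Set.univ_inter] at hd
    rw [hd]
    have e1 : (lsum (n+1) fun l => if m ≤ mx l then P (Cb η 0 l) else 0)
        = lsum (n+1) (fun l => ENNReal.ofReal (if m ≤ mx l then v q0 q1 l else 0)) := by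
      refine lsum_congr (n+1) (fun l => ?_)
      by_cases hc : m ≤ mx l
      · rw [if_pos hc, if_pos hc, cyl P p ⟨h0, h1⟩ ⟨h2, h4⟩ hsum η hmeas hval hstat htrans]
      · rw [if_neg hc, if_neg hc, ENNReal.ofReal_zero]
    rw [e1, lsum_ofReal (n+1) _ (fun l => by
      by_cases hc : m ≤ mx l
      · rw [if_pos hc]; exact v_nonneg h0 h1 h2 hsum l
      · rw [if_neg hc])]
    congr 1
    rw [show (fun l => if m ≤ mx l then v q0 q1 l else 0)
        = (fun l => if m ≤ mx l then w q0 q1 l else 0) from funext (fun l => by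
          by_cases hc : m ≤ mx l
          · rw [if_pos hc, if_pos hc, v_eq_w h0 h1 h2 hsum]
          · rw [if_neg hc, if_neg hc])]
    exact lsum_hit_w h0 h1 h2 hsum n m hm1
  -- limit of the real sequence
  have hLf := (L_id h0 h1 h2 hsum (mm+1)).1
  have hLt := (L_id h0 h1 h2 hsum mm).2
  have hcv : pii q0 q1 false * L q0 q1 (m+1) false + pii q0 q1 true * L q0 q1 (m-1) true
      = q0 * (1 + gr q0 q1) / (1 - q1 + q0) * gr q0 q1 ^ mm := by
    have e1 : L q0 q1 (m+1) false = q0 / (1-q1) * gr q0 q1 ^ (mm+1) := by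
      rw [hm, show ((mm:ℤ)+1)+1 = ((mm+1:ℕ):ℤ)+1 by push_cast; ring]; exact hLf
    have e2 : L q0 q1 (m-1) true = gr q0 q1 ^ mm := by
      rw [hm]; push_cast; rw [show (mm:ℤ)+1-1 = (mm:ℤ) by ring]; exact hLt
    rw [e1, e2]
    simp only [pii, if_true, if_false, Bool.false_eq_true]
    have hq1 : (1:ℝ) - q1 ≠ 0 := by linarith
    have hDD : (1:ℝ) - q1 + q0 ≠ 0 := by linarith
    rw [pow_succ]
    field_simp
    ring
  -- limits
  have hreal : Filter.Tendsto (fun n => pii q0 q1 false * u q0 q1 (m+1) false n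
      + pii q0 q1 true * u q0 q1 (m-1) true n) Filter.atTop
      (nhds (pii q0 q1 false * L q0 q1 (m+1) false + pii q0 q1 true * L q0 q1 (m-1) true)) :=
    ((L_tendsto h0 h1 h2 hsum (m+1) false).const_mul _).add
      ((L_tendsto h0 h1 h2 hsum (m-1) true).const_mul _)
  rw [hcv] at hreal
  have hofreal := ENNReal.tendsto_ofReal hreal
  have hshift : Filter.Tendsto (fun n => P {ω | m ≤ mx (trk η 0 (n+1) ω)}) Filter.atTop
      (nhds (ENNReal.ofReal (q0 * (1 + gr q0 q1) / (1 - q1 + q0) * gr q0 q1 ^ mm))) := by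
    refine hofreal.congr (fun n => ?_)
    exact (hPA n).symm
  have hseq : Filter.Tendsto (fun n => P {ω | m ≤ mx (trk η 0 n ω)}) Filter.atTop
      (nhds (ENNReal.ofReal (q0 * (1 + gr q0 q1) / (1 - q1 + q0) * gr q0 q1 ^ mm))) := by
    have := (Filter.tendsto_add_atTop_iff_nat (f := fun n => P {ω | m ≤ mx (trk η 0 n ω)})
      (l := nhds (ENNReal.ofReal (q0 * (1 + gr q0 q1) / (1 - q1 + q0) * gr q0 q1 ^ mm))) 1)
    exact this.mp hshift
  have hmono : Monotone (fun n : ℕ => {ω : Ω | m ≤ mx (trk η 0 n ω)}) := by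
    apply monotone_nat_of_le_succ
    intro n ω hω
    exact le_trans hω (mx_trk_mono η ω n 0)
  have hunion := tendsto_measure_iUnion_atTop (μ := P) hmono
  exact tendsto_nhds_unique hunion hseq
end PEval
section Strk
set_option linter.unusedSectionVars false

variable {Ω : Type*} (η : ℤ → Ω → ℤ)
  (hval : ∀ n ω, η n ω = 0 ∨ η n ω = 1)
  (S : Ω → ℤ → ℤ)
  (hSinc : ∀ ω (n : ℤ), S ω n - S ω (n - 1) = 1 - 2 * η n ω)

include hval hSinc in
lemma mx_trk_iff : ∀ (n : ℕ) (t : ℤ) (ω : Ω) (m : ℤ),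
    m ≤ mx (trk η t n ω) ↔ ∃ k : ℕ, k ≤ n ∧ m + S ω t ≤ S ω (t - k) := by
  intro n
  induction n with
  | zero =>
    intro t ω m
    show m ≤ mx ([] : List Bool) ↔ _
    rw [mx]
    constructor
    · intro h
      exact ⟨0, le_refl 0, by simpa using (by omega : m + S ω t ≤ S ω t)⟩
    · rintro ⟨k, hk, hle⟩
      have hk0 : k = 0 := by omega
      subst hk0
      simp only [Nat.cast_zero, sub_zero] at hle
      omega
  | succ n ih =>
    intro t ω m
    have hex : trk η t (n+1) ω = bb (η t ω) :: trk η (t-1) n ω := rfl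
    rw [hex, le_mx_cons]
    have hstep : step (bb (η t ω)) = S ω (t-1) - S ω t := by
      have hS := hSinc ω t
      rcases hval t ω with h | h <;> rw [h] <;>
        simp only [show step (bb 0) = -1 from rfl, show step (bb 1) = 1 from rfl] <;> omega
    rw [hstep, ih (t-1) ω (m - (S ω (t-1) - S ω t))]
    constructor
    · rintro (h | ⟨k, hk, hle⟩)
      · exact ⟨0, by omega, by simpa using (by omega : m + S ω t ≤ S ω t)⟩
      · refine ⟨k+1, by omega, ?_⟩
        have : t - 1 - (k:ℤ) = t - ((k:ℤ)+1) := by ring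
        rw [this] at hle
        push_cast
        omega
    · rintro ⟨k, hk, hle⟩
      cases k with
      | zero =>
        left
        simp only [Nat.cast_zero, sub_zero] at hle
        omega
      | succ k =>
        right
        refine ⟨k, by omega, ?_⟩
        have : t - 1 - (k:ℤ) = t - ((k:ℤ)+1) := by ring
        rw [this]
        push_cast at hle
        omega
end Strk
end Stmt5Aux

open Set MeasureTheory ProbabilityTheory

/-- Marginal distribution of the carrier `W_0` for the two-sided stationary Markov
configuration with parameters `p_0 ∈ (0,1)`, `p_1 ∈ [0,1)`, `p_0 + p_1 < 1`. -/
theorem stmt_5 {Ω : Type*} [MeasurableSpace Ω] (P : Measure Ω) [IsProbabilityMeasure P]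
    (p : ℤ → ℝ) (hp0 : p 0 ∈ Set.Ioo (0 : ℝ) 1) (hp1 : p 1 ∈ Set.Ico (0 : ℝ) 1)
    (hsum : p 0 + p 1 < 1)
    (η : ℤ → Ω → ℤ) (hmeas : ∀ n, Measurable (η n))
    (hval : ∀ n ω, η n ω = 0 ∨ η n ω = 1)
    -- stationary marginal law
    (hstat : ∀ n : ℤ, P {ω | η n ω = 1} = ENNReal.ofReal (p 0 / (1 - p 1 + p 0)))
    -- Markov property with time-homogeneous transition probabilities
    (htrans : ∀ (n : ℤ) (j : ℤ) (A : Set Ω), j = 0 ∨ j = 1 →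
      MeasurableSet[⨆ m : {m : ℤ // m < n},
        MeasurableSpace.comap (η m) (inferInstance : MeasurableSpace ℤ)] A →
      P (A ∩ {ω | η n ω = j}) ≠ 0 →
      (ProbabilityTheory.cond P (A ∩ {ω | η n ω = j})) {ω | η (n + 1) ω = 1}
        = ENNReal.ofReal (p j))
    (S : Ω → ℤ → ℤ) (hS0 : ∀ ω, S ω 0 = 0)
    (hSinc : ∀ ω (n : ℤ), S ω n - S ω (n - 1) = 1 - 2 * η n ω)
    (W : ℤ → Ω → ℤ)
    (hW : ∀ ω (n : ℤ), W n ω = sSup (S ω '' {m : ℤ | m ≤ n}) - S ω n) :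
    P {ω | W 0 ω = 0} =
      ENNReal.ofReal ((1 - p 0 - p 1) / ((1 - p 0) * (1 + p 0 - p 1))) ∧
    ∀ m : ℕ, 1 ≤ m →
      P {ω | W 0 ω = (m : ℤ)} =
        ENNReal.ofReal
          (p 0 * (1 - p 0 + p 1) * (1 - p 0 - p 1) / ((1 - p 0) ^ 2 * (1 + p 0 - p 1))
            * (p 1 / (1 - p 0)) ^ (m - 1)) := by
  obtain ⟨h0, h1⟩ := hp0
  obtain ⟨h2, h4⟩ := hp1
  have hD : (0:ℝ) < 1 - p 1 + p 0 := by linarith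
  have hGdef : Stmt5Aux.gr (p 0) (p 1) = p 1 / (1 - p 0) := rfl
  set G : ℝ := Stmt5Aux.gr (p 0) (p 1) with hG
  have hgnn : 0 ≤ G := div_nonneg h2 (by linarith)
  have hglt : G < 1 := by rw [hGdef, div_lt_one (by linarith)]; linarith
  set Cst : ℝ := p 0 * (1 + G) / (1 - p 1 + p 0) with hCst
  have hCnn : 0 ≤ Cst := by
    rw [hCst]; apply div_nonneg _ (le_of_lt hD); nlinarith
  set F : ℕ → Set Ω := fun k =>
    ⋃ n : ℕ, {ω | ((k:ℤ)+1) ≤ Stmt5Aux.mx (Stmt5Aux.trk η 0 n ω)} with hF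
  have hPF : ∀ k : ℕ, P (F k) = ENNReal.ofReal (Cst * G ^ k) := fun k =>
    Stmt5Aux.PEval P p ⟨h0,h1⟩ ⟨h2,h4⟩ hsum η hmeas hval hstat htrans k
  have hFmeas : ∀ k, MeasurableSet (F k) := fun k =>
    MeasurableSet.iUnion (fun n => Stmt5Aux.meas_mxevent η hmeas hval n 0 _)
  have hFmem : ∀ (k : ℕ) (ω : Ω), ω ∈ F k ↔ ∃ j : ℕ, ((k:ℤ)+1) ≤ S ω (-(j:ℤ)) := by
    intro k ω
    simp only [hF, Set.mem_iUnion, Set.mem_setOf_eq]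
    constructor
    · rintro ⟨n, hn⟩
      obtain ⟨j, hj, hle⟩ := (Stmt5Aux.mx_trk_iff η hval S hSinc n 0 ω _).mp hn
      refine ⟨j, ?_⟩
      rw [hS0 ω] at hle
      simpa using hle
    · rintro ⟨j, hj⟩
      refine ⟨j, (Stmt5Aux.mx_trk_iff η hval S hSinc j 0 ω _).mpr ⟨j, le_refl j, ?_⟩⟩
      rw [hS0 ω]
      simpa using hj
  have hWform : ∀ ω, W 0 ω = sSup (Set.range (fun j : ℕ => S ω (-(j:ℤ)))) := by
    intro ω
    rw [hW ω 0, hS0 ω, sub_zero]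
    congr 1
    ext x
    simp only [Set.mem_image, Set.mem_setOf_eq, Set.mem_range]
    constructor
    · rintro ⟨i, hi, rfl⟩
      exact ⟨(-i).toNat, by rw [show (-(((-i).toNat : ℕ):ℤ)) = i by omega]⟩
    · rintro ⟨j, rfl⟩
      exact ⟨-(j:ℤ), by omega, rfl⟩

  have h0mem : ∀ ω, (0:ℤ) ∈ Set.range (fun j : ℕ => S ω (-(j:ℤ))) := by
    intro ω
    refine ⟨0, ?_⟩
    show S ω (-((0:ℕ):ℤ)) = 0
    rw [show (-((0:ℕ):ℤ)) = 0 by norm_num]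
    exact hS0 ω
  have hne : ∀ ω, (Set.range (fun j : ℕ => S ω (-(j:ℤ)))).Nonempty :=
    fun ω => ⟨0, h0mem ω⟩
  -- set identity for m ≥ 1
  have hset_m : ∀ m : ℕ, 1 ≤ m → {ω | W 0 ω = (m:ℤ)} = F (m-1) \ F m := by
    intro m hm
    have hcast : ((m-1:ℕ):ℤ) + 1 = (m:ℤ) := by omega
    ext ω
    simp only [Set.mem_setOf_eq, Set.mem_diff]
    rw [hWform ω, hFmem (m-1) ω, hFmem m ω, hcast]
    constructor
    · intro hw
      by_cases hbd : BddAbove (Set.range (fun j : ℕ => S ω (-(j:ℤ))))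
      · have hmem := Int.csSup_mem (hne ω) hbd
        rw [hw] at hmem
        obtain ⟨j, hj⟩ := hmem
        have hj' : S ω (-(j:ℤ)) = ((m:ℕ):ℤ) := hj
        constructor
        · exact ⟨j, le_of_eq hj'.symm⟩
        · rintro ⟨i, hi⟩
          have hi' : ((m:ℕ):ℤ) + 1 ≤ S ω (-(i:ℤ)) := hi
          have hle : S ω (-(i:ℤ)) ≤ sSup (Set.range (fun j : ℕ => S ω (-(j:ℤ)))) :=
            le_csSup hbd ⟨i, rfl⟩
          rw [hw] at hle
          omega
      · exfalso
        have hz := Int.csSup_of_not_bddAbove hbd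
        rw [hz] at hw
        omega
    · rintro ⟨⟨j, hj⟩, hnot⟩
      have hub : ∀ x ∈ Set.range (fun j : ℕ => S ω (-(j:ℤ))), x ≤ (m:ℤ) := by
        intro x hx
        by_contra hc
        obtain ⟨i, rfl⟩ := hx
        have hc' : ¬ (S ω (-(i:ℤ)) ≤ ((m:ℕ):ℤ)) := hc
        exact hnot ⟨i, by omega⟩
      have hbd : BddAbove (Set.range (fun j : ℕ => S ω (-(j:ℤ)))) := ⟨(m:ℤ), hub⟩
      apply le_antisymm
      · exact csSup_le (hne ω) hub
      · exact le_trans hj (le_csSup hbd ⟨j, rfl⟩)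
  -- set inclusions for m = 0
  have hset_0a : (F 0)ᶜ ⊆ {ω | W 0 ω = 0} := by
    intro ω hω
    simp only [Set.mem_compl_iff, hFmem 0 ω] at hω
    push_neg at hω
    simp only [Set.mem_setOf_eq]
    rw [hWform ω]
    have hub : ∀ x ∈ Set.range (fun j : ℕ => S ω (-(j:ℤ))), x ≤ (0:ℤ) := by
      rintro x ⟨i, rfl⟩
      have := hω i
      show S ω (-(i:ℤ)) ≤ 0
      omega
    apply le_antisymm
    · exact csSup_le (hne ω) hub
    · exact le_csSup ⟨0, hub⟩ (h0mem ω)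
  have hset_0b : ∀ k : ℕ, {ω | W 0 ω = 0} ⊆ (F 0)ᶜ ∪ F k := by
    intro k ω hω
    simp only [Set.mem_setOf_eq] at hω
    rw [hWform ω] at hω
    by_cases hin : ω ∈ F 0
    · right
      by_cases hbd : BddAbove (Set.range (fun j : ℕ => S ω (-(j:ℤ))))
      · exfalso
        obtain ⟨j, hj⟩ := (hFmem 0 ω).mp hin
        have := le_csSup hbd (⟨j, rfl⟩ :
          S ω (-(j:ℤ)) ∈ Set.range (fun j : ℕ => S ω (-(j:ℤ))))
        omega
      · rw [hFmem k ω]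
        obtain ⟨y, hy, hgt⟩ := (not_bddAbove_iff.mp hbd) ((k:ℤ)+1)
        obtain ⟨i, rfl⟩ := hy
        have hgt' : ((k:ℕ):ℤ) + 1 < S ω (-(i:ℤ)) := hgt
        exact ⟨i, by omega⟩
    · left; exact hin
  -- measure computations
  have hsub : ∀ m : ℕ, 1 ≤ m → F m ⊆ F (m-1) := by
    intro m hm ω hω
    rw [hFmem m ω] at hω
    rw [hFmem (m-1) ω]
    obtain ⟨j, hj⟩ := hω
    exact ⟨j, by omega⟩
  constructor
  · -- m = 0 case
    have hlow : P (F 0)ᶜ ≤ P {ω | W 0 ω = 0} := measure_mono hset_0a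
    have hup : ∀ k : ℕ, P {ω | W 0 ω = 0} ≤ P (F 0)ᶜ + P (F k) := fun k =>
      le_trans (measure_mono (hset_0b k)) (measure_union_le _ _)
    have htendreal : Filter.Tendsto (fun k : ℕ => Cst * G ^ k) Filter.atTop (nhds 0) := by
      rw [show (0:ℝ) = Cst * 0 by ring]
      exact (tendsto_pow_atTop_nhds_zero_of_lt_one hgnn hglt).const_mul _
    have htend : Filter.Tendsto (fun k : ℕ => P (F 0)ᶜ + P (F k)) Filter.atTop
        (nhds (P (F 0)ᶜ)) := by
      have h1' : Filter.Tendsto (fun k : ℕ => P (F k)) Filter.atTop (nhds 0) := by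
        have := ENNReal.tendsto_ofReal htendreal
        rw [ENNReal.ofReal_zero] at this
        refine this.congr (fun k => ?_)
        exact (hPF k).symm
      have hconst : Filter.Tendsto (fun _ : ℕ => P ((F 0)ᶜ)) Filter.atTop
          (nhds (P ((F 0)ᶜ))) := tendsto_const_nhds
      have := hconst.add h1'
      simpa using this
    have hle : P {ω | W 0 ω = 0} ≤ P (F 0)ᶜ :=
      ge_of_tendsto htend (Filter.Eventually.of_forall hup)
    have heq : P {ω | W 0 ω = 0} = P (F 0)ᶜ := le_antisymm hle hlow
    rw [heq, measure_compl (hFmeas 0) (measure_ne_top P _), measure_univ, hPF 0]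
    rw [pow_zero, mul_one]
    rw [← ENNReal.ofReal_one, ← ENNReal.ofReal_sub 1 hCnn]
    congr 1
    rw [hCst, hGdef]
    have e0 : (1:ℝ) - p 0 ≠ 0 := by linarith
    have eD : (1:ℝ) - p 1 + p 0 ≠ 0 := by linarith
    have eD2 : (1:ℝ) + p 0 - p 1 ≠ 0 := by linarith
    field_simp
    ring
  · -- m ≥ 1 case
    intro m hm
    rw [hset_m m hm]
    rw [measure_diff (hsub m hm) (hFmeas m).nullMeasurableSet (measure_ne_top P _)]
    rw [hPF m, hPF (m-1)]
    rw [← ENNReal.ofReal_sub _ (by positivity)]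
    congr 1
    have hpow : G ^ m = G ^ (m-1) * G := by
      rw [← pow_succ]
      congr 1
      omega
    rw [hpow]
    rw [hCst, hGdef]
    have e0 : (1:ℝ) - p 0 ≠ 0 := by linarith
    have eD : (1:ℝ) - p 1 + p 0 ≠ 0 := by linarith
    have eD2 : (1:ℝ) + p 0 - p 1 ≠ 0 := by linarith
    field_simp
    ring
end

section
/- For x ∈ {0,1}^N, each conserved quantity f_k (k ≥ 0) is invariant under the cyclic shift: f_k(x) = f_k(θ_{Per} x), where θ_{Per}(x_1,…,x_N) = (x_2,…,x_N,x_1). -/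
/-- Number of (cyclic) occurrences of the pattern `(1,0)` in a binary string,
i.e. positions `n` with `x_n = 1` and `x_{n+1} = 0`, indices taken cyclically. -/
def bbsF1 (l : List Bool) : ℕ :=
  ((l.zip (l.rotate 1)).filter (fun p => p.1 && !p.2)).length

/-- Whether position `n` of `l` survives the cyclic `(1,0)`-removal operation. -/
def bbsKeep (l : List Bool) (n : ℕ) : Bool :=
  let N := l.length
  !((l.getD (n % N) false && !(l.getD ((n + 1) % N) false)) ||
    (l.getD ((n + N - 1) % N) false && !(l.getD (n % N) false)))

/-- The cyclic `(1,0)`-removal operation `H`: delete all (cyclic) `(1,0)` substrings. -/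
def bbsH (l : List Bool) : List Bool :=
  (List.range l.length).filterMap
    (fun n => if bbsKeep l n then some (l.getD n false) else none)

/-- The conserved quantities `f_k`: `f_0` counts particles, and `f_k = f_1 ∘ H^{k-1}`
counts solitons of size at least `k`. -/
def bbsF : ℕ → List Bool → ℕ
  | 0, l => l.count true
  | k + 1, l => bbsF1 (bbsH^[k] l)

private lemma zip_rotate_one {α β : Type*} :
    ∀ (l : List α) (l' : List β), l.length = l'.length →
      (l.rotate 1).zip (l'.rotate 1) = (l.zip l').rotate 1
  | [], [], _ => by simp
  | a :: as, b :: bs, h => by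
    simp only [List.length_cons, Nat.succ.injEq] at h
    have h1 : (a :: as).rotate 1 = as ++ [a] := by
      simpa using List.rotate_cons_succ as a 0
    have h2 : (b :: bs).rotate 1 = bs ++ [b] := by
      simpa using List.rotate_cons_succ bs b 0
    have h3 : ((a :: as).zip (b :: bs)).rotate 1 = as.zip bs ++ [(a, b)] := by
      simpa using List.rotate_cons_succ (as.zip bs) (a, b) 0
    rw [h1, h2, h3, List.zip_append h]
    simp

private lemma bbsF1_rotate_one (l : List Bool) : bbsF1 (l.rotate 1) = bbsF1 l := by
  unfold bbsF1
  rw [List.rotate_rotate, show (1 + 1) = 1 + 1 from rfl,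
    ← List.rotate_rotate l 1 1,
    zip_rotate_one l (l.rotate 1) (by simp)]
  exact List.Perm.length_eq
    (List.Perm.filter _ (List.rotate_perm (l.zip (l.rotate 1)) 1))

private lemma bbsF1_rotate (l : List Bool) (m : ℕ) : bbsF1 (l.rotate m) = bbsF1 l := by
  induction m with
  | zero => simp
  | succ m ih =>
    rw [show m + 1 = m + 1 from rfl, ← List.rotate_rotate l m 1, bbsF1_rotate_one, ih]

private lemma getD_rotate_one (l : List Bool) (h : l ≠ []) (i : ℕ) :
    (l.rotate 1).getD (i % l.length) false = l.getD ((i + 1) % l.length) false := by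
  have hN : 0 < l.length := List.length_pos_iff.mpr h
  have h1 : i % l.length < l.length := Nat.mod_lt _ hN
  have h2 : (i + 1) % l.length < l.length := Nat.mod_lt _ hN
  rw [List.getD_eq_getElem?_getD, List.getD_eq_getElem?_getD,
    List.getElem?_rotate h1, Nat.mod_add_mod]

private lemma bbsKeep_mod (l : List Bool) (h : l ≠ []) (n : ℕ) :
    bbsKeep l n = bbsKeep l (n % l.length) := by
  have hN : 0 < l.length := List.length_pos_iff.mpr h
  unfold bbsKeep
  have e1 : n % l.length % l.length = n % l.length := Nat.mod_mod_of_dvd n dvd_rfl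
  have e2 : (n % l.length + 1) % l.length = (n + 1) % l.length := Nat.mod_add_mod n l.length 1
  have e3 : (n % l.length + l.length - 1) % l.length = (n + l.length - 1) % l.length := by
    rw [show n % l.length + l.length - 1 = n % l.length + (l.length - 1) by omega,
      show n + l.length - 1 = n + (l.length - 1) by omega, Nat.mod_add_mod]
  simp only [e1, e2, e3]

private lemma bbsKeep_rotate_one (l : List Bool) (h : l ≠ []) (n : ℕ) :
    bbsKeep (l.rotate 1) n = bbsKeep l (n + 1) := by
  have hN : 0 < l.length := List.length_pos_iff.mpr h
  unfold bbsKeep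
  simp only [List.length_rotate]
  have g1 : (l.rotate 1).getD (n % l.length) false = l.getD ((n + 1) % l.length) false :=
    getD_rotate_one l h n
  have g2 : (l.rotate 1).getD ((n + 1) % l.length) false = l.getD ((n + 1 + 1) % l.length) false :=
    getD_rotate_one l h (n + 1)
  have g3 : (l.rotate 1).getD ((n + l.length - 1) % l.length) false
      = l.getD (n % l.length) false := by
    have := getD_rotate_one l h (n + l.length - 1)
    rwa [show n + l.length - 1 + 1 = n + l.length by omega, Nat.add_mod_right] at this
  have g4 : (n + 1 + l.length - 1) % l.length = n % l.length := by
    rw [show n + 1 + l.length - 1 = n + l.length by omega, Nat.add_mod_right]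
  rw [g1, g2, g3, g4]

private lemma bbsH_rotate_one (l : List Bool) :
    ∃ m, bbsH (l.rotate 1) = (bbsH l).rotate m := by
  rcases eq_or_ne l [] with rfl | h
  · exact ⟨0, by simp⟩
  have hN : 0 < l.length := List.length_pos_iff.mpr h
  obtain ⟨M, hM⟩ : ∃ M, l.length = M + 1 := ⟨l.length - 1, by omega⟩
  set g : ℕ → Option Bool := fun n =>
    if bbsKeep l n then some (l.getD (n % l.length) false) else none with hg
  have hHl : bbsH l = List.filterMap g (List.range l.length) := by
    unfold bbsH
    apply List.filterMap_congr
    intro n hn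
    rw [List.mem_range] at hn
    simp only [hg, Nat.mod_eq_of_lt hn]
  have hHr : bbsH (l.rotate 1) = List.filterMap (fun n => g (n + 1)) (List.range l.length) := by
    unfold bbsH
    rw [List.length_rotate]
    apply List.filterMap_congr
    intro n hn
    rw [List.mem_range] at hn
    rw [bbsKeep_rotate_one l h n]
    simp only [hg]
    congr 1
    have : (l.rotate 1).getD n false = l.getD ((n + 1) % l.length) false := by
      have := getD_rotate_one l h n
      rwa [Nat.mod_eq_of_lt hn] at this
    rw [this]
  have gper : g (M + 1) = g 0 := by
    simp only [hg, ← hM]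
    rw [bbsKeep_mod l h l.length, Nat.mod_self, Nat.zero_mod]
  have split1 : bbsH l = List.filterMap g [0] ++ List.filterMap (fun n => g (n + 1)) (List.range M) := by
    rw [hHl, hM, List.range_succ_eq_map, show (0 : ℕ) :: List.map Nat.succ (List.range M)
      = [0] ++ List.map Nat.succ (List.range M) from rfl, List.filterMap_append,
      List.filterMap_map]
    rfl
  have split2 : bbsH (l.rotate 1)
      = List.filterMap (fun n => g (n + 1)) (List.range M) ++ List.filterMap g [0] := by
    rw [hHr, hM, List.range_succ, List.filterMap_append]
    have hsing : List.filterMap (fun n => g (n + 1)) [M] = List.filterMap g [0] := by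
      simp only [List.filterMap_cons, List.filterMap_nil]
      rw [gper]
    rw [hsing]
  refine ⟨(List.filterMap g [0]).length, ?_⟩
  rw [split1, split2, List.rotate_eq_drop_append_take (by simp)]
  simp

private lemma bbsH_rotate (l : List Bool) (m : ℕ) :
    ∃ m', bbsH (l.rotate m) = (bbsH l).rotate m' := by
  induction m with
  | zero => exact ⟨0, by simp⟩
  | succ m ih =>
    obtain ⟨m1, hm1⟩ := ih
    obtain ⟨m2, hm2⟩ := bbsH_rotate_one (l.rotate m)
    rw [List.rotate_rotate] at hm2
    exact ⟨m1 + m2, by rw [hm2, hm1, List.rotate_rotate]⟩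

private lemma bbsH_iter_rotate (k : ℕ) : ∀ (l : List Bool) (m : ℕ),
    ∃ m', bbsH^[k] (l.rotate m) = (bbsH^[k] l).rotate m' := by
  induction k with
  | zero => exact fun l m => ⟨m, rfl⟩
  | succ k ih =>
    intro l m
    obtain ⟨m1, hm1⟩ := bbsH_rotate l m
    obtain ⟨m2, hm2⟩ := ih (bbsH l) m1
    refine ⟨m2, ?_⟩
    rw [Function.iterate_succ_apply, Function.iterate_succ_apply, hm1, hm2]

/-- Each conserved quantity `f_k` is invariant under the cyclic shift `θ_Per`. -/
theorem stmt_6 (l : List Bool) (k : ℕ) : bbsF k l = bbsF k (l.rotate 1) := by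
  cases k with
  | zero =>
    simp only [bbsF]
    exact ((List.rotate_perm l 1).count_eq true).symm
  | succ k =>
    simp only [bbsF]
    obtain ⟨m, hm⟩ := bbsH_iter_rotate k l 1
    rw [hm, bbsF1_rotate]
end

section
/- For x ∈ {0,1}^N, each conserved quantity f_k (k ≥ 0) is invariant under reversal: f_k(x) = f_k(x⃖), where x⃖ = (x_N, x_{N−1}, …, x_1). -/
namespace BBS

def P10 (a b c : Bool) : Bool := !((b && !c) || (a && !b))
def P01 (a b c : Bool) : Bool := P10 c b a

def cycF (P : Bool → Bool → Bool → Bool) (l : List Bool) (n : ℕ) : Option Bool :=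
  if P (l.getD ((n + l.length - 1) % l.length) false)
       (l.getD (n % l.length) false)
       (l.getD ((n + 1) % l.length) false)
  then some (l.getD n false) else none

def cyc (P : Bool → Bool → Bool → Bool) (l : List Bool) : List Bool :=
  (List.range l.length).filterMap (cycF P l)

theorem bbsH_eq_cyc (l : List Bool) : bbsH l = cyc P10 l := rfl

/-- basic helpers -/
theorem filterMap_ite {α β : Type*} (cond : α → Bool) (v : α → β) (s : List α) :
    s.filterMap (fun n => if cond n then some (v n) else none) = (s.filter cond).map v := by
  induction s with
  | nil => simp
  | cons a t ih => by_cases h : cond a <;> simp [h, ih]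

theorem getD_rotate (l : List Bool) (m k : ℕ) (hk : k < l.length) :
    (l.rotate m).getD k false = l.getD ((k + m) % l.length) false := by
  have h1 : k < (l.rotate m).length := by simpa using hk
  rw [List.getD_eq_getElem _ _ h1, List.getElem_rotate,
    List.getD_eq_getElem _ _ (Nat.mod_lt _ (by omega))]

theorem getD_reverse (l : List Bool) (k : ℕ) (hk : k < l.length) :
    l.reverse.getD k false = l.getD (l.length - 1 - k) false := by
  have h1 : k < l.reverse.length := by simpa using hk
  rw [List.getD_eq_getElem _ _ h1, List.getElem_reverse,
    List.getD_eq_getElem _ _ (by omega)]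

theorem map_mod_rotate (N m : ℕ) :
    (List.range N).map (fun n => (n + m) % N) = (List.range N).rotate m := by
  rcases Nat.eq_zero_or_pos N with rfl | hN
  · simp
  · apply List.ext_getElem
    · simp
    · intro i h1 h2
      simp only [List.getElem_map, List.getElem_range, List.getElem_rotate, List.length_range]

theorem map_sub_range (N : ℕ) :
    (List.range N).map (fun n => N - 1 - n) = (List.range N).reverse := by
  apply List.ext_getElem
  · simp
  · intro i h1 h2
    simp [List.getElem_reverse]

theorem countP_split {α : Type*} (p q : α → Bool) (s : List α) :
    s.countP p = s.countP (fun a => p a && q a) + s.countP (fun a => p a && !q a) := by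
  induction s with
  | nil => simp
  | cons a t ih =>
    simp only [List.countP_cons, ih]
    cases hp : p a <;> cases hq : q a <;> simp [hp, hq] <;> omega


theorem cyc_rotate (P : Bool → Bool → Bool → Bool) (l : List Bool) (m : ℕ) :
    cyc P (l.rotate m) = List.filterMap (cycF P l) ((List.range l.length).rotate m) := by
  unfold cyc
  rw [List.length_rotate, ← map_mod_rotate, List.filterMap_map]
  apply List.filterMap_congr
  intro n hn
  have hn' : n < l.length := List.mem_range.mp hn
  have hN : 0 < l.length := by omega
  set N := l.length with hNdef
  have e1 : (l.rotate m).getD ((n + N - 1) % N) false = l.getD ((n + m + (N - 1)) % N) false := by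
    rw [getD_rotate l m _ (Nat.mod_lt _ hN), Nat.mod_add_mod]
    congr 2
    omega
  have e2 : (l.rotate m).getD (n % N) false = l.getD ((n + m) % N) false := by
    rw [getD_rotate l m _ (Nat.mod_lt _ hN), Nat.mod_add_mod]
  have e3 : (l.rotate m).getD ((n + 1) % N) false = l.getD ((n + m + 1) % N) false := by
    rw [getD_rotate l m _ (Nat.mod_lt _ hN), Nat.mod_add_mod]
    congr 2
    omega
  have e4 : (l.rotate m).getD n false = l.getD ((n + m) % N) false :=
    getD_rotate l m n hn'
  have i1 : ((n + m) % N + N - 1) % N = (n + m + (N - 1)) % N := by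
    rw [show (n + m) % N + N - 1 = (n + m) % N + (N - 1) by omega, Nat.mod_add_mod]
  have i2 : (n + m) % N % N = (n + m) % N := Nat.mod_mod_of_dvd _ dvd_rfl
  have i3 : ((n + m) % N + 1) % N = (n + m + 1) % N := Nat.mod_add_mod _ _ _
  simp only [Function.comp, cycF, List.length_rotate, e1, e2, e3, e4, ← hNdef, i1, i2, i3]

theorem cyc_rotate_isRotated (P : Bool → Bool → Bool → Bool) (l : List Bool) (m : ℕ) :
    (cyc P (l.rotate m)).IsRotated (cyc P l) := by
  rcases Nat.eq_zero_or_pos l.length with h0 | hN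
  · have : l = [] := List.length_eq_zero_iff.mp h0
    subst this
    simp [cyc]
  · rw [← List.rotate_mod, cyc_rotate]
    have hm : m % l.length ≤ (List.range l.length).length := by
      rw [List.length_range]
      exact le_of_lt (Nat.mod_lt _ hN)
    rw [List.rotate_eq_drop_append_take hm, List.filterMap_append]
    have : cyc P l = List.filterMap (cycF P l) (List.take (m % l.length) (List.range l.length)
        ++ List.drop (m % l.length) (List.range l.length)) := by
      rw [List.take_append_drop]
      rfl
    rw [this, List.filterMap_append]
    exact List.isRotated_append

theorem cyc_isRotated (P : Bool → Bool → Bool → Bool) {l l' : List Bool}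
    (h : l.IsRotated l') : (cyc P l).IsRotated (cyc P l') := by
  obtain ⟨n, rfl⟩ := h
  exact (cyc_rotate_isRotated P l n).symm

theorem mod_idx1 {N n : ℕ} (hN : 0 < N) (hn : n < N) :
    N - 1 - ((n + N - 1) % N) = ((N - 1 - n) + 1) % N := by
  rcases Nat.eq_zero_or_pos n with rfl | hpos
  · rw [show (0 + N - 1) = N - 1 by omega, Nat.mod_eq_of_lt (by omega),
      show N - 1 - 0 + 1 = N by omega, Nat.mod_self]
    omega
  · rw [show n + N - 1 = N + (n - 1) by omega, Nat.add_mod_left,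
      Nat.mod_eq_of_lt (by omega), show N - 1 - n + 1 = N - n by omega,
      Nat.mod_eq_of_lt (by omega)]
    omega

theorem mod_idx2 {N n : ℕ} (hN : 0 < N) (hn : n < N) :
    N - 1 - ((n + 1) % N) = ((N - 1 - n) + N - 1) % N := by
  rcases Nat.lt_or_ge n (N - 1) with h | h
  · rw [Nat.mod_eq_of_lt (by omega),
      show N - 1 - n + N - 1 = N + (N - 2 - n) by omega, Nat.add_mod_left,
      Nat.mod_eq_of_lt (by omega)]
    omega
  · have hn' : n = N - 1 := by omega
    subst hn'
    rw [show N - 1 + 1 = N by omega, Nat.mod_self,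
      show N - 1 - (N - 1) + N - 1 = N - 1 by omega, Nat.mod_eq_of_lt (by omega)]
    omega

theorem cyc_reverse (P : Bool → Bool → Bool → Bool) (l : List Bool) :
    cyc P l.reverse = (cyc (fun a b c => P c b a) l).reverse := by
  unfold cyc
  rw [List.length_reverse, ← List.filterMap_reverse, ← map_sub_range, List.filterMap_map]
  apply List.filterMap_congr
  intro n hn
  have hn' : n < l.length := List.mem_range.mp hn
  have hN : 0 < l.length := by omega
  set N := l.length with hNdef
  have e1 : l.reverse.getD ((n + N - 1) % N) false
      = l.getD ((N - 1 - n + 1) % N) false := by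
    rw [getD_reverse l _ (Nat.mod_lt _ hN), ← hNdef, mod_idx1 hN hn']
  have e2 : l.reverse.getD (n % N) false = l.getD (N - 1 - n) false := by
    rw [Nat.mod_eq_of_lt hn', getD_reverse l _ hn']
  have e3 : l.reverse.getD ((n + 1) % N) false
      = l.getD ((N - 1 - n + N - 1) % N) false := by
    rw [getD_reverse l _ (Nat.mod_lt _ hN), ← hNdef, mod_idx2 hN hn']
  have e4 : l.reverse.getD n false = l.getD (N - 1 - n) false := getD_reverse l n hn'
  have i2 : (N - 1 - n) % N = N - 1 - n := Nat.mod_eq_of_lt (by omega)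
  simp only [Function.comp, cycF, List.length_reverse, ← hNdef, e1, e2, e3, e4, i2]

def lin (P : Bool → Bool → Bool → Bool) : Bool → List Bool → Bool → List Bool
  | _, [], _ => []
  | p, x :: t, q => if P p x (t.headD q) then x :: lin P x t q else lin P x t q

@[simp] theorem lin_nil (P p q) : lin P p [] q = [] := rfl

theorem lin_cons (P p x t q) :
    lin P p (x :: t) q = if P p x (t.headD q) then x :: lin P x t q else lin P x t q := rfl

theorem headD_eq_getD (l : List Bool) (d : Bool) : l.headD d = l.getD 0 d := by
  cases l <;> simp

theorem getD_length_sub_one : ∀ (l : List Bool) (d : Bool), l ≠ [] →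
    l.getD (l.length - 1) d = l.getLastD d := by
  intro l
  induction l with
  | nil => intro d h; simp at h
  | cons x t ih =>
    intro d _
    rcases eq_or_ne t [] with rfl | ht
    · simp
    · have hlen : 0 < t.length := List.length_pos_iff.mpr ht
      have h1 : (x :: t).length - 1 = (t.length - 1) + 1 := by simp; omega
      rw [h1, List.getD_cons_succ, List.getLastD_cons, ih d ht]
      obtain ⟨y, u, rfl⟩ := List.exists_cons_of_ne_nil ht
      simp only [List.getLastD_cons]

theorem getD_drop_zero (L : List Bool) (i : ℕ) (hi : i < L.length) :
    (L.drop i).getD 0 false = L.getD i false := by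
  have h0 : 0 < (L.drop i).length := by simp; omega
  rw [List.getD_eq_getElem _ _ h0, List.getElem_drop, List.getD_eq_getElem _ _ (by omega)]
  simp

theorem cyc_suffix (P : Bool → Bool → Bool → Bool) (L : List Bool) :
    ∀ (t : List Bool) (i : ℕ), 0 < i → i + t.length = L.length → t = L.drop i →
    List.filterMap (cycF P L) (List.range' i t.length)
      = lin P (L.getD (i - 1) false) t (L.headD false) := by
  intro t
  induction t with
  | nil => intro i _ _ _; simp
  | cons x t' ih =>
    intro i hi hlen hdrop
    simp only [List.length_cons] at hlen
    have hN : 0 < L.length := by omega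
    have hiN : i < L.length := by omega
    have hdrop' : L.drop (i + 1) = t' := by
      rw [← List.drop_drop, ← hdrop]
      simp
    have hx : L.getD i false = x := by
      rw [← getD_drop_zero L i hiN, ← hdrop]
      simp
    have key : cycF P L i = if P (L.getD (i - 1) false) x (t'.headD (L.headD false))
        then some x else none := by
      unfold cycF
      have m1 : i % L.length = i := Nat.mod_eq_of_lt hiN
      have m2 : (i + L.length - 1) % L.length = i - 1 := by
        rw [show i + L.length - 1 = L.length + (i - 1) by omega, Nat.add_mod_left,
          Nat.mod_eq_of_lt (by omega)]
      have m3 : L.getD ((i + 1) % L.length) false = t'.headD (L.headD false) := by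
        rcases eq_or_ne t' [] with rfl | ht'
        · have : i + 1 = L.length := by simp at hlen ⊢; omega
          rw [this, Nat.mod_self, ← headD_eq_getD]
          simp
        · have hlt : i + 1 < L.length := by
            have := List.length_pos_iff.mpr ht'
            omega
          rw [Nat.mod_eq_of_lt hlt, ← getD_drop_zero L (i+1) hlt, hdrop']
          obtain ⟨y, t'', rfl⟩ := List.exists_cons_of_ne_nil ht'
          simp
      rw [m1, m2, m3, hx]
    simp only [List.length_cons]
    rw [List.range'_succ, List.filterMap_cons, key]
    have tail : List.filterMap (cycF P L) (List.range' (i + 1) t'.length)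
        = lin P (L.getD i false) t' (L.headD false) := by
      have := ih (i + 1) (by omega) (by omega) hdrop'.symm
      simpa using this
    rw [tail, hx, lin_cons]
    by_cases hP : P (L.getD (i - 1) false) x (t'.headD (L.headD false)) = true
    · rw [if_pos hP, if_pos hP]
    · rw [if_neg hP, if_neg hP]

theorem cyc_eq_lin (P : Bool → Bool → Bool → Bool) (l : List Bool) (hl : l ≠ []) :
    cyc P l = lin P (l.getLastD false) l (l.headD false) := by
  obtain ⟨x, t, rfl⟩ := List.exists_cons_of_ne_nil hl
  unfold cyc
  have hN : (x :: t).length = t.length + 1 := by simp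
  rw [List.range_eq_range', hN, List.range'_succ, List.filterMap_cons]
  have key : cycF P (x :: t) 0 = if P ((x :: t).getLastD false) x (t.headD x)
      then some x else none := by
    unfold cycF
    have m1 : 0 % (x :: t).length = 0 := Nat.zero_mod _
    have m2 : (0 + (x :: t).length - 1) % (x :: t).length = (x :: t).length - 1 := by
      rw [Nat.zero_add, Nat.mod_eq_of_lt (by simp)]
    have m3 : (x :: t).getD ((0 + 1) % (x :: t).length) false = t.headD x := by
      rcases eq_or_ne t [] with rfl | ht'
      · simp
      · have hlt : 0 + 1 < (x :: t).length := by
          have := List.length_pos_iff.mpr ht'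
          simp only [List.length_cons]
          omega
        rw [Nat.mod_eq_of_lt hlt]
        obtain ⟨y, t'', rfl⟩ := List.exists_cons_of_ne_nil ht'
        simp
    rw [m1, m2, m3, getD_length_sub_one _ _ (by simp)]
    simp
  have tail : List.filterMap (cycF P (x :: t)) (List.range' (0 + 1) t.length)
      = lin P x t ((x :: t).headD false) := by
    rcases eq_or_ne t [] with rfl | ht'
    · simp
    · have := cyc_suffix P (x :: t) t 1 (by omega) (by simp only [List.length_cons]; omega) (by simp)
      simpa using this
  have hh : (x :: t).headD false = x := by simp
  rw [key, tail, hh, lin_cons]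
  by_cases hP : P ((x :: t).getLastD false) x (t.headD x) = true
  · rw [if_pos hP, if_pos hP]
  · rw [if_neg hP, if_neg hP]

theorem getLastD_default (l : List Bool) (hl : l ≠ []) (d d' : Bool) :
    l.getLastD d = l.getLastD d' := by
  obtain ⟨y, u, rfl⟩ := List.exists_cons_of_ne_nil hl
  simp only [List.getLastD_cons]

theorem headD_default (l : List Bool) (hl : l ≠ []) (d d' : Bool) :
    l.headD d = l.headD d' := by
  obtain ⟨y, u, rfl⟩ := List.exists_cons_of_ne_nil hl
  simp

theorem headD_append (u v : List Bool) (q : Bool) :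
    (u ++ v).headD q = u.headD (v.headD q) := by
  cases u <;> simp

theorem getLastD_append (u v : List Bool) (hv : v ≠ []) (d : Bool) :
    (u ++ v).getLastD d = v.getLastD d := by
  induction u with
  | nil => simp
  | cons x u' ih =>
    rw [List.cons_append, List.getLastD_cons]
    rcases eq_or_ne u' [] with rfl | hu
    · simp only [List.nil_append]
      exact getLastD_default v hv x d
    · rw [getLastD_default (u' ++ v) (by simp [hv]) x d, ih]

theorem lin_append (P : Bool → Bool → Bool → Bool) (u v : List Bool) (p q : Bool) :
    lin P p (u ++ v) q = lin P p u (v.headD q) ++ lin P (u.getLastD p) v q := by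
  induction u generalizing p with
  | nil => simp
  | cons x u' ih =>
    rw [List.cons_append, lin_cons, lin_cons, headD_append, List.getLastD_cons, ih x]
    by_cases hP : P p x (u'.headD (v.headD q)) = true
    · rw [if_pos hP, if_pos hP]
      simp
    · rw [if_neg hP, if_neg hP]

/-! block computations -/

theorem lin10_true (a : ℕ) (p : Bool) :
    lin P10 p (List.replicate a true) false = List.replicate (a - 1) true := by
  induction a generalizing p with
  | zero => simp
  | succ a ih =>
    rw [List.replicate_succ, lin_cons]
    rcases Nat.eq_zero_or_pos a with rfl | ha
    · simp [P10]
    · have hh : (List.replicate a true).headD false = true := by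
        obtain ⟨a', rfl⟩ : ∃ a', a = a' + 1 := ⟨a - 1, by omega⟩
        simp [List.replicate_succ]
      rw [hh]
      have : P10 p true true = true := by cases p <;> rfl
      rw [if_pos this, ih]
      have : a + 1 - 1 = (a - 1) + 1 := by omega
      rw [this, List.replicate_succ]

theorem lin10_false_false (b : ℕ) (q : Bool) :
    lin P10 false (List.replicate b false) q = List.replicate b false := by
  induction b with
  | zero => simp
  | succ b ih =>
    rw [List.replicate_succ, lin_cons]
    have : P10 false false ((List.replicate b false).headD q) = true := by
      cases h : (List.replicate b false).headD q <;> rfl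
    rw [if_pos this, ih]

theorem lin10_true_false (b : ℕ) (q : Bool) :
    lin P10 true (List.replicate b false) q = List.replicate (b - 1) false := by
  rcases Nat.eq_zero_or_pos b with rfl | hb
  · simp
  · obtain ⟨b', rfl⟩ : ∃ b', b = b' + 1 := ⟨b - 1, by omega⟩
    rw [List.replicate_succ, lin_cons]
    have : ¬(P10 true false ((List.replicate b' false).headD q) = true) := by
      cases h : (List.replicate b' false).headD q <;> simp [P10, h]
    rw [if_neg this, lin10_false_false]
    simp

theorem lin01_true_true (a : ℕ) (q : Bool) :
    lin P01 true (List.replicate a true) q = List.replicate a true := by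
  induction a with
  | zero => simp
  | succ a ih =>
    rw [List.replicate_succ, lin_cons]
    have : P01 true true ((List.replicate a true).headD q) = true := by
      cases h : (List.replicate a true).headD q <;> decide
    rw [if_pos this, ih]

theorem lin01_false_true (a : ℕ) (q : Bool) :
    lin P01 false (List.replicate a true) q = List.replicate (a - 1) true := by
  rcases Nat.eq_zero_or_pos a with rfl | ha
  · simp
  · obtain ⟨a', rfl⟩ : ∃ a', a = a' + 1 := ⟨a - 1, by omega⟩
    rw [List.replicate_succ, lin_cons]
    have : ¬(P01 false true ((List.replicate a' true).headD q) = true) := by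
      cases h : (List.replicate a' true).headD q <;> decide
    rw [if_neg this, lin01_true_true]
    simp

theorem lin01_false (b : ℕ) (p : Bool) :
    lin P01 p (List.replicate b false) true = List.replicate (b - 1) false := by
  induction b generalizing p with
  | zero => simp
  | succ b ih =>
    rw [List.replicate_succ, lin_cons]
    rcases Nat.eq_zero_or_pos b with rfl | hb
    · have hv : P01 p false true = false := by cases p <;> decide
      simp [hv]
    · have hh : (List.replicate b false).headD true = false := by
        obtain ⟨b', rfl⟩ : ∃ b', b = b' + 1 := ⟨b - 1, by omega⟩
        simp [List.replicate_succ]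
      rw [hh]
      have : P01 p false false = true := by cases p <;> decide
      rw [if_pos this, ih]
      have : b + 1 - 1 = (b - 1) + 1 := by omega
      rw [this, List.replicate_succ]

theorem getLastD_replicate (n : ℕ) (x d : Bool) (h : 0 < n) :
    (List.replicate n x).getLastD d = x := by
  induction n with
  | zero => omega
  | succ n ih =>
    rw [List.replicate_succ, List.getLastD_cons]
    rcases Nat.eq_zero_or_pos n with rfl | hn
    · simp
    · rw [getLastD_default _ (by simp; omega) x d, ih hn]

theorem headD_dropWhile_not (p : Bool → Bool) :
    ∀ (l : List Bool) (h : l.dropWhile p ≠ []) (d : Bool),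
      p ((l.dropWhile p).headD d) = false := by
  intro l
  induction l with
  | nil => intro h d; simp at h
  | cons x t ih =>
    intro h d
    by_cases hp : p x = true
    · rw [List.dropWhile_cons, if_pos hp] at h ⊢
      exact ih h d
    · rw [List.dropWhile_cons, if_neg hp] at h ⊢
      simpa using hp

theorem decomp (l : List Bool) (hne : l ≠ []) (hh : l.headD false = true)
    (hl : l.getLastD false = false) :
    ∃ a b rest, 0 < a ∧ 0 < b ∧
      l = List.replicate a true ++ (List.replicate b false ++ rest) ∧
      (rest = [] ∨ (rest ≠ [] ∧ rest.headD false = true ∧ rest.getLastD false = false)) := by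
  have hsplit1 : l.takeWhile (fun x => x) ++ l.dropWhile (fun x => x) = l :=
    List.takeWhile_append_dropWhile
  have ht1rep : l.takeWhile (fun x => x)
      = List.replicate (l.takeWhile (fun x => x)).length true :=
    List.eq_replicate_iff.mpr ⟨rfl, fun b hb => List.mem_takeWhile_imp hb⟩
  have ht1ne : l.takeWhile (fun x => x) ≠ [] := by
    obtain ⟨x, t, rfl⟩ := List.exists_cons_of_ne_nil hne
    have hx : x = true := by simpa using hh
    subst hx
    simp [List.takeWhile_cons]
  have hd1ne : l.dropWhile (fun x => x) ≠ [] := by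
    intro h
    rw [h, List.append_nil] at hsplit1
    rw [← hsplit1, ht1rep,
      getLastD_replicate _ _ _ (List.length_pos_iff.mpr ht1ne)] at hl
    exact absurd hl (by simp)
  have hd1h : (l.dropWhile (fun x => x)).headD false = false := by
    have := headD_dropWhile_not (fun x => x) l hd1ne false
    simpa using this
  have hsplit2 : (l.dropWhile (fun x => x)).takeWhile (fun x => !x)
      ++ (l.dropWhile (fun x => x)).dropWhile (fun x => !x) = l.dropWhile (fun x => x) :=
    List.takeWhile_append_dropWhile
  have ht2rep : (l.dropWhile (fun x => x)).takeWhile (fun x => !x)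
      = List.replicate ((l.dropWhile (fun x => x)).takeWhile (fun x => !x)).length false := by
    refine List.eq_replicate_iff.mpr ⟨rfl, fun b hb => ?_⟩
    have := List.mem_takeWhile_imp hb
    simpa using this
  have ht2ne : (l.dropWhile (fun x => x)).takeWhile (fun x => !x) ≠ [] := by
    obtain ⟨y, d', hyd⟩ := List.exists_cons_of_ne_nil hd1ne
    have hy : y = false := by
      rw [hyd] at hd1h
      simpa using hd1h
    subst hy
    rw [hyd]
    simp [List.takeWhile_cons]
  refine ⟨(l.takeWhile (fun x => x)).length,
    ((l.dropWhile (fun x => x)).takeWhile (fun x => !x)).length,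
    (l.dropWhile (fun x => x)).dropWhile (fun x => !x),
    List.length_pos_iff.mpr ht1ne, List.length_pos_iff.mpr ht2ne, ?_, ?_⟩
  · rw [← ht1rep, ← ht2rep, hsplit2, hsplit1]
  · rcases eq_or_ne ((l.dropWhile (fun x => x)).dropWhile (fun x => !x)) [] with h | h
    · exact Or.inl h
    · refine Or.inr ⟨h, ?_, ?_⟩
      · have := headD_dropWhile_not (fun x => !x) (l.dropWhile (fun x => x)) h false
        simpa using this
      · have heq : l = (l.takeWhile (fun x => x)
            ++ (l.dropWhile (fun x => x)).takeWhile (fun x => !x))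
            ++ (l.dropWhile (fun x => x)).dropWhile (fun x => !x) := by
          rw [List.append_assoc, hsplit2, hsplit1]
        rw [heq, getLastD_append _ _ h] at hl
        exact hl

theorem H01_eq_H10_aux : ∀ (n : ℕ) (l : List Bool), l.length ≤ n → l ≠ [] →
    l.headD false = true → l.getLastD false = false → cyc P01 l = cyc P10 l := by
  intro n
  induction n with
  | zero =>
    intro l hlen hne _ _
    exact absurd (List.length_eq_zero_iff.mp (by omega)) hne
  | succ n ih =>
    intro l hlen hne hh hl
    obtain ⟨a, b, rest, ha, hb, hdec, hrest⟩ := decomp l hne hh hl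
    have hrlen : rest.length + 2 ≤ l.length := by
      rw [hdec]
      simp only [List.length_append, List.length_replicate]
      omega
    have e1 : (List.replicate b false ++ rest).headD true = false := by
      obtain ⟨b', rfl⟩ : ∃ b', b = b' + 1 := ⟨b - 1, by omega⟩
      rw [List.replicate_succ]
      simp
    have e2 : (List.replicate a true).getLastD false = true :=
      getLastD_replicate _ _ _ ha
    have e3 : rest.headD true = true := by
      rcases hrest with rfl | ⟨hrne, hrh, _⟩
      · rfl
      · rw [headD_default rest hrne true false, hrh]
    have e4 : (List.replicate b false).getLastD true = false :=
      getLastD_replicate _ _ _ hb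
    have compute : ∀ P : Bool → Bool → Bool → Bool,
        cyc P l = lin P false (List.replicate a true) false
          ++ (lin P true (List.replicate b false) true ++ lin P false rest true) := by
      intro P
      rw [cyc_eq_lin P l hne, hh, hl, hdec, lin_append, lin_append, e1, e2, e3, e4]
    rw [compute P01, compute P10, lin10_true, lin10_true_false,
      lin01_false_true, lin01_false]
    congr 2
    rcases hrest with rfl | ⟨hrne, hrh, hrl⟩
    · rfl
    · have t01 : lin P01 false rest true = cyc P01 rest := by
        rw [cyc_eq_lin P01 rest hrne, hrh, hrl]
      have t10 : lin P10 false rest true = cyc P10 rest := by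
        rw [cyc_eq_lin P10 rest hrne, hrh, hrl]
      rw [t01, t10, ih rest (by omega) hrne hrh hrl]

theorem H01_eq_H10 (l : List Bool) (hne : l ≠ []) (hh : l.headD false = true)
    (hl : l.getLastD false = false) : cyc P01 l = cyc P10 l :=
  H01_eq_H10_aux l.length l le_rfl hne hh hl

/-! counting: descents = ascents -/

def Qd (a b c : Bool) : Bool := b && !c
def Qa (a b c : Bool) : Bool := b && !a

theorem length_cyc_countP (P : Bool → Bool → Bool → Bool) (l : List Bool) :
    (cyc P l).length = (List.range l.length).countP (fun n =>
      P (l.getD ((n + l.length - 1) % l.length) false) (l.getD (n % l.length) false)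
        (l.getD ((n + 1) % l.length) false)) := by
  unfold cyc cycF
  rw [filterMap_ite, List.length_map, List.countP_eq_length_filter]

theorem countP_shift (N m : ℕ) (A : ℕ → Bool) :
    (List.range N).countP (fun n => A ((n + m) % N)) = (List.range N).countP A := by
  have h : (fun n => A ((n + m) % N)) = A ∘ (fun n => (n + m) % N) := rfl
  rw [h, ← List.countP_map, map_mod_rotate]
  exact (List.rotate_perm _ _).countP_eq _

theorem desc_eq_asc (l : List Bool) : (cyc Qd l).length = (cyc Qa l).length := by
  rcases Nat.eq_zero_or_pos l.length with h0 | hN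
  · rw [List.length_eq_zero_iff.mp h0]
    rfl
  rw [length_cyc_countP, length_cyc_countP]
  set N := l.length with hNdef
  set g : ℕ → Bool := fun k => l.getD (k % N) false with hg
  have hmm : ∀ x : ℕ, x % N % N = x % N := fun x => Nat.mod_mod_of_dvd _ dvd_rfl
  have congL : (List.range N).countP (fun n =>
      Qd (l.getD ((n + N - 1) % N) false) (l.getD (n % N) false) (l.getD ((n + 1) % N) false))
      = (List.range N).countP (fun n => g n && !g (n + 1)) := by
    apply List.countP_congr
    intro n hn
    simp only [Qd, hg, hmm]
  have congR : (List.range N).countP (fun n =>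
      Qa (l.getD ((n + N - 1) % N) false) (l.getD (n % N) false) (l.getD ((n + 1) % N) false))
      = (List.range N).countP (fun n => (fun k => g (k + 1) && !g k) ((n + (N - 1)) % N)) := by
    apply List.countP_congr
    intro n hn
    have e1 : n + N - 1 = n + (N - 1) := by omega
    have e2 : l.getD (((n + (N - 1)) % N + 1) % N) false = l.getD (n % N) false := by
      rw [Nat.mod_add_mod, show n + (N - 1) + 1 = n + N by omega, Nat.add_mod_right]
    simp only [Qa, hg, e1, e2, hmm]
  rw [congL, congR, countP_shift N (N - 1) (fun k => g (k + 1) && !g k)]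
  have c1 := countP_split g (fun n => g (n + 1)) (List.range N)
  have c2 := countP_split (fun n => g (n + 1)) g (List.range N)
  have c2' : (List.range N).countP (fun n => g (n + 1) && g n)
      = (List.range N).countP (fun n => g n && g (n + 1)) := by
    apply List.countP_congr
    intro n hn
    rw [Bool.and_comm]
  have c3 : (List.range N).countP (fun n => g (n + 1)) = (List.range N).countP g := by
    have e : (List.range N).countP (fun n => g (n + 1))
        = (List.range N).countP (fun n => g ((n + 1) % N)) := by
      apply List.countP_congr
      intro n hn
      simp only [hg, hmm]
    rw [e, countP_shift]
  rw [c2', c3] at c2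
  have goalL : (List.range N).countP (fun n => g n) = (List.range N).countP g := rfl
  omega

/-! constant lists -/

theorem cyc_replicate (P : Bool → Bool → Bool → Bool) (v : Bool) (N : ℕ)
    (h : P v v v = true) : cyc P (List.replicate N v) = List.replicate N v := by
  unfold cyc cycF
  rw [List.length_replicate]
  rcases Nat.eq_zero_or_pos N with rfl | hN
  · simp
  have hg : ∀ k, k < N → (List.replicate N v).getD k false = v := fun k hk => by
    rw [List.getD_eq_getElem _ _ (by simpa using hk), List.getElem_replicate]
  have hcong : ∀ n ∈ List.range N,
      (if P ((List.replicate N v).getD ((n + N - 1) % N) false)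
          ((List.replicate N v).getD (n % N) false)
          ((List.replicate N v).getD ((n + 1) % N) false)
        then some ((List.replicate N v).getD n false) else none)
      = (some ∘ fun _ : ℕ => v) n := by
    intro n hn
    have hn' : n < N := List.mem_range.mp hn
    rw [hg _ (Nat.mod_lt _ hN), hg _ (Nat.mod_lt _ hN), hg _ (Nat.mod_lt _ hN), hg _ hn', h]
    rfl
  rw [List.filterMap_congr hcong, List.filterMap_eq_map]
  have : (fun _ : ℕ => v) = Function.const ℕ v := rfl
  rw [this, List.map_const, List.length_range]

/-! nonconstant lists have an ascent -/

theorem exists_ascent (l : List Bool) (ht : true ∈ l) (hf : false ∈ l) :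
    ∃ i, i < l.length ∧ l.getD i false = false ∧ l.getD ((i + 1) % l.length) false = true := by
  by_contra hcon
  push_neg at hcon
  set N := l.length with hNdef
  have step : ∀ i, i < N → l.getD i false = false → l.getD ((i + 1) % N) false = false := by
    intro i hi h0
    have := hcon i hi h0
    cases h : l.getD ((i + 1) % N) false
    · rfl
    · exact absurd h this
  obtain ⟨j, hj, hjv⟩ := List.getElem_of_mem hf
  have hN : 0 < N := by omega
  have all : ∀ m, l.getD ((j + m) % N) false = false := by
    intro m
    induction m with
    | zero => rw [Nat.add_zero, Nat.mod_eq_of_lt hj, List.getD_eq_getElem _ _ hj, hjv]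
    | succ m ih =>
      have := step _ (Nat.mod_lt _ hN) ih
      rwa [Nat.mod_add_mod, show j + m + 1 = j + (m + 1) by omega] at this
  obtain ⟨t, htlt, htv⟩ := List.getElem_of_mem ht
  have := all (N + t - j)
  rw [show j + (N + t - j) = N + t by omega, Nat.add_mod_left, Nat.mod_eq_of_lt htlt,
    List.getD_eq_getElem _ _ htlt, htv] at this
  exact absurd this (by simp)

theorem H01_isRotated_H10 (l : List Bool) : (cyc P01 l).IsRotated (cyc P10 l) := by
  by_cases hT : ∀ x ∈ l, x = true
  · have hrep : l = List.replicate l.length true := List.eq_replicate_iff.mpr ⟨rfl, hT⟩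
    rw [hrep, cyc_replicate P01 true _ (by decide), cyc_replicate P10 true _ (by decide)]
  by_cases hF : ∀ x ∈ l, x = false
  · have hrep : l = List.replicate l.length false := List.eq_replicate_iff.mpr ⟨rfl, hF⟩
    rw [hrep, cyc_replicate P01 false _ (by decide), cyc_replicate P10 false _ (by decide)]
  push_neg at hT hF
  obtain ⟨x, hxl, hxt⟩ := hT
  obtain ⟨y, hyl, hyf⟩ := hF
  have hfmem : false ∈ l := by
    cases x
    · exact hxl
    · exact absurd rfl hxt
  have htmem : true ∈ l := by
    cases y
    · exact absurd rfl hyf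
    · exact hyl
  obtain ⟨i, hi, h0, h1⟩ := exists_ascent l htmem hfmem
  have hN : 0 < l.length := by omega
  set l' := l.rotate (i + 1) with hl'
  have hrot : l.IsRotated l' := ⟨i + 1, rfl⟩
  have hlen' : l'.length = l.length := List.length_rotate _ _
  have hne' : l' ≠ [] := by
    intro h
    rw [h] at hlen'
    simp at hlen'
    omega
  have hh' : l'.headD false = true := by
    rw [headD_eq_getD, hl', getD_rotate l (i + 1) 0 hN, Nat.zero_add]
    exact h1
  have hlast' : l'.getLastD false = false := by
    rw [← getD_length_sub_one l' false hne', hlen', hl',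
      getD_rotate l (i + 1) (l.length - 1) (by omega),
      show l.length - 1 + (i + 1) = l.length + i by omega, Nat.add_mod_left,
      Nat.mod_eq_of_lt hi]
    exact h0
  have h1 := cyc_isRotated P01 hrot
  rw [H01_eq_H10 l' hne' hh' hlast'] at h1
  exact h1.trans (cyc_isRotated P10 hrot.symm)

/-! tying to bbs definitions -/

theorem bbsF1_eq (l : List Bool) : bbsF1 l = (cyc Qd l).length := by
  unfold bbsF1
  rcases Nat.eq_zero_or_pos l.length with h0 | hN
  · rw [List.length_eq_zero_iff.mp h0]
    rfl
  have hzip : l.zip (l.rotate 1) = (List.range l.length).map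
      (fun n => (l.getD n false, l.getD ((n + 1) % l.length) false)) := by
    apply List.ext_getElem
    · simp
    · intro i h1 h2
      have hiN : i < l.length := by
        simpa using h2
      simp only [List.getElem_zip, List.getElem_map, List.getElem_range, List.getElem_rotate]
      rw [List.getD_eq_getElem _ _ hiN, List.getD_eq_getElem _ _ (Nat.mod_lt _ hN)]
  rw [hzip, List.filter_map, List.length_map, ← List.countP_eq_length_filter,
    length_cyc_countP]
  apply List.countP_congr
  intro n hn
  have hn' : n < l.length := List.mem_range.mp hn
  simp only [Function.comp, Qd, Nat.mod_eq_of_lt hn']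

theorem bbsF1_isRotated {l l' : List Bool} (h : l.IsRotated l') : bbsF1 l = bbsF1 l' := by
  rw [bbsF1_eq, bbsF1_eq]
  exact (cyc_isRotated Qd h).perm.length_eq

theorem bbsF1_reverse (l : List Bool) : bbsF1 l.reverse = bbsF1 l := by
  rw [bbsF1_eq, bbsF1_eq, cyc_reverse]
  have h : (fun a b c => Qd c b a) = Qa := rfl
  rw [h, List.length_reverse]
  exact (desc_eq_asc l).symm

theorem bbsH_reverse (l : List Bool) : bbsH l.reverse = (cyc P01 l).reverse := by
  rw [bbsH_eq_cyc, cyc_reverse]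
  rfl

theorem bbsH_isRotated {l l' : List Bool} (h : l.IsRotated l') :
    (bbsH l).IsRotated (bbsH l') := by
  rw [bbsH_eq_cyc, bbsH_eq_cyc]
  exact cyc_isRotated P10 h

theorem iter_rev (k : ℕ) (l : List Bool) :
    (bbsH^[k] l.reverse).IsRotated ((bbsH^[k] l).reverse) := by
  induction k with
  | zero => rfl
  | succ k ih =>
    rw [Function.iterate_succ_apply', Function.iterate_succ_apply']
    have h1 : (bbsH (bbsH^[k] l.reverse)).IsRotated (bbsH ((bbsH^[k] l).reverse)) :=
      bbsH_isRotated ih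
    rw [bbsH_reverse] at h1
    have h2 : ((cyc P01 (bbsH^[k] l)).reverse).IsRotated ((bbsH (bbsH^[k] l)).reverse) := by
      rw [bbsH_eq_cyc]
      exact (H01_isRotated_H10 _).reverse
    exact h1.trans h2

end BBS


/-- Each conserved quantity `f_k` is invariant under reversal. -/
theorem stmt_7 (l : List Bool) (k : ℕ) : bbsF k l = bbsF k l.reverse := by
  cases k with
  | zero =>
    show l.count true = l.reverse.count true
    exact List.count_reverse.symm
  | succ k =>
    show bbsF1 (bbsH^[k] l) = bbsF1 (bbsH^[k] l.reverse)
    rw [BBS.bbsF1_isRotated (BBS.iter_rev k l), BBS.bbsF1_reverse]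
end

section
/- Let p > 1/2 and let η^N be the sequence of i.i.d. Bernoulli(p) variables (η_1,…,η_N) conditioned on S_N > 0 (S_N = Σ_{n=1}^N(1−2η_n)). Then for each fixed M and x ∈ {0,1}^M, P((η^N_n)_{n=1}^M = x) → 2^{−M} as N → ∞; i.e., the conditioned configuration converges in distribution to an i.i.d. Bernoulli(1/2) sequence regardless of p. -/
open MeasureTheory ProbabilityTheory Filter

lemma choose_low : ∀ (M j n k a : ℕ), j ≤ M → a + M ≤ k → k + M + a ≤ n →
    n.choose k * a ^ M ≤ (n - M).choose (k - j) * n ^ M := by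
  intro M
  induction M with
  | zero =>
    intro j n k a hj _ _
    interval_cases j
    simp
  | succ M ih =>
    intro j n k a hj hak hkn
    obtain ⟨m, rfl⟩ : ∃ m, n = m + 1 := ⟨n - 1, by omega⟩
    cases j with
    | zero =>
      calc (m+1).choose k * a ^ (M+1)
          = ((m+1).choose k * (a ^ M)) * a := by ring
        _ ≤ ((m+1).choose k * (a ^ M)) * (m + 1 - k) := by
            exact Nat.mul_le_mul_left _ (by omega)
        _ = ((m+1).choose k * (m + 1 - k)) * a ^ M := by ring
        _ = (m.choose k * (m+1)) * a ^ M := by rw [← Nat.choose_mul_succ_eq]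
        _ = (m.choose k * a ^ M) * (m+1) := by ring
        _ ≤ ((m - M).choose (k - 0) * m ^ M) * (m+1) := by
            exact Nat.mul_le_mul_right _ (ih 0 m k a (by omega) (by omega) (by omega))
        _ ≤ ((m - M).choose (k - 0) * (m+1) ^ M) * (m+1) := by
            have := Nat.pow_le_pow_left (show m ≤ m + 1 by omega) M
            exact Nat.mul_le_mul_right _ (Nat.mul_le_mul_left _ this)
        _ = (m + 1 - (M+1)).choose (k - 0) * (m+1) ^ (M+1) := by
            rw [show m + 1 - (M+1) = m - M by omega]; ring
    | succ j' =>
      obtain ⟨k', rfl⟩ : ∃ k', k = k' + 1 := ⟨k - 1, by omega⟩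
      calc (m+1).choose (k'+1) * a ^ (M+1)
          = ((m+1).choose (k'+1) * (a ^ M)) * a := by ring
        _ ≤ ((m+1).choose (k'+1) * (a ^ M)) * (k' + 1) := by
            exact Nat.mul_le_mul_left _ (by omega)
        _ = ((m+1) * m.choose k') * a ^ M := by
            have hid : (m + 1) * m.choose k' = (m+1).choose (k'+1) * (k'+1) :=
              Nat.add_one_mul_choose_eq m k'
            rw [hid]; ring
        _ = (m.choose k' * a ^ M) * (m+1) := by ring
        _ ≤ ((m - M).choose (k' - j') * m ^ M) * (m+1) := by
            exact Nat.mul_le_mul_right _ (ih j' m k' a (by omega) (by omega) (by omega))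
        _ ≤ ((m - M).choose (k' - j') * (m+1) ^ M) * (m+1) := by
            have := Nat.pow_le_pow_left (show m ≤ m + 1 by omega) M
            exact Nat.mul_le_mul_right _ (Nat.mul_le_mul_left _ this)
        _ = (m + 1 - (M+1)).choose (k' + 1 - (j'+1)) * (m+1) ^ (M+1) := by
            rw [show m + 1 - (M+1) = m - M by omega, show k' + 1 - (j'+1) = k' - j' by omega]
            ring

lemma choose_up : ∀ (M j n k b : ℕ), j ≤ M → M ≤ k → k ≤ b → n ≤ k + b → M + k ≤ n →
    (n - M).choose (k - j) * (n - M) ^ M ≤ n.choose k * b ^ M := by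
  intro M
  induction M with
  | zero =>
    intro j n k b hj _ _ _ _
    interval_cases j
    simp
  | succ M ih =>
    intro j n k b hj hMk hkb hnb hMn
    obtain ⟨m, rfl⟩ : ∃ m, n = m + 1 := ⟨n - 1, by omega⟩
    cases j with
    | zero =>
      calc (m + 1 - (M+1)).choose (k - 0) * (m + 1 - (M+1)) ^ (M+1)
          = ((m - M).choose (k - 0) * (m - M) ^ M) * (m + 1 - (M + 1)) := by
            rw [show m + 1 - (M+1) = m - M by omega]; ring
        _ ≤ (m.choose k * b ^ M) * (m + 1 - (M+1)) := by
            exact Nat.mul_le_mul_right _ (ih 0 m k b (by omega) (by omega) (by omega) (by omega) (by omega))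
        _ ≤ (m.choose k * b ^ M) * (m + 1) := by exact Nat.mul_le_mul_left _ (by omega)
        _ = (m.choose k * (m + 1)) * b ^ M := by ring
        _ = ((m+1).choose k * (m + 1 - k)) * b ^ M := by rw [Nat.choose_mul_succ_eq]
        _ ≤ ((m+1).choose k * b) * b ^ M := by
            exact Nat.mul_le_mul_right _ (Nat.mul_le_mul_left _ (by omega))
        _ = (m+1).choose k * b ^ (M+1) := by ring
    | succ j' =>
      obtain ⟨k', rfl⟩ : ∃ k', k = k' + 1 := ⟨k - 1, by omega⟩
      calc (m + 1 - (M+1)).choose (k' + 1 - (j'+1)) * (m + 1 - (M+1)) ^ (M+1)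
          = ((m - M).choose (k' - j') * (m - M) ^ M) * (m + 1 - (M+1)) := by
            rw [show m + 1 - (M+1) = m - M by omega, show k' + 1 - (j'+1) = k' - j' by omega]
            ring
        _ ≤ (m.choose k' * b ^ M) * (m + 1 - (M+1)) := by
            exact Nat.mul_le_mul_right _ (ih j' m k' b (by omega) (by omega) (by omega) (by omega) (by omega))
        _ ≤ (m.choose k' * b ^ M) * (m + 1) := by exact Nat.mul_le_mul_left _ (by omega)
        _ = ((m+1) * m.choose k') * b ^ M := by ring
        _ = ((m+1).choose (k'+1) * (k'+1)) * b ^ M := by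
            have hid : (m + 1) * m.choose k' = (m+1).choose (k'+1) * (k'+1) :=
              Nat.add_one_mul_choose_eq m k'
            rw [hid]
        _ ≤ ((m+1).choose (k'+1) * b) * b ^ M := by
            exact Nat.mul_le_mul_right _ (Nat.mul_le_mul_left _ (by omega))
        _ = (m+1).choose (k'+1) * b ^ (M+1) := by ring

/-- number of `true`s of a configuration -/
def Tcard {N : ℕ} (y : Fin N → Bool) : ℕ := (Finset.univ.filter (fun i => y i = true)).card

lemma card_filter_fin (N : ℕ) (Q : ℕ → Prop) [DecidablePred Q] :
    (Finset.univ.filter (fun i : Fin N => Q i.val)).card = ((Finset.range N).filter Q).card := by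
  have h : (Finset.univ.filter (fun i : Fin N => Q i.val)).image Fin.val
      = (Finset.range N).filter Q := by
    ext n
    simp only [Finset.mem_image, Finset.mem_filter, Finset.mem_univ, true_and, Finset.mem_range]
    constructor
    · rintro ⟨i, hQ, rfl⟩; exact ⟨i.isLt, hQ⟩
    · rintro ⟨hn, hQ⟩; exact ⟨⟨n, hn⟩, hQ, rfl⟩
  rw [← h, Finset.card_image_of_injective _ Fin.val_injective]

lemma Tcard_le {N : ℕ} (y : Fin N → Bool) : Tcard y ≤ N := by
  have := Finset.card_filter_le (Finset.univ : Finset (Fin N)) (fun i => y i = true)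
  simpa [Tcard] using this

lemma card_T_eq (N k : ℕ) :
    (Finset.univ.filter (fun y : Fin N → Bool => Tcard y = k)).card = N.choose k := by
  classical
  have h2 : ((Finset.univ : Finset (Fin N)).powersetCard k).card = N.choose k := by
    rw [Finset.card_powersetCard, Finset.card_univ, Fintype.card_fin]
  rw [← h2]
  refine Finset.card_bij' (fun y _ => Finset.univ.filter (fun i => y i = true))
    (fun s _ => fun i => decide (i ∈ s)) ?hi ?hj ?li ?ri
  case hi =>
    intro y hy
    simp only [Finset.mem_filter, Finset.mem_univ, true_and] at hy
    simp [Finset.mem_powersetCard, ← hy, Tcard]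
  case hj =>
    intro s hs
    simp only [Finset.mem_powersetCard] at hs
    simp only [Finset.mem_filter, Finset.mem_univ, true_and]
    unfold Tcard
    rw [← hs.2]
    congr 1
    ext i
    simp
  case li =>
    intro y hy
    funext i
    simp
  case ri =>
    intro s hs
    ext i
    simp

lemma prefix_split (N M : ℕ) (hMN : M ≤ N) (x : ℕ → Bool) (y : Fin N → Bool)
    (hpre : ∀ i : Fin N, i.val < M → y i = x i.val) :
    Tcard y = ((Finset.range M).filter (fun n => x n = true)).card
      + (Finset.univ.filter (fun i : Fin N => y i = true ∧ ¬ i.val < M)).card := by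
  classical
  have hsplit := Finset.card_filter_add_card_filter_not
    (s := Finset.univ.filter (fun i : Fin N => y i = true)) (p := fun i => i.val < M)
  rw [Finset.filter_filter, Finset.filter_filter] at hsplit
  have hlow : (Finset.univ.filter (fun i : Fin N => y i = true ∧ i.val < M)).card
      = ((Finset.range M).filter (fun n => x n = true)).card := by
    have hcongr : Finset.univ.filter (fun i : Fin N => y i = true ∧ i.val < M)
        = Finset.univ.filter (fun i : Fin N => x i.val = true ∧ i.val < M) := by
      apply Finset.filter_congr
      intro i _
      constructor
      · rintro ⟨h1, h2⟩; exact ⟨(hpre i h2) ▸ h1, h2⟩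
      · rintro ⟨h1, h2⟩; exact ⟨(hpre i h2).symm ▸ h1, h2⟩
    rw [hcongr, card_filter_fin N (fun n => x n = true ∧ n < M)]
    congr 1
    ext n
    simp only [Finset.mem_filter, Finset.mem_range]
    constructor
    · rintro ⟨_, h1, h2⟩; exact ⟨h2, h1⟩
    · rintro ⟨h1, h2⟩; exact ⟨lt_of_lt_of_le h1 hMN, h2, h1⟩
  rw [← hlow]
  unfold Tcard
  omega

lemma card_prefix_T_eq (N M k : ℕ) (hMN : M ≤ N) (x : ℕ → Bool)
    (hjk : ((Finset.range M).filter (fun n => x n = true)).card ≤ k) :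
    (Finset.univ.filter (fun y : Fin N → Bool =>
        (∀ i : Fin N, i.val < M → y i = x i.val) ∧ Tcard y = k)).card
      = (N - M).choose (k - ((Finset.range M).filter (fun n => x n = true)).card) := by
  classical
  set j := ((Finset.range M).filter (fun n => x n = true)).card with hj
  set H := Finset.univ.filter (fun i : Fin N => ¬ i.val < M) with hH
  have hHcard : H.card = N - M := by
    rw [hH, card_filter_fin N (fun n => ¬ n < M)]
    have : (Finset.range N).filter (fun n => ¬ n < M) = Finset.Ico M N := by
      ext n
      simp only [Finset.mem_filter, Finset.mem_range, Finset.mem_Ico]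
      omega
    rw [this, Nat.card_Ico]
  have hpc : (H.powersetCard (k - j)).card = (N - M).choose (k - j) := by
    rw [Finset.card_powersetCard, hHcard]
  rw [← hpc]
  refine Finset.card_bij' (fun y _ => Finset.univ.filter (fun i : Fin N => y i = true ∧ ¬ i.val < M))
    (fun t _ => fun i : Fin N => if i.val < M then x i.val else decide (i ∈ t)) ?hi ?hj ?li ?ri
  case hi =>
    intro y hy
    beta_reduce
    simp only [Finset.mem_filter, Finset.mem_univ, true_and] at hy
    rw [Finset.mem_powersetCard]
    constructor
    · intro i hi
      simp only [Finset.mem_filter, Finset.mem_univ, true_and] at hi ⊢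
      rw [hH]
      simp only [Finset.mem_filter, Finset.mem_univ, true_and]
      exact hi.2
    · have := prefix_split N M hMN x y hy.1
      rw [hy.2] at this
      omega
  case hj =>
    intro t ht
    rw [Finset.mem_powersetCard] at ht
    simp only [Finset.mem_filter, Finset.mem_univ, true_and]
    have hpre : ∀ i : Fin N, i.val < M →
        (if i.val < M then x i.val else decide (i ∈ t)) = x i.val := by
      intro i hi; rw [if_pos hi]
    refine ⟨hpre, ?_⟩
    beta_reduce
    rw [prefix_split N M hMN x _ hpre]
    have hhigh : Finset.univ.filter (fun i : Fin N =>
        (if i.val < M then x i.val else decide (i ∈ t)) = true ∧ ¬ i.val < M) = t := by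
      ext i
      simp only [Finset.mem_filter, Finset.mem_univ, true_and]
      constructor
      · rintro ⟨h1, h2⟩
        rw [if_neg h2] at h1
        exact of_decide_eq_true h1
      · intro hit
        have hiH := ht.1 hit
        rw [hH] at hiH
        simp only [Finset.mem_filter, Finset.mem_univ, true_and] at hiH
        exact ⟨by rw [if_neg hiH]; exact decide_eq_true hit, hiH⟩
    rw [hhigh, ht.2]
    omega
  case li =>
    intro y hy
    simp only [Finset.mem_filter, Finset.mem_univ, true_and] at hy
    funext i
    by_cases hi : i.val < M
    · rw [if_pos hi]; exact (hy.1 i hi).symm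
    · rw [if_neg hi]
      by_cases hyi : y i = true
      · simp only [hyi]
        simp only [decide_eq_true_eq, Finset.mem_filter, Finset.mem_univ, true_and]
        exact ⟨hyi, hi⟩
      · simp only [Finset.mem_filter, Finset.mem_univ, true_and]
        simp [hyi, hi]
  case ri =>
    intro t ht
    rw [Finset.mem_powersetCard] at ht
    ext i
    simp only [Finset.mem_filter, Finset.mem_univ, true_and]
    constructor
    · rintro ⟨h1, h2⟩
      rw [if_neg h2] at h1
      exact of_decide_eq_true h1
    · intro hit
      have hiH := ht.1 hit
      rw [hH] at hiH
      simp only [Finset.mem_filter, Finset.mem_univ, true_and] at hiH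
      exact ⟨by rw [if_neg hiH]; exact decide_eq_true hit, hiH⟩

open Filter

lemma tendsto_ratio (a b : ℝ) :
    Tendsto (fun n : ℕ => ((n:ℝ) + a) / (2 * ((n:ℝ) + b))) atTop (nhds (1/2)) := by
  have h1 : Tendsto (fun n : ℕ => (1 + a/(n:ℝ)) / (2 * (1 + b/(n:ℝ)))) atTop
      (nhds ((1+0) / (2 * (1+0)))) := by
    apply Tendsto.div
    · exact tendsto_const_nhds.add (tendsto_const_div_atTop_nhds_zero_nat a)
    · exact ((tendsto_const_nhds.add (tendsto_const_div_atTop_nhds_zero_nat b)).const_mul 2)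
    · norm_num
  rw [show ((1:ℝ)+0) / (2 * (1+0)) = 1/2 by norm_num] at h1
  apply h1.congr'
  filter_upwards [eventually_gt_atTop (⌈|b|⌉₊ + 1)] with n hn
  have hb : |b| < (n:ℝ) := by
    have h2 : (⌈|b|⌉₊ : ℝ) + 1 ≤ (n : ℝ) := by exact_mod_cast hn.le
    have := Nat.le_ceil |b|
    linarith
  have hn0 : (0:ℝ) < (n:ℝ) := lt_of_le_of_lt (abs_nonneg b) hb
  have hnb : (0:ℝ) < (n:ℝ) + b := by
    have := neg_abs_le b
    linarith
  field_simp

lemma tendsto_lo (C : ℕ) :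
    Tendsto (fun N : ℕ => ((N/2 - C : ℕ) : ℝ) / (N : ℝ)) atTop (nhds (1/2)) := by
  apply tendsto_of_tendsto_of_tendsto_of_le_of_le' (tendsto_ratio (-(2*(C:ℝ)+2)) 0)
    (tendsto_const_nhds (x := (1/2 : ℝ)) (f := (atTop : Filter ℕ)))
  · filter_upwards [eventually_ge_atTop 1] with N hN
    have hN0 : (0:ℝ) < (N:ℝ) := by exact_mod_cast hN
    have key : N ≤ 2*(N/2 - C) + 2*C + 2 := by omega
    have hcast : (N:ℝ) ≤ 2*((N/2 - C : ℕ):ℝ) + 2*C + 2 := by exact_mod_cast key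
    rw [div_le_div_iff₀ (by positivity) hN0]
    nlinarith [Nat.cast_nonneg (α := ℝ) (N/2 - C)]
  · filter_upwards [eventually_ge_atTop 1] with N hN
    have hN0 : (0:ℝ) < (N:ℝ) := by exact_mod_cast hN
    have key : 2*(N/2 - C) ≤ N := by omega
    have hcast : 2*((N/2 - C : ℕ):ℝ) ≤ (N:ℝ) := by exact_mod_cast key
    rw [div_le_div_iff₀ hN0 (by norm_num : (0:ℝ) < 2)]
    linarith

lemma tendsto_hi (C M : ℕ) :
    Tendsto (fun N : ℕ => ((N/2 + C : ℕ) : ℝ) / ((N - M : ℕ) : ℝ)) atTop (nhds (1/2)) := by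
  apply tendsto_of_tendsto_of_tendsto_of_le_of_le' (tendsto_ratio (-2) (-(M:ℝ)))
    (tendsto_ratio (2*(C:ℝ)+2) (-(M:ℝ)))
  · filter_upwards [eventually_ge_atTop (M + 2)] with N hN
    have hcastNM : ((N - M : ℕ) : ℝ) = (N:ℝ) - (M:ℝ) := by
      have : M ≤ N := by omega
      exact Nat.cast_sub this
    have hpos : (0:ℝ) < (N:ℝ) - (M:ℝ) := by
      have : (M:ℝ) + 2 ≤ (N:ℝ) := by exact_mod_cast hN
      linarith
    have key : N ≤ 2*(N/2 + C) + 2 := by omega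
    have hcast : (N:ℝ) ≤ 2*((N/2 + C : ℕ):ℝ) + 2 := by exact_mod_cast key
    rw [hcastNM, show 2*((N:ℝ) + -(M:ℝ)) = 2*((N:ℝ) - (M:ℝ)) by ring]
    rw [div_le_div_iff₀ (by positivity) hpos]
    nlinarith [Nat.cast_nonneg (α := ℝ) (N/2 + C)]
  · filter_upwards [eventually_ge_atTop (M + 2)] with N hN
    have hcastNM : ((N - M : ℕ) : ℝ) = (N:ℝ) - (M:ℝ) := by
      have : M ≤ N := by omega
      exact Nat.cast_sub this
    have hpos : (0:ℝ) < (N:ℝ) - (M:ℝ) := by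
      have : (M:ℝ) + 2 ≤ (N:ℝ) := by exact_mod_cast hN
      linarith
    have key : 2*(N/2 + C) ≤ N + 2*C + 2 := by omega
    have hcast : 2*((N/2 + C : ℕ):ℝ) ≤ (N:ℝ) + 2*C + 2 := by exact_mod_cast key
    rw [hcastNM, show 2*((N:ℝ) + -(M:ℝ)) = 2*((N:ℝ) - (M:ℝ)) by ring]
    rw [div_le_div_iff₀ hpos (by positivity)]
    nlinarith [Nat.cast_nonneg (α := ℝ) (N/2 + C)]

lemma core (p : ℝ) (hp : 1 / 2 < p) (hp1 : p < 1) (M j : ℕ) (hj : j ≤ M)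
    (cnt : ℕ → ℕ → ℕ)
    (h1 : ∀ N k, cnt N k ≤ N.choose k)
    (h2 : ∀ N k, M ≤ N → j ≤ k → cnt N k = (N - M).choose (k - j)) :
    Tendsto (fun N : ℕ =>
        (∑ k ∈ Finset.range ((N-1)/2 + 1), (cnt N k : ℝ) * p^k * (1-p)^(N-k)) /
        (∑ k ∈ Finset.range ((N-1)/2 + 1), (N.choose k : ℝ) * p^k * (1-p)^(N-k)))
      atTop (nhds ((1/2) ^ M)) := by
  set q : ℝ := 1 - p with hq
  have hp0 : (0:ℝ) < p := by linarith
  have hq0 : (0:ℝ) < q := by rw [hq]; linarith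
  have hqp : q < p := by rw [hq]; linarith
  set r : ℝ := q / p with hr
  have hr0 : (0:ℝ) < r := by positivity
  have hr1 : r < 1 := by rw [hr, div_lt_one hp0]; exact hqp
  rw [Metric.tendsto_atTop]
  intro ε hε
  obtain ⟨L, hL⟩ : ∃ L : ℕ, r ^ L < (1 - r) * (ε / 3) := by
    have h0 : Tendsto (fun L : ℕ => r ^ L) atTop (nhds 0) :=
      tendsto_pow_atTop_nhds_zero_of_lt_one hr0.le hr1
    have hpos : (0:ℝ) < (1 - r) * (ε / 3) := by
      apply mul_pos (by linarith) (by linarith)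
    exact (h0.eventually (eventually_lt_nhds hpos)).exists
  set δ : ℝ := r ^ L / (1 - r) with hδdef
  have hδ0 : 0 ≤ δ := by
    rw [hδdef]
    exact div_nonneg (by positivity) (by linarith)
  have hδ : δ < ε / 3 := by
    rw [hδdef, div_lt_iff₀ (by linarith : (0:ℝ) < 1 - r)]
    linarith [hL]
  set lo : ℕ → ℝ := fun N => ((N/2 - (L + M + 2) : ℕ) : ℝ) / (N : ℝ) with hlo
  set hi : ℕ → ℝ := fun N => ((N/2 + (L + 2) : ℕ) : ℝ) / ((N - M : ℕ) : ℝ) with hhi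
  have hloT : Tendsto (fun N => (lo N) ^ M) atTop (nhds ((1/2:ℝ)^M)) :=
    (tendsto_lo (L + M + 2)).pow M
  have hhiT : Tendsto (fun N => (hi N) ^ M) atTop (nhds ((1/2:ℝ)^M)) :=
    (tendsto_hi (L + 2) M).pow M
  have Ev1 : ∀ᶠ N : ℕ in atTop, (1/2:ℝ)^M - ε/3 < (lo N)^M :=
    hloT.eventually (eventually_gt_nhds (by linarith))
  have Ev2 : ∀ᶠ N : ℕ in atTop, (hi N)^M < (1/2:ℝ)^M + ε/3 :=
    hhiT.eventually (eventually_lt_nhds (by linarith))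
  have Ev3 : ∀ᶠ N : ℕ in atTop, 2*L + 2*M + 2*j + 30 ≤ N := eventually_ge_atTop _
  obtain ⟨N₀, hN₀⟩ := eventually_atTop.mp ((Ev1.and Ev2).and Ev3)
  refine ⟨N₀, fun N hNN₀ => ?_⟩
  obtain ⟨⟨hEv1, hEv2⟩, hEv3⟩ := hN₀ N hNN₀
  set d : ℕ := (N - 1) / 2 with hd
  set b : ℕ → ℝ := fun k => (N.choose k : ℝ) * p^k * q^(N-k) with hb
  set t : ℕ → ℝ := fun k => (cnt N k : ℝ) * p^k * q^(N-k) with ht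
  have hMN : M ≤ N := by omega
  have hdN : d ≤ N := by omega
  have hbnn : ∀ k, 0 ≤ b k := by
    intro k
    rw [hb]
    positivity
  have htnn : ∀ k, 0 ≤ t k := by
    intro k; rw [ht]; positivity
  have htb : ∀ k, t k ≤ b k := by
    intro k
    rw [ht, hb]
    have hcc : (cnt N k : ℝ) ≤ (N.choose k : ℝ) := by exact_mod_cast h1 N k
    have hpq : (0:ℝ) ≤ p^k * q^(N-k) := by positivity
    calc (cnt N k : ℝ) * p^k * q^(N-k) = (cnt N k : ℝ) * (p^k * q^(N-k)) := by ring
      _ ≤ (N.choose k : ℝ) * (p^k * q^(N-k)) := mul_le_mul_of_nonneg_right hcc hpq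
      _ = (N.choose k : ℝ) * p^k * q^(N-k) := by ring
  have hstep : ∀ k, k < d → b k ≤ r * b (k+1) := by
    intro k hk
    have hc : N.choose k ≤ N.choose (k+1) :=
      Nat.choose_le_succ_of_lt_half_left (by omega)
    have e2 : q^(N - k) = q^(N-(k+1)) * q := by
      rw [← pow_succ]
      congr 1
      omega
    have e1 : r * b (k+1) = (N.choose (k+1) : ℝ) * p^k * q^(N-k) := by
      rw [hb, hr, e2]
      field_simp
      ring
    rw [e1, hb]
    have hcc : (N.choose k : ℝ) ≤ (N.choose (k+1) : ℝ) := by exact_mod_cast hc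
    have hpq : (0:ℝ) ≤ p^k * q^(N-k) := by positivity
    calc (N.choose k : ℝ) * p^k * q^(N-k) = (N.choose k : ℝ) * (p^k * q^(N-k)) := by ring
      _ ≤ (N.choose (k+1) : ℝ) * (p^k * q^(N-k)) := mul_le_mul_of_nonneg_right hcc hpq
      _ = (N.choose (k+1) : ℝ) * p^k * q^(N-k) := by ring
  have hgeom : ∀ i, i ≤ d → b (d - i) ≤ r^i * b d := by
    intro i
    induction i with
    | zero => intro _; simp
    | succ i ih =>
      intro hii
      have h1' : b (d - (i+1)) ≤ r * b (d - i) := by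
        have := hstep (d - (i+1)) (by omega)
        rw [show d - (i+1) + 1 = d - i by omega] at this
        exact this
      calc b (d - (i+1)) ≤ r * b (d - i) := h1'
        _ ≤ r * (r^i * b d) := mul_le_mul_of_nonneg_left (ih (by omega)) hr0.le
        _ = r^(i+1) * b d := by ring
  set Den : ℝ := ∑ k ∈ Finset.range (d + 1), b k with hDen
  set Num : ℝ := ∑ k ∈ Finset.range (d + 1), t k with hNum
  have hbdpos : 0 < b d := by
    rw [hb]
    have hcp := Nat.choose_pos hdN
    have : (0:ℝ) < (N.choose d : ℝ) := by exact_mod_cast hcp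
    positivity
  have hDenpos : 0 < Den := by
    rw [hDen]
    have := Finset.single_le_sum (f := b) (fun k _ => hbnn k)
      (Finset.mem_range.mpr (Nat.lt_succ_self d))
    linarith
  have hbdDen : b d ≤ Den := by
    rw [hDen]
    exact Finset.single_le_sum (fun k _ => hbnn k) (Finset.mem_range.mpr (Nat.lt_succ_self d))
  have hTail : ∑ k ∈ Finset.range (d - L), b k ≤ δ * b d := by
    have hsum1 : ∑ k ∈ Finset.range (d - L), b k
        ≤ ∑ k ∈ Finset.range (d - L), r^(d-k) * b d := by
      apply Finset.sum_le_sum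
      intro k hk
      simp only [Finset.mem_range] at hk
      have hg := hgeom (d - k) (by omega)
      rw [show d - (d - k) = k by omega] at hg
      exact hg
    have hsum3 : ∑ k ∈ Finset.range (d - L), r^(d-k)
        = r^(L+1) * ∑ jj ∈ Finset.range (d - L), r^jj := by
      rw [← Finset.sum_range_reflect (fun k => r^(d-k)) (d - L), Finset.mul_sum]
      apply Finset.sum_congr rfl
      intro jj hjj
      simp only [Finset.mem_range] at hjj
      rw [← pow_add]
      congr 1
      omega
    have hsum4 : ∑ jj ∈ Finset.range (d - L), r^jj ≤ 1 / (1-r) := by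
      rw [geom_sum_eq (ne_of_lt hr1)]
      rw [show r^(d-L) - 1 = -(1 - r^(d-L)) by ring, show r - 1 = -(1-r) by ring,
        neg_div_neg_eq]
      have h1r : (0:ℝ) < 1 - r := by linarith
      have hpw : (0:ℝ) ≤ r^(d-L) := by positivity
      rw [div_le_div_iff₀ h1r h1r]
      nlinarith
    have hrL1 : r^(L+1) ≤ r^L := by
      calc r^(L+1) = r^L * r := by ring
        _ ≤ r^L * 1 := by
            apply mul_le_mul_of_nonneg_left hr1.le (by positivity)
        _ = r^L := by ring
    calc ∑ k ∈ Finset.range (d - L), b k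
        ≤ ∑ k ∈ Finset.range (d - L), r^(d-k) * b d := hsum1
      _ = (∑ k ∈ Finset.range (d - L), r^(d-k)) * b d := by rw [Finset.sum_mul]
      _ = (r^(L+1) * ∑ jj ∈ Finset.range (d - L), r^jj) * b d := by rw [hsum3]
      _ ≤ (r^(L+1) * (1/(1-r))) * b d := by
          apply mul_le_mul_of_nonneg_right ?_ hbdpos.le
          exact mul_le_mul_of_nonneg_left hsum4 (by positivity)
      _ ≤ (r^L * (1/(1-r))) * b d := by
          apply mul_le_mul_of_nonneg_right ?_ hbdpos.le
          apply mul_le_mul_of_nonneg_right hrL1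
          have h1r : (0:ℝ) < 1 - r := by linarith
          positivity
      _ = δ * b d := by rw [hδdef]; ring
  set W : Finset ℕ := Finset.Ico (d - L) (d + 1) with hW
  have hsplitD : Den = (∑ k ∈ Finset.range (d - L), b k) + ∑ k ∈ W, b k := by
    rw [hDen, hW, Finset.range_eq_Ico, Finset.range_eq_Ico]
    exact (Finset.sum_Ico_consecutive b (Nat.zero_le (d-L)) (show d - L ≤ d + 1 by omega)).symm
  have hsplitN : Num = (∑ k ∈ Finset.range (d - L), t k) + ∑ k ∈ W, t k := by
    rw [hNum, hW, Finset.range_eq_Ico, Finset.range_eq_Ico]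
    exact (Finset.sum_Ico_consecutive t (Nat.zero_le (d-L)) (show d - L ≤ d + 1 by omega)).symm
  have hNpos : (0:ℝ) < (N:ℝ) := by
    have : 0 < N := by omega
    exact_mod_cast this
  have hwin_lo : ∀ k ∈ W, (lo N)^M * b k ≤ t k := by
    intro k hk
    rw [hW, Finset.mem_Ico] at hk
    have hjk : j ≤ k := by omega
    have hcnt : cnt N k = (N - M).choose (k - j) := h2 N k hMN hjk
    have hklow := choose_low M j N k (N/2 - (L + M + 2)) hj (by omega) (by omega)
    have hcast : (N.choose k : ℝ) * ((N/2 - (L + M + 2) : ℕ):ℝ)^M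
        ≤ ((N-M).choose (k-j) : ℝ) * (N:ℝ)^M := by exact_mod_cast hklow
    have key : (lo N)^M * (N.choose k : ℝ) ≤ ((N-M).choose (k-j) : ℝ) := by
      rw [hlo]
      rw [div_pow, div_mul_eq_mul_div, div_le_iff₀ (by positivity)]
      calc ((N/2 - (L + M + 2) : ℕ):ℝ)^M * (N.choose k : ℝ)
          = (N.choose k : ℝ) * ((N/2 - (L + M + 2) : ℕ):ℝ)^M := by ring
        _ ≤ ((N-M).choose (k-j) : ℝ) * (N:ℝ)^M := hcast
    have hpq : (0:ℝ) ≤ p^k * q^(N-k) := by positivity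
    calc (lo N)^M * b k = ((lo N)^M * (N.choose k : ℝ)) * (p^k * q^(N-k)) := by
          rw [hb]; ring
      _ ≤ ((N-M).choose (k-j) : ℝ) * (p^k * q^(N-k)) := mul_le_mul_of_nonneg_right key hpq
      _ = t k := by simp only [ht]; rw [hcnt]; ring
  have hwin_hi : ∀ k ∈ W, t k ≤ (hi N)^M * b k := by
    intro k hk
    rw [hW, Finset.mem_Ico] at hk
    have hjk : j ≤ k := by omega
    have hcnt : cnt N k = (N - M).choose (k - j) := h2 N k hMN hjk
    have hkup := choose_up M j N k (N/2 + (L + 2)) hj (by omega) (by omega) (by omega) (by omega)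
    have hcast : ((N-M).choose (k-j) : ℝ) * ((N - M : ℕ):ℝ)^M
        ≤ (N.choose k : ℝ) * ((N/2 + (L + 2) : ℕ):ℝ)^M := by exact_mod_cast hkup
    have hNMpos : (0:ℝ) < ((N - M : ℕ):ℝ) := by
      have : 0 < N - M := by omega
      exact_mod_cast this
    have key : ((N-M).choose (k-j) : ℝ) ≤ (hi N)^M * (N.choose k : ℝ) := by
      rw [hhi]
      rw [div_pow, div_mul_eq_mul_div, le_div_iff₀ (by positivity)]
      calc ((N-M).choose (k-j) : ℝ) * ((N - M : ℕ):ℝ)^M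
          ≤ (N.choose k : ℝ) * ((N/2 + (L + 2) : ℕ):ℝ)^M := hcast
        _ = ((N/2 + (L + 2) : ℕ):ℝ)^M * (N.choose k : ℝ) := by ring
    have hpq : (0:ℝ) ≤ p^k * q^(N-k) := by positivity
    calc t k = ((N-M).choose (k-j) : ℝ) * (p^k * q^(N-k)) := by
          simp only [ht]; rw [hcnt]; ring
      _ ≤ ((hi N)^M * (N.choose k : ℝ)) * (p^k * q^(N-k)) := mul_le_mul_of_nonneg_right key hpq
      _ = (hi N)^M * b k := by rw [hb]; ring
  have hhinn : 0 ≤ (hi N)^M := by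
    rw [hhi]
    positivity
  have hlonn : 0 ≤ (lo N)^M := by
    rw [hlo]
    positivity
  have hloM1 : (lo N)^M ≤ 1 := by
    apply pow_le_one₀
    · rw [hlo]; positivity
    · rw [hlo, div_le_one hNpos]
      have : N/2 - (L + M + 2) ≤ N := by omega
      exact_mod_cast this
  have hWb_le_Den : ∑ k ∈ W, b k ≤ Den := by
    rw [hsplitD]
    have : (0:ℝ) ≤ ∑ k ∈ Finset.range (d - L), b k :=
      Finset.sum_nonneg (fun k _ => hbnn k)
    linarith
  have hTailt : ∑ k ∈ Finset.range (d - L), t k ≤ δ * b d :=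
    le_trans (Finset.sum_le_sum (fun k _ => htb k)) hTail
  have hTailtnn : (0:ℝ) ≤ ∑ k ∈ Finset.range (d - L), t k :=
    Finset.sum_nonneg (fun k _ => htnn k)
  have hTailbnn : (0:ℝ) ≤ ∑ k ∈ Finset.range (d - L), b k :=
    Finset.sum_nonneg (fun k _ => hbnn k)
  have hWt_hi : ∑ k ∈ W, t k ≤ (hi N)^M * ∑ k ∈ W, b k := by
    rw [Finset.mul_sum]
    exact Finset.sum_le_sum hwin_hi
  have hWt_lo : (lo N)^M * ∑ k ∈ W, b k ≤ ∑ k ∈ W, t k := by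
    rw [Finset.mul_sum]
    exact Finset.sum_le_sum hwin_lo
  have hNumUp : Num ≤ (δ + (hi N)^M) * Den := by
    have t3 : (hi N)^M * (∑ k ∈ W, b k) ≤ (hi N)^M * Den :=
      mul_le_mul_of_nonneg_left hWb_le_Den hhinn
    have t4 : δ * b d ≤ δ * Den := mul_le_mul_of_nonneg_left hbdDen hδ0
    rw [hsplitN]
    linarith [hTailt, hWt_hi, t3, t4]
  have hNumLo : ((lo N)^M - δ) * Den ≤ Num := by
    have hWbeq : ∑ k ∈ W, b k = Den - ∑ k ∈ Finset.range (d - L), b k := by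
      rw [hsplitD]; ring
    have t7 : (lo N)^M * (∑ k ∈ Finset.range (d - L), b k)
        ≤ ∑ k ∈ Finset.range (d - L), b k :=
      mul_le_of_le_one_left hTailbnn hloM1
    have t8 : δ * b d ≤ δ * Den := mul_le_mul_of_nonneg_left hbdDen hδ0
    have t9 : (lo N)^M * (∑ k ∈ W, b k)
        = (lo N)^M * Den - (lo N)^M * ∑ k ∈ Finset.range (d - L), b k := by
      rw [hWbeq]; ring
    rw [hsplitN]
    linarith [hWt_lo, t7, t8, t9, hTail, hTailtnn]
  have hud : Num / Den ≤ δ + (hi N)^M := by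
    rw [div_le_iff₀ hDenpos]
    exact hNumUp
  have hld : (lo N)^M - δ ≤ Num / Den := by
    rw [le_div_iff₀ hDenpos]
    exact hNumLo
  rw [Real.dist_eq, abs_lt]
  constructor
  · linarith
  · linarith
section prob
open MeasureTheory ProbabilityTheory Filter

variable {Ω : Type*} [MeasurableSpace Ω] (P : Measure Ω) [IsProbabilityMeasure P]
    (p : ℝ) (hp : 1 / 2 < p) (hp1 : p < 1)
    (η : ℕ → Ω → Bool) (hmeas : ∀ n, Measurable (η n))
    (hiid : iIndepFun η P)
    (hbern : ∀ n : ℕ, P {ω | η n ω = true} = ENNReal.ofReal p)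

include hp hp1 hmeas hiid hbern in
lemma cyl (N : ℕ) (y : Fin N → Bool) :
    P {ω | (fun i : Fin N => η i.val ω) = y}
      = ENNReal.ofReal (p ^ (Tcard y) * (1-p) ^ (N - Tcard y)) := by
  have hp0 : (0:ℝ) < p := by linarith
  set sets : ℕ → Set Bool := fun n => {b | ∀ h : n < N, b = y ⟨n, h⟩} with hsets
  have hset : {ω | (fun i : Fin N => η i.val ω) = y}
      = ⋂ n ∈ Finset.range N, (η n)⁻¹' (sets n) := by
    ext ω
    simp only [Set.mem_setOf_eq, Set.mem_iInter, Set.mem_preimage, funext_iff, hsets,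
      Finset.mem_range]
    constructor
    · intro h n _ hlt
      exact h ⟨n, hlt⟩
    · intro h i
      exact h i.val i.isLt i.isLt
  rw [hset, hiid.measure_inter_preimage_eq_mul (Finset.range N)
    (fun i _ => (by trivial : MeasurableSet (sets i)))]
  have hfalse : ∀ n, P {ω | η n ω = false} = ENNReal.ofReal (1 - p) := by
    intro n
    have hc : {ω | η n ω = false} = {ω | η n ω = true}ᶜ := by
      ext ω; simp
    have hm : MeasurableSet {ω | η n ω = true} := by
      have : {ω | η n ω = true} = (η n)⁻¹' {true} := by ext ω; simp
      rw [this]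
      exact (hmeas n) (by trivial)
    rw [hc, measure_compl hm (measure_ne_top P _), hbern n, measure_univ,
      ← ENNReal.ofReal_one, ← ENNReal.ofReal_sub 1 hp0.le]
  have hfac : ∀ i : Fin N, P (η i.val ⁻¹' (sets i.val))
      = ENNReal.ofReal (if y i = true then p else 1 - p) := by
    intro i
    have he : η i.val ⁻¹' (sets i.val) = {ω | η i.val ω = y i} := by
      ext ω
      simp only [Set.mem_preimage, hsets, Set.mem_setOf_eq]
      constructor
      · intro h; exact h i.isLt
      · intro h h'; rw [h]
    rw [he]
    by_cases hyi : y i = true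
    · rw [hyi]; simp only [if_pos rfl]; exact hbern i.val
    · have : y i = false := by simp at hyi; exact hyi
      rw [this]
      simp only [if_neg (by simp : ¬ (false = true))]
      exact hfalse i.val
  rw [← Fin.prod_univ_eq_prod_range (fun n => P (η n ⁻¹' (sets n))) N]
  rw [Finset.prod_congr rfl (fun i _ => hfac i)]
  rw [← ENNReal.ofReal_prod_of_nonneg (fun i _ => by split <;> linarith)]
  congr 1
  rw [Finset.prod_ite, Finset.prod_const, Finset.prod_const]
  have hcards := Finset.card_filter_add_card_filter_not
    (s := (Finset.univ : Finset (Fin N))) (p := fun i => y i = true)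
  rw [Finset.card_univ, Fintype.card_fin] at hcards
  have h2 : (Finset.filter (fun i => ¬ y i = true) Finset.univ).card = N - Tcard y := by
    unfold Tcard; omega
  rw [h2]
  rfl

include hmeas in
lemma vec_measurable (N : ℕ) (y : Fin N → Bool) :
    MeasurableSet {ω | (fun i : Fin N => η i.val ω) = y} := by
  have h : {ω | (fun i : Fin N => η i.val ω) = y} = ⋂ i : Fin N, (η i.val)⁻¹' {y i} := by
    ext ω
    simp [funext_iff]
  rw [h]
  exact MeasurableSet.iInter (fun i => (hmeas i.val) (by trivial))

include hp hp1 hmeas hiid hbern in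
lemma decomp (N : ℕ) (Q : (Fin N → Bool) → Prop) [DecidablePred Q] :
    P {ω | Q (fun i : Fin N => η i.val ω)}
      = ∑ y ∈ Finset.univ.filter Q,
          ENNReal.ofReal (p ^ (Tcard y) * (1-p) ^ (N - Tcard y)) := by
  have hunion : {ω | Q (fun i : Fin N => η i.val ω)}
      = ⋃ y ∈ Finset.univ.filter Q, {ω | (fun i : Fin N => η i.val ω) = y} := by
    ext ω
    simp only [Set.mem_setOf_eq, Set.mem_iUnion, Finset.mem_filter, Finset.mem_univ, true_and]
    constructor
    · intro h
      exact ⟨fun i => η i.val ω, h, rfl⟩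
    · rintro ⟨y, hQ, hy⟩
      rw [hy]; exact hQ
  rw [hunion, measure_biUnion_finset ?disj (fun y _ => vec_measurable η hmeas N y)]
  · exact Finset.sum_congr rfl (fun y _ => cyl P p hp hp1 η hmeas hiid hbern N y)
  case disj =>
    intro y _ z _ hyz
    simp only [Function.onFun]
    rw [Set.disjoint_left]
    rintro ω h1 h2
    exact hyz (h1.symm.trans h2)

include hmeas in
lemma Qmeasurable (N : ℕ) (Q : (Fin N → Bool) → Prop) [DecidablePred Q] :
    MeasurableSet {ω | Q (fun i : Fin N => η i.val ω)} := by
  have hunion : {ω | Q (fun i : Fin N => η i.val ω)}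
      = ⋃ y ∈ Finset.univ.filter Q, {ω | (fun i : Fin N => η i.val ω) = y} := by
    ext ω
    simp only [Set.mem_setOf_eq, Set.mem_iUnion, Finset.mem_filter, Finset.mem_univ, true_and]
    constructor
    · intro h
      exact ⟨fun i => η i.val ω, h, rfl⟩
    · rintro ⟨y, hQ, hy⟩
      rw [hy]; exact hQ
  rw [hunion]
  exact (Finset.univ.filter Q).measurableSet_biUnion (fun y _ => vec_measurable η hmeas N y)

end prob

/-- For `p > 1/2`, the i.i.d. Bernoulli(p) configuration conditioned on `S_N > 0`
converges in distribution, as `N → ∞`, to the i.i.d. Bernoulli(1/2) configuration: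
every finite-dimensional conditioned probability converges to `2^{-M}`. -/
theorem stmt_11 {Ω : Type*} [MeasurableSpace Ω] (P : Measure Ω) [IsProbabilityMeasure P]
    (p : ℝ) (hp : 1 / 2 < p) (hp1 : p < 1)
    (η : ℕ → Ω → Bool) (hmeas : ∀ n, Measurable (η n))
    (hiid : iIndepFun η P)
    (hbern : ∀ n : ℕ, P {ω | η n ω = true} = ENNReal.ofReal p)
    (S : ℕ → Ω → ℤ)
    (hS : ∀ N ω, S N ω = ∑ n ∈ Finset.range N, (1 - 2 * (if η n ω then 1 else 0) : ℤ)) :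
    ∀ (M : ℕ) (x : ℕ → Bool),
      Tendsto
        (fun N => (ProbabilityTheory.cond P {ω | 0 < S N ω}) {ω | ∀ n < M, η n ω = x n})
        atTop (nhds (ENNReal.ofReal ((1 / 2) ^ M))) := by
  intro M x
  have hp0 : (0:ℝ) < p := by linarith
  have hq0 : (0:ℝ) < 1 - p := by linarith
  set j : ℕ := ((Finset.range M).filter (fun n => x n = true)).card with hjdef
  have hjM : j ≤ M := by
    rw [hjdef]
    calc ((Finset.range M).filter (fun n => x n = true)).card
        ≤ (Finset.range M).card := Finset.card_filter_le _ _
      _ = M := Finset.card_range M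
  set cnt : ℕ → ℕ → ℕ := fun N k => (Finset.univ.filter (fun y : Fin N → Bool =>
      (∀ i : Fin N, i.val < M → y i = x i.val) ∧ Tcard y = k)).card with hcntdef
  have h1 : ∀ N k, cnt N k ≤ N.choose k := by
    intro N k
    rw [hcntdef, ← card_T_eq N k]
    apply Finset.card_le_card
    intro y hy
    simp only [Finset.mem_filter] at hy ⊢
    exact ⟨hy.1, hy.2.2⟩
  have h2 : ∀ N k, M ≤ N → j ≤ k → cnt N k = (N - M).choose (k - j) := by
    intro N k hMN hjk
    rw [hcntdef, hjdef]
    exact card_prefix_T_eq N M k hMN x (by rw [hjdef] at hjk; exact hjk)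
  have hcore := core p hp hp1 M j hjM cnt h1 h2
  apply Filter.Tendsto.congr' ?_ (ENNReal.tendsto_ofReal hcore)
  filter_upwards [eventually_ge_atTop (M + 1)] with N hN
  have hMN : M ≤ N := by omega
  have hN1 : 1 ≤ N := by omega
  -- count identity for S
  have hScount : ∀ ω : Ω, S N ω = (N:ℤ) - 2 * (Tcard (fun i : Fin N => η i.val ω) : ℤ) := by
    intro ω
    rw [hS]
    have hsum : ∑ n ∈ Finset.range N, ((1:ℤ) - 2 * (if η n ω then 1 else 0))
        = (N:ℤ) - 2 * (((Finset.range N).filter (fun n => η n ω = true)).card : ℤ) := by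
      rw [Finset.sum_sub_distrib, Finset.sum_const, Finset.card_range, ← Finset.mul_sum]
      congr 1
      · simp
      · congr 1
        rw [Finset.sum_boole]
    rw [hsum]
    have hT : Tcard (fun i : Fin N => η i.val ω)
        = ((Finset.range N).filter (fun n => η n ω = true)).card := by
      unfold Tcard
      exact card_filter_fin N (fun n => η n ω = true)
    rw [hT]
  -- event identities
  have hA : {ω : Ω | 0 < S N ω}
      = {ω : Ω | (fun y : Fin N → Bool => 2 * Tcard y < N) (fun i : Fin N => η i.val ω)} := by
    ext ω
    simp only [Set.mem_setOf_eq]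
    rw [hScount ω]
    omega
  have hB : {ω : Ω | 0 < S N ω} ∩ {ω : Ω | ∀ n < M, η n ω = x n}
      = {ω : Ω | (fun y : Fin N → Bool =>
          (∀ i : Fin N, i.val < M → y i = x i.val) ∧ 2 * Tcard y < N)
          (fun i : Fin N => η i.val ω)} := by
    ext ω
    simp only [Set.mem_inter_iff, Set.mem_setOf_eq]
    rw [hScount ω]
    constructor
    · rintro ⟨h1', h2'⟩
      exact ⟨fun i hi => h2' i.val hi, by omega⟩
    · rintro ⟨h1', h2'⟩
      exact ⟨by omega, fun n hn => h1' ⟨n, by omega⟩ hn⟩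
  set d : ℕ := (N-1)/2 with hd
  -- grouping
  have hgroup : ∀ (R : (Fin N → Bool) → Prop) (inst : DecidablePred R),
      ∑ y ∈ Finset.univ.filter (fun y => R y ∧ 2 * Tcard y < N),
          (p ^ (Tcard y) * (1-p) ^ (N - Tcard y))
        = ∑ k ∈ Finset.range (d+1),
            ((Finset.univ.filter (fun y : Fin N → Bool => R y ∧ Tcard y = k)).card : ℝ)
              * p^k * (1-p)^(N-k) := by
    intro R inst
    have hmap : ∀ y ∈ Finset.univ.filter (fun y : Fin N → Bool => R y ∧ 2 * Tcard y < N),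
        Tcard y ∈ Finset.range (N+1) :=
      fun y _ => Finset.mem_range.mpr (Nat.lt_succ_of_le (Tcard_le y))
    rw [← Finset.sum_fiberwise_of_maps_to hmap
      (fun y => p ^ (Tcard y) * (1-p) ^ (N - Tcard y))]
    have hsub : Finset.range (d+1) ⊆ Finset.range (N+1) := by
      intro k hk
      simp only [Finset.mem_range] at hk ⊢
      omega
    have hvan : ∀ k ∈ Finset.range (N+1), k ∉ Finset.range (d+1) →
        (∑ y ∈ (Finset.univ.filter (fun y : Fin N → Bool =>
            R y ∧ 2 * Tcard y < N)).filter (fun y => Tcard y = k),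
          p ^ (Tcard y) * (1-p) ^ (N - Tcard y)) = 0 := by
      intro k _ hknot
      simp only [Finset.mem_range] at hknot
      have : (Finset.univ.filter (fun y : Fin N → Bool =>
          R y ∧ 2 * Tcard y < N)).filter (fun y => Tcard y = k) = ∅ := by
        rw [Finset.filter_filter]
        apply Finset.filter_false_of_mem
        rintro y _ ⟨⟨_, h2t⟩, ht⟩
        omega
      rw [this, Finset.sum_empty]
    rw [← Finset.sum_subset hsub hvan]
    apply Finset.sum_congr rfl
    intro k hk
    simp only [Finset.mem_range] at hk
    have heq : (Finset.univ.filter (fun y : Fin N → Bool =>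
        R y ∧ 2 * Tcard y < N)).filter (fun y => Tcard y = k)
        = Finset.univ.filter (fun y : Fin N → Bool => R y ∧ Tcard y = k) := by
      rw [Finset.filter_filter]
      apply Finset.filter_congr
      intro y _
      constructor
      · rintro ⟨⟨hr, _⟩, ht⟩
        exact ⟨hr, ht⟩
      · rintro ⟨hr, ht⟩
        exact ⟨⟨hr, by omega⟩, ht⟩
    rw [heq]
    calc ∑ y ∈ Finset.univ.filter (fun y : Fin N → Bool => R y ∧ Tcard y = k),
          p ^ (Tcard y) * (1-p) ^ (N - Tcard y)
        = ∑ _y ∈ Finset.univ.filter (fun y : Fin N → Bool => R y ∧ Tcard y = k),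
          p ^ k * (1-p) ^ (N - k) := by
          apply Finset.sum_congr rfl
          intro y hy
          simp only [Finset.mem_filter] at hy
          rw [hy.2.2]
      _ = ((Finset.univ.filter (fun y : Fin N → Bool => R y ∧ Tcard y = k)).card : ℝ)
            * p^k * (1-p)^(N-k) := by
          rw [Finset.sum_const, nsmul_eq_mul]
          ring
  -- measure of A
  have hPA : P {ω : Ω | 0 < S N ω}
      = ENNReal.ofReal (∑ k ∈ Finset.range (d+1), (N.choose k : ℝ) * p^k * (1-p)^(N-k)) := by
    rw [hA, decomp P p hp hp1 η hmeas hiid hbern N (fun y => 2 * Tcard y < N)]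
    rw [← ENNReal.ofReal_sum_of_nonneg (fun y _ => by positivity)]
    congr 1
    have e1 : Finset.univ.filter (fun y : Fin N → Bool => 2 * Tcard y < N)
        = Finset.univ.filter (fun y : Fin N → Bool => (fun _ => True) y ∧ 2 * Tcard y < N) := by
      apply Finset.filter_congr
      intro y _
      simp
    rw [e1, hgroup (fun _ => True) inferInstance]
    apply Finset.sum_congr rfl
    intro k _
    have e2 : Finset.univ.filter (fun y : Fin N → Bool => True ∧ Tcard y = k)
        = Finset.univ.filter (fun y : Fin N → Bool => Tcard y = k) := by
      apply Finset.filter_congr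
      intro y _
      simp
    rw [e2, card_T_eq N k]
  have hPB : P ({ω : Ω | 0 < S N ω} ∩ {ω : Ω | ∀ n < M, η n ω = x n})
      = ENNReal.ofReal (∑ k ∈ Finset.range (d+1), (cnt N k : ℝ) * p^k * (1-p)^(N-k)) := by
    rw [hB, decomp P p hp hp1 η hmeas hiid hbern N (fun y =>
      (∀ i : Fin N, i.val < M → y i = x i.val) ∧ 2 * Tcard y < N)]
    rw [← ENNReal.ofReal_sum_of_nonneg (fun y _ => by positivity)]
    congr 1
    rw [hgroup (fun y => ∀ i : Fin N, i.val < M → y i = x i.val) inferInstance]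
  -- denominator positivity
  have hDpos : 0 < ∑ k ∈ Finset.range (d+1), (N.choose k : ℝ) * p^k * (1-p)^(N-k) := by
    apply Finset.sum_pos
    · intro k hk
      simp only [Finset.mem_range] at hk
      have hkN : k ≤ N := by omega
      have hcp : 0 < N.choose k := Nat.choose_pos hkN
      have : (0:ℝ) < (N.choose k : ℝ) := by exact_mod_cast hcp
      positivity
    · exact ⟨0, Finset.mem_range.mpr (Nat.succ_pos d)⟩
  -- final identity
  have hAmeas : MeasurableSet {ω : Ω | 0 < S N ω} := by
    rw [hA]
    exact Qmeasurable η hmeas N (fun y => 2 * Tcard y < N)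
  rw [ProbabilityTheory.cond_apply hAmeas P, hPA, hPB,
    ENNReal.ofReal_div_of_pos hDpos, div_eq_mul_inv, mul_comm]
end

section
/- Fix J ∈ ℕ and 0 < A < L/2. Define the density on vectors ((q_j)_{j=1}^J, (e_j)_{j=1}^{J−1}) proportional to exp(−(λ_1−λ_0) Σ_{j=1}^J q_j) on the region {q_j, e_j > 0, Σ q_j + Σ e_j < L, Σ q_j < L/2}. Under the change of variables a = Σ_{j=1}^J q_j, δ^Q_j = q_j/a (j ≤ J−1), δ^E_j = e_j/(L−a) (j ≤ J−1), the Jacobian of the transformation is (a(L−a))^{J−1}, and consequently: A, (Δ^Q_j)_{j=1}^J, (Δ^E_j)_{j=1}^J are independent, A has density proportional to (a(L−a))^{J−1} e^{−(λ_1−λ_0)a} on (0, L/2), and (Δ^Q_j)_{j=1}^J and (Δ^E_j)_{j=1}^J are each Dirichlet(1,…,1) distributed. -/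
open Set MeasureTheory
open scoped ENNReal

/-- The region `{q_j > 0, e_i > 0, Σq + Σe < L, Σq < L/2}` of free coordinates
`((q_j)_{j=1}^J, (e_i)_{i=1}^{J-1})` of the periodic Toda phase space. -/
def todaRegion (J : ℕ) (L : ℝ) : Set ((Fin J → ℝ) × (Fin (J - 1) → ℝ)) :=
  {v | (∀ j, 0 < v.1 j) ∧ (∀ i, 0 < v.2 i) ∧
    (∑ j, v.1 j) + (∑ i, v.2 i) < L ∧ 2 * ∑ j, v.1 j < L}

/-- The (unnormalised) measure with density `exp(-(λ₁-λ₀) Σ_j q_j)` on the region. -/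
noncomputable def todaMeasure (J : ℕ) (L lam0 lam1 : ℝ) :
    Measure ((Fin J → ℝ) × (Fin (J - 1) → ℝ)) :=
  volume.withDensity
    ((todaRegion J L).indicator fun v =>
      ENNReal.ofReal (Real.exp (-(lam1 - lam0) * ∑ j, v.1 j)))

/-- The change of variables `(q, e) ↦ (a, δ^Q, δ^E)` with `a = Σ_j q_j`,
`δ^Q_j = q_j/a` and `δ^E_j = e_j/(L-a)`, where `e_J := L - Σq - Σ_{i<J-1} e_i`. -/
noncomputable def todaChangeOfVar (J : ℕ) (L : ℝ) :
    (Fin J → ℝ) × (Fin (J - 1) → ℝ) → ℝ × (Fin J → ℝ) × (Fin J → ℝ) :=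
  fun v =>
    (∑ j, v.1 j,
     fun j => v.1 j / ∑ j', v.1 j',
     fun j => (if h : (j : ℕ) < J - 1 then v.2 ⟨j, h⟩
        else L - (∑ j', v.1 j') - ∑ i, v.2 i) / (L - ∑ j', v.1 j'))

/-- The `Dirichlet(1,…,1)` distribution on `J` coordinates, i.e. the uniform
distribution on the open `(J-1)`-simplex `{δ_j > 0, Σ δ_j = 1}`. -/
noncomputable def dirichletOnes (J : ℕ) : Measure (Fin J → ℝ) :=
  Measure.map
    (fun (d : Fin (J - 1) → ℝ) => fun j : Fin J =>
      if h : (j : ℕ) < J - 1 then d ⟨j, h⟩ else 1 - ∑ i, d i)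
    (((J - 1).factorial : ℝ≥0∞) •
      volume.restrict {d : Fin (J - 1) → ℝ | (∀ i, 0 < d i) ∧ ∑ i, d i < 1})

/-- The (unnormalised) law of `A`, with density `(a(L-a))^{J-1} e^{-(λ₁-λ₀)a}` on
`(0, L/2)`. -/
noncomputable def todaAMeasure (J : ℕ) (L lam0 lam1 : ℝ) : Measure ℝ :=
  volume.withDensity
    ((Set.Ioo (0 : ℝ) (L / 2)).indicator fun a =>
      ENNReal.ofReal ((a * (L - a)) ^ (J - 1) * Real.exp (-(lam1 - lam0) * a)))

namespace Stmt17Aux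

open ContinuousLinearMap

noncomputable section

abbrev Y (n : ℕ) := ℝ × (Fin n → ℝ) × (Fin n → ℝ)
abbrev X (n : ℕ) := (Fin (n + 1) → ℝ) × (Fin n → ℝ)

/-! ### The inverse change of variables and its derivative -/

def psi (n : ℕ) (L : ℝ) : Y n → Y n := fun p =>
  (p.1 * (1 - ∑ i, p.2.1 i), fun i => p.1 * p.2.1 i, fun i => (L - p.1) * p.2.2 i)

def xc (n : ℕ) : Y n →L[ℝ] ℝ := fst ℝ ℝ _
def uc (n : ℕ) : Y n →L[ℝ] (Fin n → ℝ) := (fst ℝ (Fin n → ℝ) (Fin n → ℝ)).comp (snd ℝ ℝ _)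
def vc (n : ℕ) : Y n →L[ℝ] (Fin n → ℝ) := (snd ℝ (Fin n → ℝ) (Fin n → ℝ)).comp (snd ℝ ℝ _)
def sumc (n : ℕ) : (Fin n → ℝ) →L[ℝ] ℝ := ∑ i, proj i

def psiDer (n : ℕ) (L : ℝ) (p : Y n) : Y n →L[ℝ] Y n :=
  ((1 - ∑ i, p.2.1 i) • xc n - p.1 • ((sumc n).comp (uc n))).prod
    ((pi fun i => p.2.1 i • xc n + p.1 • ((proj i).comp (uc n))).prod
      (pi fun i => (L - p.1) • ((proj i).comp (vc n)) - p.2.2 i • xc n))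

lemma psi_hasFDerivAt {n : ℕ} (L : ℝ) (p : Y n) :
    HasFDerivAt (psi n L) (psiDer n L p) p := by
  have hx : HasFDerivAt (fun q : Y n => q.1) (xc n) p := hasFDerivAt_fst
  have hu : ∀ i, HasFDerivAt (fun q : Y n => q.2.1 i) ((proj i).comp (uc n)) p := by
    intro i
    exact ((proj i).comp (uc n)).hasFDerivAt
  have hv : ∀ i, HasFDerivAt (fun q : Y n => q.2.2 i) ((proj i).comp (vc n)) p := by
    intro i
    exact ((proj i).comp (vc n)).hasFDerivAt
  have hs : HasFDerivAt (fun q : Y n => ∑ i, q.2.1 i) ((sumc n).comp (uc n)) p := by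
    have := ((sumc n).comp (uc n)).hasFDerivAt (x := p)
    refine this.congr_of_eventuallyEq (Filter.Eventually.of_forall fun q => ?_)
    simp [sumc, uc]
  refine HasFDerivAt.prodMk ?_ (HasFDerivAt.prodMk ?_ ?_)
  · have h1 := hx.mul ((hasFDerivAt_const (1:ℝ) p).sub hs)
    refine h1.congr_fderiv ?_
    ext w <;>
      simp [psiDer, xc, uc, vc, sumc, Finset.mul_sum]
  · refine hasFDerivAt_pi'' fun i => ?_
    have := (hx.mul (hu i))
    refine this.congr_fderiv ?_
    ext w <;> simp [psiDer, xc, uc, vc, sumc]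
  · refine hasFDerivAt_pi'' fun i => ?_
    have := (((hasFDerivAt_const L p).sub hx).mul (hv i))
    refine this.congr_fderiv ?_
    ext w <;> simp [psiDer, xc, uc, vc, sumc]

def bY (n : ℕ) : Module.Basis (Unit ⊕ (Fin n ⊕ Fin n)) ℝ (Y n) :=
  (Module.Basis.singleton Unit ℝ).prod ((Pi.basisFun ℝ (Fin n)).prod (Pi.basisFun ℝ (Fin n)))

lemma toMatrix_psiDer {n : ℕ} (L : ℝ) (p : Y n) :
    LinearMap.toMatrix (bY n) (bY n) (psiDer n L p).toLinearMap =
      Matrix.fromBlocks (Matrix.of fun _ _ => 1 - ∑ i, p.2.1 i)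
        (Matrix.of fun _ j => Sum.elim (fun _ => -p.1) (fun _ => (0:ℝ)) j)
        (Matrix.of fun i _ => Sum.elim (fun k => p.2.1 k) (fun k => -(p.2.2 k)) i)
        (Matrix.fromBlocks (p.1 • 1) 0 0 ((L - p.1) • 1)) := by
  ext i j
  rcases i with i | i | i <;> rcases j with j | j | j <;>
    simp [LinearMap.toMatrix_apply, bY, psiDer, xc, uc, vc, sumc, Matrix.fromBlocks,
      Module.Basis.prod_repr_inl, Module.Basis.prod_repr_inr, Module.Basis.prod_apply_inl_fst, Pi.basisFun_apply,
      Pi.basisFun_repr, Pi.single_apply, Matrix.one_apply, eq_comm, mul_comm]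

lemma psiDer_det {n : ℕ} (L : ℝ) (p : Y n) :
    (psiDer n L p).det = p.1 ^ n * (L - p.1) ^ n := by
  have h1 : (psiDer n L p).det = (psiDer n L p).toLinearMap.det := rfl
  rw [h1, ← LinearMap.det_toMatrix (bY n), toMatrix_psiDer]
  have hfac :
      Matrix.fromBlocks (Matrix.of fun _ _ => 1 - ∑ i, p.2.1 i)
        (Matrix.of fun _ j => Sum.elim (fun _ => -p.1) (fun _ => (0:ℝ)) j)
        (Matrix.of fun i _ => Sum.elim (fun k => p.2.1 k) (fun k => -(p.2.2 k)) i)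
        (Matrix.fromBlocks (p.1 • 1) 0 0 ((L - p.1) • 1)) =
      (Matrix.fromBlocks (1 : Matrix Unit Unit ℝ)
        ((Matrix.of fun _ j => Sum.elim (fun _ => (-1:ℝ)) (fun _ => 0) j) :
          Matrix Unit (Fin n ⊕ Fin n) ℝ) 0
        (1 : Matrix (Fin n ⊕ Fin n) (Fin n ⊕ Fin n) ℝ)) *
      (Matrix.fromBlocks (1 : Matrix Unit Unit ℝ) 0
        (Matrix.of fun i _ => Sum.elim (fun k => p.2.1 k) (fun k => -(p.2.2 k)) i)
        (Matrix.fromBlocks (p.1 • (1 : Matrix (Fin n) (Fin n) ℝ)) 0 0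
          ((L - p.1) • (1 : Matrix (Fin n) (Fin n) ℝ)))) := by
    ext i j
    rcases i with i | i | i <;> rcases j with j | j | j <;>
      simp [Matrix.fromBlocks, Matrix.mul_apply, Fintype.sum_sum_type, Matrix.one_apply,
        Finset.sum_ite_eq, Pi.single_apply, Matrix.smul_apply, mul_comm, sub_eq_add_neg]
  rw [hfac, Matrix.det_mul, Matrix.det_fromBlocks_zero₂₁, Matrix.det_fromBlocks_zero₁₂,
    Matrix.det_fromBlocks_zero₁₂, Matrix.det_one, Matrix.det_one, Matrix.det_smul,
    Matrix.det_smul, Matrix.det_one]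
  simp

/-! ### The measurable equivalence between the two coordinate systems -/

def eqv (n : ℕ) : X n ≃ᵐ Y n :=
  ((MeasurableEquiv.piFinSuccAbove (fun _ : Fin (n+1) => ℝ) (Fin.last n)).prodCongr
    (MeasurableEquiv.refl (Fin n → ℝ))).trans MeasurableEquiv.prodAssoc

lemma eqv_apply (n : ℕ) (v : X n) :
    eqv n v = (v.1 (Fin.last n), fun i => v.1 i.castSucc, v.2) := by
  simp [eqv, MeasurableEquiv.piFinSuccAbove, MeasurableEquiv.prodCongr,
    MeasurableEquiv.prodAssoc, Fin.succAbove_last]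
  rfl

lemma eqv_symm_apply (n : ℕ) (p : Y n) :
    (eqv n).symm p = (Fin.snoc p.2.1 p.1, p.2.2) := by
  simp [eqv, MeasurableEquiv.piFinSuccAbove, MeasurableEquiv.prodCongr,
    MeasurableEquiv.prodAssoc, Fin.insertNth_last', MeasurableEquiv.trans,
    MeasurableEquiv.symm, Equiv.prodAssoc, Equiv.prodCongr, Fin.snocEquiv,
    MeasurableEquiv.coe_mk, Equiv.coe_fn_mk]

lemma eqv_mp (n : ℕ) : MeasurePreserving (eqv n) volume volume := by
  refine MeasurePreserving.trans ?_ (volume_preserving_prodAssoc)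
  exact (volume_preserving_piFinSuccAbove (fun _ : Fin (n+1) => ℝ) (Fin.last n)).prod
    (MeasurePreserving.id _)

/-! ### Basic sets and maps -/

def sSet (n : ℕ) : Set (Fin n → ℝ) := {d | (∀ i, 0 < d i) ∧ ∑ i, d i < 1}

def region' (n : ℕ) (L : ℝ) : Set (X n) :=
  {v | (∀ j, 0 < v.1 j) ∧ (∀ i, 0 < v.2 i) ∧
    (∑ j, v.1 j) + (∑ i, v.2 i) < L ∧ 2 * ∑ j, v.1 j < L}

lemma region'_eq (n : ℕ) (L : ℝ) : region' n L = todaRegion (n+1) L := rfl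

lemma todaMeasure_eq (n : ℕ) (L lam0 lam1 : ℝ) :
    todaMeasure (n+1) L lam0 lam1 = (volume : Measure (X n)).withDensity
      ((region' n L).indicator fun v =>
        ENNReal.ofReal (Real.exp (-(lam1 - lam0) * ∑ j, v.1 j))) := rfl

def uSet (n : ℕ) (L : ℝ) : Set (Y n) := Ioo (0:ℝ) (L/2) ×ˢ (sSet n ×ˢ sSet n)

def smap (n : ℕ) (L : ℝ) : X n → Y n := fun v =>
  (∑ j, v.1 j, fun i => v.1 i.castSucc / ∑ j, v.1 j, fun i => v.2 i / (L - ∑ j, v.1 j))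

def Fpad (n : ℕ) : (Fin n → ℝ) → (Fin (n+1) → ℝ) := fun d j =>
  if h : (j : ℕ) < n then d ⟨j, h⟩ else 1 - ∑ i, d i

def Gmap (n : ℕ) : Y n → ℝ × (Fin (n+1) → ℝ) × (Fin (n+1) → ℝ) := fun p =>
  (p.1, Fpad n p.2.1, Fpad n p.2.2)

def hdens (n : ℕ) (L lam : ℝ) : Y n → ℝ≥0∞ := fun p =>
  ENNReal.ofReal ((p.1 * (L - p.1)) ^ n * Real.exp (-lam * p.1))

def nu (n : ℕ) (L lam : ℝ) : Measure (Y n) :=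
  volume.withDensity ((uSet n L).indicator (hdens n L lam))

/-! ### Measurability -/

lemma measurable_smap (n : ℕ) (L : ℝ) : Measurable (smap n L) := by
  unfold smap; fun_prop

lemma measurable_Fpad (n : ℕ) : Measurable (Fpad n) := by
  unfold Fpad
  refine measurable_pi_lambda _ fun j => ?_
  split_ifs with h
  · exact measurable_pi_apply _
  · fun_prop

lemma measurable_Gmap (n : ℕ) : Measurable (Gmap n) := by
  have h1 : Measurable fun p : Y n => Fpad n p.2.1 :=
    (measurable_Fpad n).comp (measurable_fst.comp measurable_snd)
  have h2 : Measurable fun p : Y n => Fpad n p.2.2 :=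
    (measurable_Fpad n).comp (measurable_snd.comp measurable_snd)
  exact measurable_fst.prodMk (h1.prodMk h2)

lemma measurableSet_sSet (n : ℕ) : MeasurableSet (sSet n) := by
  have : sSet n = (⋂ i, {d : Fin n → ℝ | 0 < d i}) ∩ {d | ∑ i, d i < 1} := by
    ext d; simp [sSet]
  rw [this]
  exact (MeasurableSet.iInter fun i =>
      measurableSet_lt measurable_const (measurable_pi_apply i)).inter
    (measurableSet_lt (by fun_prop) measurable_const)

lemma measurableSet_uSet (n : ℕ) (L : ℝ) : MeasurableSet (uSet n L) :=
  measurableSet_Ioo.prod ((measurableSet_sSet n).prod (measurableSet_sSet n))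

lemma mem_todaRegion_iff {n : ℕ} {L : ℝ} {w : X n} :
    w ∈ region' n L ↔ (∀ j, 0 < w.1 j) ∧ (∀ i : Fin n, 0 < w.2 i) ∧
      (∑ j, w.1 j) + (∑ i : Fin n, w.2 i) < L ∧ 2 * ∑ j, w.1 j < L := Iff.rfl

lemma measurableSet_todaRegion (n : ℕ) (L : ℝ) : MeasurableSet (region' n L) := by
  have : region' n L =
      (⋂ j, {v : X n | 0 < v.1 j}) ∩ ((⋂ i, {v : X n | 0 < v.2 i}) ∩
        ({v : X n | (∑ j, v.1 j) + (∑ i, v.2 i) < L} ∩ {v : X n | 2 * ∑ j, v.1 j < L})) := by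
    ext v
    rw [mem_todaRegion_iff]
    simp only [Set.mem_inter_iff, Set.mem_iInter, Set.mem_setOf_eq]
  rw [this]
  have h1 : MeasurableSet (⋂ j, {v : X n | 0 < v.1 j}) :=
    MeasurableSet.iInter fun j => measurableSet_lt measurable_const (by fun_prop)
  have h2 : MeasurableSet (⋂ i, {v : X n | 0 < v.2 i}) :=
    MeasurableSet.iInter fun i => measurableSet_lt measurable_const (by fun_prop)
  have h3 : MeasurableSet {v : X n | (∑ j, v.1 j) + (∑ i, v.2 i) < L} :=
    measurableSet_lt (by fun_prop) measurable_const
  have h4 : MeasurableSet {v : X n | 2 * ∑ j, v.1 j < L} :=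
    measurableSet_lt (by fun_prop) measurable_const
  exact h1.inter (h2.inter (h3.inter h4))

/-! ### Pointwise correspondences -/

lemma psi_mem {n : ℕ} {L : ℝ} (hL : 0 < L) {p : Y n} (hp : p ∈ uSet n L) :
    (eqv n).symm (psi n L p) ∈ region' n L ∧
      smap n L ((eqv n).symm (psi n L p)) = p ∧
      (∑ j, ((eqv n).symm (psi n L p)).1 j) = p.1 := by
  obtain ⟨ha, hd, ht⟩ := hp
  obtain ⟨ha0, haL2⟩ := ha
  have haL : p.1 < L := lt_trans haL2 (half_lt_self hL)
  have hLa : 0 < L - p.1 := by linarith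
  have hS : (0:ℝ) < 1 - ∑ i, p.2.1 i := by have := hd.2; linarith
  have hw : (eqv n).symm (psi n L p) =
      (Fin.snoc (fun i => p.1 * p.2.1 i) (p.1 * (1 - ∑ i, p.2.1 i)),
        fun i => (L - p.1) * p.2.2 i) := by
    rw [eqv_symm_apply]; rfl
  have hsum : (∑ j, ((eqv n).symm (psi n L p)).1 j) = p.1 := by
    rw [hw]
    simp only [Fin.sum_univ_castSucc, Fin.snoc_castSucc, Fin.snoc_last]
    rw [← Finset.mul_sum]
    ring
  refine ⟨?_, ?_, hsum⟩
  · rw [mem_todaRegion_iff, hw]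
    refine ⟨fun j => ?_, fun i => ?_, ?_, ?_⟩
    · refine Fin.lastCases ?_ (fun i => ?_) j
      · simp only [Fin.snoc_last]; exact mul_pos ha0 hS
      · simp only [Fin.snoc_castSucc]; exact mul_pos ha0 (hd.1 i)
    · show 0 < (L - p.1) * p.2.2 i
      exact mul_pos hLa (ht.1 i)
    · have h1 : (∑ j, Fin.snoc (fun i => p.1 * p.2.1 i) (p.1 * (1 - ∑ i, p.2.1 i)) j) = p.1 := by
        have := hsum; rw [hw] at this; exact this
      show (∑ j, Fin.snoc (fun i => p.1 * p.2.1 i) (p.1 * (1 - ∑ i, p.2.1 i)) j) +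
        (∑ i : Fin n, (L - p.1) * p.2.2 i) < L
      rw [h1, ← Finset.mul_sum]
      have : (L - p.1) * ∑ i, p.2.2 i < (L - p.1) * 1 :=
        mul_lt_mul_of_pos_left ht.2 hLa
      linarith
    · have h1 : (∑ j, Fin.snoc (fun i => p.1 * p.2.1 i) (p.1 * (1 - ∑ i, p.2.1 i)) j) = p.1 := by
        have := hsum; rw [hw] at this; exact this
      show 2 * (∑ j, Fin.snoc (fun i => p.1 * p.2.1 i) (p.1 * (1 - ∑ i, p.2.1 i)) j) < L
      rw [h1]; linarith
  · have hLa' : L - p.1 ≠ 0 := ne_of_gt hLa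
    have ha0' : p.1 ≠ 0 := ne_of_gt ha0
    unfold smap
    rw [hsum]
    refine Prod.ext rfl (Prod.ext ?_ ?_)
    · funext i
      show ((eqv n).symm (psi n L p)).1 i.castSucc / p.1 = p.2.1 i
      rw [hw]
      simp only [Fin.snoc_castSucc]
      field_simp
    · funext i
      show ((eqv n).symm (psi n L p)).2 i / (L - p.1) = p.2.2 i
      rw [hw]
      field_simp

lemma smap_mem {n : ℕ} {L : ℝ} (hL : 0 < L) {w : X n} (hw : w ∈ region' n L) :
    smap n L w ∈ uSet n L ∧ psi n L (smap n L w) = eqv n w := by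
  rw [mem_todaRegion_iff] at hw
  obtain ⟨hq, he, hsum, hhalf⟩ := hw
  have ha0 : 0 < ∑ j, w.1 j :=
    Finset.sum_pos (fun j _ => hq j) Finset.univ_nonempty
  set a := ∑ j, w.1 j with ha_def
  have haL2 : a < L / 2 := by linarith
  have haL : a < L := by linarith
  have hLa : 0 < L - a := by linarith
  have hcast : (∑ i : Fin n, w.1 i.castSucc) = a - w.1 (Fin.last n) := by
    rw [ha_def, Fin.sum_univ_castSucc]; ring
  constructor
  · refine ⟨⟨ha0, haL2⟩, ⟨fun i => div_pos (hq _) ha0, ?_⟩, ⟨fun i => div_pos (he i) hLa, ?_⟩⟩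
    · show (∑ i : Fin n, w.1 i.castSucc / a) < 1
      rw [← Finset.sum_div, hcast, div_lt_one ha0]
      have := hq (Fin.last n); linarith
    · show (∑ i : Fin n, w.2 i / (L - a)) < 1
      rw [← Finset.sum_div, div_lt_one hLa]; linarith
  · have ha0' : a ≠ 0 := ne_of_gt ha0
    have hLa' : L - a ≠ 0 := ne_of_gt hLa
    rw [eqv_apply]
    refine Prod.ext ?_ (Prod.ext ?_ ?_)
    · show a * (1 - ∑ i : Fin n, w.1 i.castSucc / a) = w.1 (Fin.last n)
      rw [← Finset.sum_div, hcast]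
      field_simp
      ring
    · funext i
      show a * (w.1 i.castSucc / a) = w.1 i.castSucc
      field_simp
    · funext i
      show (L - a) * (w.2 i / (L - a)) = w.2 i
      field_simp

lemma changeOfVar_eq {n : ℕ} {L : ℝ} {w : X n} (hw : w ∈ region' n L) (hL : 0 < L) :
    todaChangeOfVar (n+1) L w = Gmap n (smap n L w) := by
  rw [mem_todaRegion_iff] at hw
  obtain ⟨hq, he, hsum, hhalf⟩ := hw
  have ha0 : 0 < ∑ j, w.1 j :=
    Finset.sum_pos (fun j _ => hq j) Finset.univ_nonempty
  set a := ∑ j, w.1 j with ha_def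
  have haL : a < L := by linarith
  have hLa : 0 < L - a := by linarith
  have ha0' : a ≠ 0 := ne_of_gt ha0
  have hLa' : L - a ≠ 0 := ne_of_gt hLa
  have hcast : (∑ i : Fin n, w.1 i.castSucc) = a - w.1 (Fin.last n) := by
    rw [ha_def, Fin.sum_univ_castSucc]; ring
  unfold todaChangeOfVar Gmap Fpad smap
  simp only [Nat.add_sub_cancel]
  refine Prod.ext rfl (Prod.ext ?_ ?_)
  · funext j
    by_cases h : (j : ℕ) < n
    · simp only [h, dif_pos]
      congr 1
    · simp only [h, dif_neg, not_false_iff]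
      have hj : j = Fin.last n := by
        apply Fin.ext
        have := j.isLt
        simp only [Fin.val_last]
        omega
      subst hj
      rw [← Finset.sum_div, hcast]
      rw [← ha_def, eq_sub_iff_add_eq, ← add_div, div_eq_one_iff_eq ha0']; ring
  · funext j
    by_cases h : (j : ℕ) < n
    · simp only [h, dif_pos]
    · simp only [h, dif_neg, not_false_iff]
      rw [← Finset.sum_div]
      rw [← ha_def, eq_sub_iff_add_eq, ← add_div, div_eq_one_iff_eq hLa']; exact sub_add_cancel _ _

/-! ### Image identities -/

lemma image_eq {n : ℕ} {L : ℝ} (hL : 0 < L) (A : Set (Y n)) :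
    eqv n '' (region' n L ∩ smap n L ⁻¹' A) = psi n L '' (A ∩ uSet n L) := by
  ext y
  constructor
  · rintro ⟨w, ⟨hwR, hwA⟩, rfl⟩
    obtain ⟨hU, hpsi⟩ := smap_mem hL hwR
    exact ⟨smap n L w, ⟨hwA, hU⟩, hpsi⟩
  · rintro ⟨p, ⟨hpA, hpU⟩, rfl⟩
    obtain ⟨hR, hsm, -⟩ := psi_mem hL hpU
    refine ⟨(eqv n).symm (psi n L p), ⟨hR, ?_⟩, by simp⟩
    show smap n L ((eqv n).symm (psi n L p)) ∈ A
    rw [hsm]; exact hpA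

lemma injOn_psi {n : ℕ} {L : ℝ} (hL : 0 < L) : InjOn (psi n L) (uSet n L) := by
  intro p hp q hq h
  have h1 := (psi_mem hL hp).2.1
  have h2 := (psi_mem hL hq).2.1
  rw [← h1, ← h2, h]

/-! ### Pushforward of the Toda measure under `smap` -/

lemma measurable_hdens (n : ℕ) (L lam : ℝ) : Measurable (hdens n L lam) := by
  unfold hdens
  fun_prop

lemma map_smap_eq {n : ℕ} {L : ℝ} (lam0 lam1 : ℝ) (hL : 0 < L) :
    Measure.map (smap n L) (todaMeasure (n+1) L lam0 lam1) = nu n L (lam1 - lam0) := by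
  ext A hA
  rw [Measure.map_apply (measurable_smap n L) hA, todaMeasure_eq]
  unfold nu
  rw [withDensity_apply _ ((measurable_smap n L) hA), withDensity_apply _ hA,
    lintegral_indicator (measurableSet_todaRegion n L),
    Measure.restrict_restrict (measurableSet_todaRegion n L),
    lintegral_indicator (measurableSet_uSet n L),
    Measure.restrict_restrict (measurableSet_uSet n L)]
  set lam := lam1 - lam0 with hlam_def
  set ρ : X n → ℝ≥0∞ := fun v => ENNReal.ofReal (Real.exp (-lam * ∑ j, v.1 j)) with hρ
  have step2 : (∫⁻ v in region' n L ∩ smap n L ⁻¹' A, ρ v ∂volume)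
      = ∫⁻ y in eqv n '' (region' n L ∩ smap n L ⁻¹' A), ρ ((eqv n).symm y) ∂volume := by
    rw [← MeasurePreserving.setLIntegral_comp_emb (eqv_mp n)
      (eqv n).measurableEmbedding (fun y => ρ ((eqv n).symm y)) _]
    exact lintegral_congr fun w => by simp
  rw [step2, image_eq hL A]
  have hAU : MeasurableSet (A ∩ uSet n L) := hA.inter (measurableSet_uSet n L)
  haveI : Measure.IsAddHaarMeasure (volume : Measure ((Fin n → ℝ) × (Fin n → ℝ))) :=
    Measure.prod.instIsAddHaarMeasure _ _
  haveI : Measure.IsAddHaarMeasure (volume : Measure (Y n)) :=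
    Measure.prod.instIsAddHaarMeasure _ _
  rw [lintegral_image_eq_lintegral_abs_det_fderiv_mul volume hAU
    (fun p _ => (psi_hasFDerivAt L p).hasFDerivWithinAt)
    ((injOn_psi hL).mono inter_subset_right)]
  rw [Set.inter_comm (uSet n L) A]
  refine setLIntegral_congr_fun hAU (fun p hp => ?_)
  obtain ⟨hmem, -, hsum⟩ := psi_mem hL hp.2
  obtain ⟨⟨ha0, haL2⟩, -, -⟩ := hp.2
  have hLa : 0 < L - p.1 := by
    have : p.1 < L := lt_trans haL2 (half_lt_self hL)
    linarith
  rw [psiDer_det]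
  rw [abs_of_nonneg (by positivity)]
  show ENNReal.ofReal (p.1 ^ n * (L - p.1) ^ n) *
      ENNReal.ofReal (Real.exp (-lam * ∑ j, ((eqv n).symm (psi n L p)).1 j)) = hdens n L lam p
  rw [hsum, ← ENNReal.ofReal_mul (by positivity)]
  unfold hdens
  rw [mul_pow]

/-! ### The product decomposition of `nu` -/

lemma sSet_subset (n : ℕ) : sSet n ⊆ Set.pi Set.univ fun _ : Fin n => Ioo (0:ℝ) 1 := by
  intro d hd i _
  refine ⟨hd.1 i, lt_of_le_of_lt ?_ hd.2⟩
  exact Finset.single_le_sum (f := d) (fun j _ => (hd.1 j).le) (Finset.mem_univ i)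

lemma volume_sSet_lt_top (n : ℕ) : volume (sSet n) < ⊤ := by
  refine lt_of_le_of_lt (measure_mono (sSet_subset n)) ?_
  rw [volume_pi_pi]
  simp [Real.volume_Ioo]

lemma isFiniteMeasure_todaA (n : ℕ) (L lam0 lam1 : ℝ) (hL : 0 < L) :
    IsFiniteMeasure (todaAMeasure (n+1) L lam0 lam1) := by
  constructor
  unfold todaAMeasure
  rw [withDensity_apply _ MeasurableSet.univ, Measure.restrict_univ,
    lintegral_indicator measurableSet_Ioo]
  set C := ENNReal.ofReal ((L*L)^n * Real.exp (|lam1 - lam0| * L)) with hC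
  have hbound : ∀ a ∈ Ioo (0:ℝ) (L/2),
      ENNReal.ofReal ((a * (L - a)) ^ (n+1-1) * Real.exp (-(lam1 - lam0) * a)) ≤ C := by
    intro a ha
    obtain ⟨ha0, haL2⟩ := ha
    have haL : a < L := lt_trans haL2 (half_lt_self hL)
    refine ENNReal.ofReal_le_ofReal ?_
    have h1 : a * (L - a) ≤ L * L := by nlinarith
    have h2 : (a * (L - a)) ^ (n+1-1) ≤ (L*L)^n := by
      simp only [Nat.add_sub_cancel]
      exact pow_le_pow_left₀ (by nlinarith) h1 n
    have h3 : Real.exp (-(lam1 - lam0) * a) ≤ Real.exp (|lam1 - lam0| * L) := by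
      refine Real.exp_le_exp.mpr ?_
      calc -(lam1 - lam0) * a = -((lam1 - lam0) * a) := by ring
        _ ≤ |(lam1 - lam0) * a| := neg_le_abs _
        _ = |lam1 - lam0| * |a| := abs_mul _ _
        _ = |lam1 - lam0| * a := by rw [abs_of_pos ha0]
        _ ≤ |lam1 - lam0| * L := mul_le_mul_of_nonneg_left haL.le (abs_nonneg _)
    exact mul_le_mul h2 h3 (Real.exp_pos _).le (by positivity)
  calc (∫⁻ a in Ioo (0:ℝ) (L/2),
        ENNReal.ofReal ((a * (L - a)) ^ (n+1-1) * Real.exp (-(lam1 - lam0) * a)) ∂volume)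
      ≤ ∫⁻ _ in Ioo (0:ℝ) (L/2), C ∂volume := setLIntegral_mono' measurableSet_Ioo hbound
    _ = C * volume (Ioo (0:ℝ) (L/2)) := setLIntegral_const _ _
    _ < ⊤ := ENNReal.mul_lt_top ENNReal.ofReal_lt_top (by simp [Real.volume_Ioo])

lemma indicator_split (n : ℕ) (L lam : ℝ) (x : ℝ) (z : (Fin n → ℝ) × (Fin n → ℝ)) :
    (uSet n L).indicator (hdens n L lam) (x, z) =
      (Ioo (0:ℝ) (L/2)).indicator
        (fun a => ENNReal.ofReal ((a * (L - a)) ^ n * Real.exp (-lam * a))) x *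
      (sSet n ×ˢ sSet n).indicator 1 z := by
  by_cases hx : x ∈ Ioo (0:ℝ) (L/2) <;> by_cases hz : z ∈ sSet n ×ˢ sSet n <;>
    simp [uSet, hdens, Set.indicator, hx, hz, Set.prodMk_mem_set_prod_eq]

lemma nu_eq {n : ℕ} {L : ℝ} (lam0 lam1 : ℝ) (hL : 0 < L) :
    nu n L (lam1 - lam0) = (todaAMeasure (n+1) L lam0 lam1).prod
      ((volume.restrict (sSet n)).prod (volume.restrict (sSet n))) := by
  haveI := isFiniteMeasure_todaA n L lam0 lam1 hL
  refine (Measure.prod_eq fun s₁ t hs₁ ht => ?_).symm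
  unfold nu
  rw [withDensity_apply _ (hs₁.prod ht)]
  have hss : MeasurableSet (sSet n ×ˢ sSet n) := (measurableSet_sSet n).prod (measurableSet_sSet n)
  rw [Measure.volume_eq_prod, ← Measure.prod_restrict,
    lintegral_prod _ (((measurable_hdens n L (lam1 - lam0)).indicator
      (measurableSet_uSet n L)).aemeasurable)]
  have hinner : ∀ x : ℝ, (∫⁻ z, (uSet n L).indicator (hdens n L (lam1 - lam0)) (x, z)
      ∂(volume.restrict t)) =
      (Ioo (0:ℝ) (L/2)).indicator
        (fun a => ENNReal.ofReal ((a * (L - a)) ^ n * Real.exp (-(lam1 - lam0) * a))) x *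
        volume ((sSet n ×ˢ sSet n) ∩ t) := by
    intro x
    simp only [indicator_split n L (lam1 - lam0) x]
    rw [lintegral_const_mul _ ((measurable_one.indicator hss))]
    congr 1
    rw [lintegral_indicator_one hss, Measure.restrict_apply hss, Set.inter_comm]
  simp only [hinner]
  rw [lintegral_mul_const _ ((Measurable.indicator (by fun_prop) measurableSet_Ioo))]
  have hA : todaAMeasure (n+1) L lam0 lam1 s₁ = ∫⁻ x in s₁,
      (Ioo (0:ℝ) (L/2)).indicator
        (fun a => ENNReal.ofReal ((a * (L - a)) ^ n * Real.exp (-(lam1 - lam0) * a))) x ∂volume := by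
    unfold todaAMeasure
    rw [withDensity_apply _ hs₁]
    simp only [Nat.add_sub_cancel]
  rw [← hA]
  congr 1
  rw [Measure.prod_restrict, Measure.restrict_apply ht, ← Measure.volume_eq_prod, Set.inter_comm]

/-! ### a.e. support and smul-product lemmas -/

lemma toda_ae (n : ℕ) (L lam0 lam1 : ℝ) :
    ∀ᵐ v ∂(todaMeasure (n+1) L lam0 lam1), v ∈ region' n L := by
  rw [ae_iff, todaMeasure_eq]
  have hc : {a : X n | ¬ a ∈ region' n L} = (region' n L)ᶜ := rfl
  rw [hc, withDensity_apply _ (measurableSet_todaRegion n L).compl,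
    lintegral_indicator (measurableSet_todaRegion n L),
    Measure.restrict_restrict (measurableSet_todaRegion n L)]
  rw [Set.inter_compl_self]
  simp

lemma smul_prod_left {α β : Type*} [MeasurableSpace α] [MeasurableSpace β]
    (c : ℝ≥0∞) (μ : Measure α) (ν : Measure β) [SFinite μ] [SFinite ν] :
    (c • μ).prod ν = c • (μ.prod ν) := by
  ext A hA
  rw [Measure.prod_apply hA, Measure.smul_apply, Measure.prod_apply hA,
    lintegral_smul_measure, smul_eq_mul]

lemma smul_prod_right {α β : Type*} [MeasurableSpace α] [MeasurableSpace β]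
    (c : ℝ≥0∞) (μ : Measure α) (ν : Measure β) [SFinite μ] [SFinite ν] :
    μ.prod (c • ν) = c • (μ.prod ν) := by
  ext A hA
  rw [Measure.prod_apply hA, Measure.smul_apply, Measure.prod_apply hA]
  simp only [Measure.smul_apply, smul_eq_mul]
  rw [lintegral_const_mul _ (measurable_measure_prodMk_left hA)]

end

end Stmt17Aux

/-- Under the change of variables (whose Jacobian is `(a(L-a))^{J-1}`), the measure with
density `∝ exp(-(λ₁-λ₀)Σq)` on the Toda region is pushed forward to a product measure:
`A`, `(Δ^Q_j)_{j=1}^J` and `(Δ^E_j)_{j=1}^J` are independent, `A` has density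
proportional to `(a(L-a))^{J-1} e^{-(λ₁-λ₀)a}` on `(0, L/2)`, and `Δ^Q`, `Δ^E` are each
`Dirichlet(1,…,1)` distributed. -/
theorem stmt_17 (J : ℕ) (hJ : 1 ≤ J) (L lam0 lam1 : ℝ) (hL : 0 < L)
    (hlam : lam0 < lam1) :
    ∃ c : ℝ≥0∞, c ≠ 0 ∧ c ≠ ⊤ ∧
      Measure.map (todaChangeOfVar J L) (todaMeasure J L lam0 lam1) =
        c • ((todaAMeasure J L lam0 lam1).prod
          ((dirichletOnes J).prod (dirichletOnes J))) := by
  obtain ⟨n, rfl⟩ : ∃ n, J = n + 1 := ⟨J - 1, (Nat.succ_pred_eq_of_pos hJ).symm⟩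
  open Stmt17Aux in
  set k : ℝ≥0∞ := (n.factorial : ℝ≥0∞) with hk_def
  have hk0 : k ≠ 0 := by
    simp [hk_def, Nat.factorial_ne_zero]
  have hktop : k ≠ ⊤ := ENNReal.natCast_ne_top _
  have hkk0 : k * k ≠ 0 := mul_ne_zero hk0 hk0
  have hkktop : k * k ≠ ⊤ := ENNReal.mul_ne_top hktop hktop
  refine ⟨(k * k)⁻¹, ENNReal.inv_ne_zero.mpr hkktop, ENNReal.inv_ne_top.mpr hkk0, ?_⟩
  haveI := Stmt17Aux.isFiniteMeasure_todaA n L lam0 lam1 hL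
  have hdir : dirichletOnes (n+1) =
      Measure.map (Stmt17Aux.Fpad n) (k • volume.restrict (Stmt17Aux.sSet n)) := rfl
  have h1 : Measure.map (todaChangeOfVar (n+1) L) (todaMeasure (n+1) L lam0 lam1) =
      Measure.map (Stmt17Aux.Gmap n)
        (Measure.map (Stmt17Aux.smap n L) (todaMeasure (n+1) L lam0 lam1)) := by
    rw [Measure.map_map (Stmt17Aux.measurable_Gmap n) (Stmt17Aux.measurable_smap n L)]
    refine Measure.map_congr ?_
    exact (Stmt17Aux.toda_ae n L lam0 lam1).mono fun w hw => Stmt17Aux.changeOfVar_eq hw hL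
  rw [h1, Stmt17Aux.map_smap_eq lam0 lam1 hL, Stmt17Aux.nu_eq lam0 lam1 hL, hdir]
  have h2 : (Measure.map (Stmt17Aux.Fpad n) (k • volume.restrict (Stmt17Aux.sSet n))).prod
        (Measure.map (Stmt17Aux.Fpad n) (k • volume.restrict (Stmt17Aux.sSet n))) =
      (k * k) • Measure.map (Prod.map (Stmt17Aux.Fpad n) (Stmt17Aux.Fpad n))
        ((volume.restrict (Stmt17Aux.sSet n)).prod (volume.restrict (Stmt17Aux.sSet n))) := by
    rw [Measure.map_prod_map _ _ (Stmt17Aux.measurable_Fpad n) (Stmt17Aux.measurable_Fpad n),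
      Stmt17Aux.smul_prod_left, Stmt17Aux.smul_prod_right, smul_smul,
      Measure.map_smul]
  rw [h2, Stmt17Aux.smul_prod_right]
  have h3 : Measure.map (Stmt17Aux.Gmap n)
      ((todaAMeasure (n+1) L lam0 lam1).prod
        ((volume.restrict (Stmt17Aux.sSet n)).prod (volume.restrict (Stmt17Aux.sSet n)))) =
      (todaAMeasure (n+1) L lam0 lam1).prod
        (Measure.map (Prod.map (Stmt17Aux.Fpad n) (Stmt17Aux.Fpad n))
          ((volume.restrict (Stmt17Aux.sSet n)).prod (volume.restrict (Stmt17Aux.sSet n)))) := by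
    have hG : Stmt17Aux.Gmap n = Prod.map id (Prod.map (Stmt17Aux.Fpad n) (Stmt17Aux.Fpad n)) := rfl
    rw [hG, ← Measure.map_prod_map _ _ measurable_id
      ((Stmt17Aux.measurable_Fpad n).prodMap (Stmt17Aux.measurable_Fpad n)), Measure.map_id]
  rw [h3, smul_smul, ENNReal.inv_mul_cancel hkk0 hkktop, one_smul]
end
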